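/- arXiv:1711.00192 — 5 statements merged into one kernel-verified Lean document; each statement's English description precedes it below -/
import Mathlib

section
/- Let A and B be positive invertible bounded linear operators on a Hilbert space and suppose (B^{s/2} A^{(s-t)/2} B^{t} A^{(s-t)/2} B^{s/2})^{1/(2s)} ≥ B for some real numbers t > s > 0 with 0 < s < 1/2 and t ≥ s + 2. Then B ≥ A. -/
open CFC
open scoped NNReal ENNReal

section LH
variable {A : Type*} [CStarAlgebra A] [PartialOrder A] [StarOrderedRing A]

lemma my_zns {a : A} (hau : IsUnit a) : (0 : ℝ≥0) ∉ spectrum ℝ≥0 a := by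
  rw [spectrum.zero_notMem_iff]; exact hau

/-- explicit unit for rpow -/
noncomputable def myUnit {a : A} (hau : IsUnit a) (ha : 0 ≤ a) (x : ℝ) : Aˣ where
  val := a ^ x
  inv := a ^ (-x)
  val_inv := by rw [← CFC.rpow_add hau, add_neg_cancel, CFC.rpow_zero a ha]
  inv_val := by rw [← CFC.rpow_add hau, neg_add_cancel, CFC.rpow_zero a ha]

@[simp] lemma myUnit_val {a : A} (hau : IsUnit a) (ha : 0 ≤ a) (x : ℝ) :
    (myUnit hau ha x : A) = a ^ x := rfl

@[simp] lemma myUnit_inv {a : A} (hau : IsUnit a) (ha : 0 ≤ a) (x : ℝ) :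
    (↑(myUnit hau ha x)⁻¹ : A) = a ^ (-x) := rfl

lemma my_isUnit_rpow {a : A} (hau : IsUnit a) (ha : 0 ≤ a) (x : ℝ) : IsUnit (a ^ x) :=
  ⟨myUnit hau ha x, rfl⟩

lemma my_rpow_sa {a : A} (ha : 0 ≤ a) (x : ℝ) : star (a ^ x) = a ^ x :=
  IsSelfAdjoint.of_nonneg CFC.rpow_nonneg

/-- collapsing lemmas -/
lemma my_mulP {a : A} (hau : IsUnit a) (x y : ℝ) (z : A) :
    a ^ x * (a ^ y * z) = a ^ (x + y) * z := by
  rw [← mul_assoc, ← CFC.rpow_add hau]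

lemma my_mul {a : A} (hau : IsUnit a) (x y : ℝ) :
    a ^ x * a ^ y = a ^ (x + y) := (CFC.rpow_add hau).symm

/-- real cfc representation of rpow -/
lemma my_rpow_eq_real_cfc {a : A} (ha : 0 ≤ a) (x : ℝ) :
    a ^ x = cfc (fun t : ℝ => t ^ x) a := by
  rw [CFC.rpow_def, cfc_nnreal_eq_real _ a ha]
  refine cfc_congr fun t ht => ?_
  have h0 : 0 ≤ t := spectrum_nonneg_of_nonneg ha ht
  simp [NNReal.coe_rpow, Real.coe_toNNReal t h0]

section nontrivial
variable [Nontrivial A]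

/-- uniform norm bound for rpow with exponent in [-1,1] -/
lemma my_norm_rpow_le {a : A} (ha : 0 ≤ a) (hau : IsUnit a) {x : ℝ}
    (hx1 : -1 ≤ x) (hx2 : x ≤ 1) :
    ‖a ^ x‖ ≤ max 1 ‖a‖ * max 1 ‖(↑hau.unit⁻¹ : A)‖ := by
  set c1 : ℝ := max 1 ‖a‖ with hc1
  set c2 : ℝ := max 1 ‖(↑hau.unit⁻¹ : A)‖ with hc2
  have h1c1 : (1:ℝ) ≤ c1 := le_max_left _ _
  have h1c2 : (1:ℝ) ≤ c2 := le_max_left _ _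
  rw [my_rpow_eq_real_cfc ha]
  apply norm_cfc_le (by positivity)
  intro t ht
  have h0t : 0 ≤ t := spectrum_nonneg_of_nonneg ha ht
  have htne : t ≠ 0 := by
    rintro rfl
    exact (spectrum.zero_notMem_iff ℝ).mpr hau ht
  have htpos : 0 < t := lt_of_le_of_ne h0t (Ne.symm htne)
  have hta : t ≤ ‖a‖ := by
    simpa [abs_of_nonneg h0t] using spectrum.norm_le_norm_of_mem ht
  have htinv : t⁻¹ ≤ ‖(↑hau.unit⁻¹ : A)‖ := by
    have hmem : (↑(Units.mk0 t htne)⁻¹ : ℝ) ∈ spectrum ℝ (↑hau.unit⁻¹ : A) := by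
      apply spectrum.inv_mem_iff.mp
      simpa using ht
    simpa [abs_inv, abs_of_pos htpos] using spectrum.norm_le_norm_of_mem hmem
  have key : t ^ x ≤ max c1 c2 := by
    rcases le_or_gt 0 x with hx0 | hx0
    · refine le_trans ?_ (le_max_left c1 c2)
      rcases le_or_gt t 1 with ht1 | ht1
      · exact le_trans (Real.rpow_le_one h0t ht1 hx0) h1c1
      · calc t ^ x ≤ t ^ (1:ℝ) := Real.rpow_le_rpow_of_exponent_le ht1.le hx2
          _ = t := Real.rpow_one t
          _ ≤ c1 := le_trans hta (le_max_right _ _)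
    · refine le_trans ?_ (le_max_right c1 c2)
      have hxx : t ^ x = (t⁻¹) ^ (-x) := by
        rw [Real.inv_rpow h0t, Real.rpow_neg h0t, inv_inv]
      rw [hxx]
      have h0ti : 0 ≤ t⁻¹ := inv_nonneg.mpr h0t
      rcases le_or_gt t⁻¹ 1 with ht1 | ht1
      · exact le_trans (Real.rpow_le_one h0ti ht1 (by linarith)) h1c2
      · calc (t⁻¹) ^ (-x) ≤ (t⁻¹) ^ (1:ℝ) :=
              Real.rpow_le_rpow_of_exponent_le ht1.le (by linarith)
          _ = t⁻¹ := Real.rpow_one _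
          _ ≤ c2 := le_trans htinv (le_max_right _ _)
  have : ‖t ^ x‖ = t ^ x := by
    rw [Real.norm_eq_abs, abs_of_nonneg (Real.rpow_nonneg h0t x)]
  rw [this]
  calc t ^ x ≤ max c1 c2 := key
    _ ≤ c1 * c2 := max_le (le_mul_of_one_le_right (by linarith) h1c2)
        (le_mul_of_one_le_left (by linarith) h1c1)

/-- similar positive elements: norm of the positive one bounded by norm of the other -/
lemma my_norm_le_of_similar {p z w : A} (hp : 0 ≤ p) (u v : Aˣ)
    (h1 : p = ↑u * w * ↑u⁻¹) (h2 : z = ↑v * w * ↑v⁻¹) : ‖p‖ ≤ ‖z‖ := by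
  have hσ : spectrum ℝ p = spectrum ℝ z := by
    rw [h1, h2, spectrum.units_conjugate, spectrum.units_conjugate]
  have hsa : IsSelfAdjoint p := IsSelfAdjoint.of_nonneg hp
  rw [← hsa.toReal_spectralRadius_eq_norm]
  have hrad : spectralRadius ℝ p = spectralRadius ℝ z := by
    unfold spectralRadius; rw [hσ]
  rw [hrad]
  calc (spectralRadius ℝ z).toReal ≤ ((‖z‖₊ : ℝ≥0∞)).toReal := by
        apply ENNReal.toReal_mono (by simp)
        exact spectrum.spectralRadius_le_nnnorm z
    _ = ‖z‖ := by simp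


/-- the midpoint engine: `M((p+q)/2)^2 ≤ M(p) * M(q)` where `M x = ‖a^x * b^(-x)‖` -/
lemma my_engine {a b : A} (ha : 0 ≤ a) (hb : 0 ≤ b) (hau : IsUnit a) (hbu : IsUnit b)
    (p q : ℝ) :
    ‖a ^ ((p+q)/2) * b ^ (-((p+q)/2))‖ ^ 2 ≤ ‖a ^ p * b ^ (-p)‖ * ‖a ^ q * b ^ (-q)‖ := by
  set u : ℝ := (p+q)/2 with hu
  set X : A := a ^ u * b ^ (-u) with hX
  set P : A := a ^ u * (b ^ (-(2*u)) * a ^ u) with hP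
  set W : A := b ^ (-(2*u)) * a ^ (2*u) with hW
  set Z : A := (b ^ (-p) * a ^ p) * (a ^ q * b ^ (-q)) with hZ
  have hXP : X * star X = P := by
    rw [hX, star_mul, my_rpow_sa ha, my_rpow_sa hb, hP]
    rw [mul_assoc, ← mul_assoc (b ^ (-u)), my_mul hbu]
    ring_nf
  have hPnn : 0 ≤ P := hXP ▸ mul_star_self_nonneg X
  have h1 : P = ↑(myUnit hau ha u) * W * ↑(myUnit hau ha u)⁻¹ := by
    rw [myUnit_val, myUnit_inv, hP, hW]
    rw [mul_assoc, mul_assoc, my_mul hau]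
    have e : 2*u + -u = u := by ring
    rw [e]
  have h2 : Z = ↑(myUnit hbu hb q) * W * ↑(myUnit hbu hb q)⁻¹ := by
    rw [myUnit_val, myUnit_inv, hZ, hW]
    rw [mul_assoc (b ^ (-p)), my_mulP hau, my_mulP hbu]
    have e1 : q + -(2*u) = -p := by rw [hu]; ring
    have e2 : (2:ℝ)*u = p + q := by rw [hu]; ring
    rw [e1, e2, mul_assoc]
  have hnorm : ‖X‖ ^ 2 = ‖P‖ := by
    rw [← hXP, sq, CStarRing.norm_self_mul_star]
  rw [hnorm]
  calc ‖P‖ ≤ ‖Z‖ := my_norm_le_of_similar hPnn _ _ h1 h2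
    _ ≤ ‖b ^ (-p) * a ^ p‖ * ‖a ^ q * b ^ (-q)‖ := norm_mul_le _ _
    _ = ‖a ^ p * b ^ (-p)‖ * ‖a ^ q * b ^ (-q)‖ := by
        congr 1
        rw [← norm_star (b ^ (-p) * a ^ p), star_mul, my_rpow_sa ha, my_rpow_sa hb]

/-- norm ≤ 1 criterion for `a^(2x) ≤ b^(2x)` -/
lemma my_crit {a b : A} (ha : 0 ≤ a) (hb : 0 ≤ b) (hau : IsUnit a) (hbu : IsUnit b)
    (x : ℝ) : ‖a ^ x * b ^ (-x)‖ ≤ 1 ↔ a ^ (2*x) ≤ b ^ (2*x) := by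
  set X : A := a ^ x * b ^ (-x) with hX
  have hstar : star X * X = b ^ (-x) * (a ^ (2*x) * b ^ (-x)) := by
    rw [hX, star_mul, my_rpow_sa ha, my_rpow_sa hb, mul_assoc, ← mul_assoc (a^x),
      my_mul hau]
    norm_num [two_mul]
  have hconjnn : 0 ≤ star X * X := star_mul_self_nonneg X
  have step1 : ‖X‖ ≤ 1 ↔ star X * X ≤ 1 := by
    rw [← CStarAlgebra.norm_le_one_iff_of_nonneg _ hconjnn]
    constructor
    · intro h
      calc ‖star X * X‖ ≤ ‖star X‖ * ‖X‖ := norm_mul_le _ _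
        _ ≤ 1 * 1 := by
            apply mul_le_mul _ h (norm_nonneg _) zero_le_one
            rwa [norm_star]
        _ = 1 := one_mul 1
    · intro h
      have := CStarRing.norm_star_mul_self (x := X)
      nlinarith [norm_nonneg X]
  rw [step1, hstar]
  constructor
  · intro h
    have hc := star_left_conjugate_le_conjugate h (b ^ x)
    rw [my_rpow_sa hb] at hc
    have lhs_eq : b ^ x * (b ^ (-x) * (a ^ (2*x) * b ^ (-x))) * b ^ x = a ^ (2*x) := by
      rw [my_mulP hbu]
      have e : x + -x = 0 := by ring
      rw [e, CFC.rpow_zero b hb, one_mul, mul_assoc, my_mul hbu]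
      have e2 : -x + x = 0 := by ring
      rw [e2, CFC.rpow_zero b hb, mul_one]
    have rhs_eq : b ^ x * 1 * b ^ x = b ^ (2*x) := by
      rw [mul_one, my_mul hbu, two_mul]
    rwa [lhs_eq, rhs_eq] at hc
  · intro h
    have hc := star_left_conjugate_le_conjugate h (b ^ (-x))
    rw [my_rpow_sa hb] at hc
    have rhs_eq : b ^ (-x) * b ^ (2*x) * b ^ (-x) = 1 := by
      rw [my_mul hbu, my_mul hbu]
      have e : -x + 2*x + -x = 0 := by ring
      rw [e]
      exact CFC.rpow_zero b hb
    rw [rhs_eq] at hc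
    calc b ^ (-x) * (a ^ (2*x) * b ^ (-x)) = b ^ (-x) * a ^ (2*x) * b ^ (-x) := by
          rw [mul_assoc]
      _ ≤ 1 := hc

/-- Loewner-Heinz for invertible elements -/
lemma my_LH {a b : A} (ha : 0 ≤ a) (hb : 0 ≤ b) (hau : IsUnit a) (hbu : IsUnit b)
    (hab : a ≤ b) {r : ℝ} (hr0 : 0 ≤ r) (hr1 : r ≤ 1) : a ^ r ≤ b ^ r := by
  set M : ℝ → ℝ := fun x => ‖a ^ x * b ^ (-x)‖ with hM
  have hM0 : M 0 = 1 := by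
    simp only [hM, neg_zero, CFC.rpow_zero a ha, CFC.rpow_zero b hb, one_mul, norm_one]
  have hMhalf : M (1/2) ≤ 1 := by
    rw [hM]
    dsimp only
    rw [my_crit ha hb hau hbu]
    have : (2:ℝ) * (1/2) = 1 := by norm_num
    rw [this, CFC.rpow_one a ha, CFC.rpow_one b hb]
    exact hab
  -- uniform bound
  obtain ⟨C, hC0, hCb⟩ : ∃ C, 1 ≤ C ∧ ∀ x ∈ Set.Icc (0:ℝ) (1/2), M x ≤ C := by
    refine ⟨(max 1 ‖a‖ * max 1 ‖(↑hau.unit⁻¹ : A)‖) *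
      (max 1 ‖b‖ * max 1 ‖(↑hbu.unit⁻¹ : A)‖), ?_, ?_⟩
    · have h1 : (1:ℝ) ≤ max 1 ‖a‖ := le_max_left _ _
      have h2 : (1:ℝ) ≤ max 1 ‖(↑hau.unit⁻¹ : A)‖ := le_max_left _ _
      have h3 : (1:ℝ) ≤ max 1 ‖b‖ := le_max_left _ _
      have h4 : (1:ℝ) ≤ max 1 ‖(↑hbu.unit⁻¹ : A)‖ := le_max_left _ _
      have h12 : (1:ℝ) ≤ max 1 ‖a‖ * max 1 ‖(↑hau.unit⁻¹ : A)‖ := by nlinarith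
      have h34 : (1:ℝ) ≤ max 1 ‖b‖ * max 1 ‖(↑hbu.unit⁻¹ : A)‖ := by nlinarith
      nlinarith
    · intro x hx
      obtain ⟨hx0, hx12⟩ := hx
      calc M x ≤ ‖a ^ x‖ * ‖b ^ (-x)‖ := norm_mul_le _ _
        _ ≤ _ := by
            apply mul_le_mul (my_norm_rpow_le ha hau (by linarith) (by linarith))
              (my_norm_rpow_le hb hbu (by linarith) (by linarith)) (norm_nonneg _)
            positivity
  set S : Set ℝ := M '' Set.Icc 0 (1/2) with hS
  have hSne : S.Nonempty := ⟨M 0, ⟨0, by norm_num, rfl⟩⟩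
  have hSbdd : BddAbove S := by
    refine ⟨C, ?_⟩
    rintro y ⟨x, hx, rfl⟩
    exact hCb x hx
  set T : ℝ := sSup S with hT
  have hTle : ∀ x ∈ Set.Icc (0:ℝ) (1/2), M x ≤ T :=
    fun x hx => le_csSup hSbdd ⟨x, hx, rfl⟩
  have hT1 : 1 ≤ T := hM0 ▸ hTle 0 (by norm_num)
  -- T² ≤ T via the engine
  have hstep : ∀ x ∈ Set.Icc (0:ℝ) (1/2), M x ^ 2 ≤ T := by
    intro x hx
    obtain ⟨hx0, hx12⟩ := hx
    rcases le_or_gt x (1/4) with hq | hq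
    · have hx' : x = (0 + 2*x)/2 := by ring
      calc M x ^ 2 = ‖a ^ ((0 + 2*x)/2) * b ^ (-((0 + 2*x)/2))‖ ^ 2 := by rw [hM]; rw [← hx']
        _ ≤ M 0 * M (2*x) := my_engine ha hb hau hbu 0 (2*x)
        _ = M (2*x) := by rw [hM0, one_mul]
        _ ≤ T := hTle _ ⟨by linarith, by linarith⟩
    · have hx' : x = (1/2 + (2*x - 1/2))/2 := by ring
      calc M x ^ 2 = ‖a ^ ((1/2 + (2*x - 1/2))/2) * b ^ (-((1/2 + (2*x - 1/2))/2))‖ ^ 2 := by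
            rw [hM]; rw [← hx']
        _ ≤ M (1/2) * M (2*x - 1/2) := my_engine ha hb hau hbu (1/2) (2*x - 1/2)
        _ ≤ 1 * T := by
            apply mul_le_mul hMhalf (hTle _ ⟨by linarith, by linarith⟩) (norm_nonneg _)
            exact zero_le_one
        _ = T := one_mul T
  have hTsq : T ^ 2 ≤ T := by
    have h1 : T ≤ Real.sqrt T := by
      apply csSup_le hSne
      rintro y ⟨x, hx, rfl⟩
      have := hstep x hx
      have hMnn : 0 ≤ M x := norm_nonneg _
      nlinarith [Real.sq_sqrt (le_trans zero_le_one hT1), Real.sqrt_nonneg T,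
        Real.sqrt_le_sqrt this]
    nlinarith [Real.sq_sqrt (le_trans zero_le_one hT1), Real.sqrt_nonneg T]
  have hTle1 : T ≤ 1 := by nlinarith
  -- conclude
  have hfinal : M (r/2) ≤ 1 := le_trans (hTle (r/2) ⟨by linarith, by linarith⟩) hTle1
  have := (my_crit ha hb hau hbu (r/2)).mp hfinal
  have h2r : 2 * (r/2) = r := by ring
  rwa [h2r] at this

end nontrivial
end LH

variable {H : Type*} [NormedAddCommGroup H] [InnerProductSpace ℂ H] [CompleteSpace H]

set_option maxHeartbeats 4000000 in
theorem stmt4 (A B : H →L[ℂ] H) (hA : 0 ≤ A) (hAu : IsUnit A) (hB : 0 ≤ B) (hBu : IsUnit B) (s t : ℝ)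
    (hs : 0 < s) (hst : s < t) (h1 : s < 1/2) (h3 : s + 2 ≤ t)
    (h : (B ^ (s/2) * A ^ ((s-t)/2) * B ^ t * A ^ ((s-t)/2) * B ^ (s/2)) ^ (1/(2*s)) ≥ B) :
    B ≥ A := by
  rcases subsingleton_or_nontrivial (H →L[ℂ] H) with hsub | hnt
  · exact le_of_eq (Subsingleton.elim _ _)
  set r : ℝ := (t - s)/2 with hrdef
  have hr1 : 1 ≤ r := by rw [hrdef]; linarith
  have hr0 : (0:ℝ) < r := by linarith
  have hst2 : (s - t)/2 = -r := by rw [hrdef]; ring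
  rw [hst2] at h
  set E : H →L[ℂ] H := B ^ (s/2) * A ^ (-r) * B ^ t * A ^ (-r) * B ^ (s/2) with hE
  have hEu : IsUnit E := ((((my_isUnit_rpow hBu hB _).mul (my_isUnit_rpow hAu hA _)).mul
    (my_isUnit_rpow hBu hB _)).mul (my_isUnit_rpow hAu hA _)).mul (my_isUnit_rpow hBu hB _)
  -- E is positive
  set Y : H →L[ℂ] H := B ^ (t/2) * A ^ (-r) * B ^ (s/2) with hY
  have hYstar : star Y = B ^ (s/2) * A ^ (-r) * B ^ (t/2) := by
    rw [hY, star_mul, star_mul, my_rpow_sa hA, my_rpow_sa hB, my_rpow_sa hB, mul_assoc]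
  have hEY : E = star Y * Y := by
    rw [hYstar, hY, hE]
    simp only [mul_assoc]
    rw [my_mulP hBu]
    have e : t/2 + t/2 = t := by ring
    rw [e]
  have hEnn : 0 ≤ E := hEY ▸ star_mul_self_nonneg Y
  set D : H →L[ℂ] H := E ^ (1/(2*s)) with hD
  have hDnn : 0 ≤ D := CFC.rpow_nonneg
  have hDu : IsUnit D := my_isUnit_rpow hEu hEnn _
  -- step 1 : B ^ (2s) ≤ E
  have step1 : B ^ (2*s) ≤ E := by
    have hle : B ≤ D := h
    have h1' := my_LH hB hDnn hBu hDu hle (r := 2*s) (by linarith) (by linarith)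
    have h2' : D ^ (2*s) = E := by
      rw [hD, CFC.rpow_rpow E (1/(2*s)) (2*s) (by positivity) (hEu.isStrictlyPositive hEnn)]
      have e : 1/(2*s) * (2*s) = 1 := by field_simp
      rw [e, CFC.rpow_one E hEnn]
    rwa [h2'] at h1'
  -- step 2 : B ^ s ≤ A^(-r) * (B^t * A^(-r))
  have step2 : B ^ s ≤ A ^ (-r) * (B ^ t * A ^ (-r)) := by
    have hc := star_left_conjugate_le_conjugate step1 (B ^ (-(s/2)))
    rw [my_rpow_sa hB] at hc
    have lhs_eq : B ^ (-(s/2)) * B ^ (2*s) * B ^ (-(s/2)) = B ^ s := by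
      rw [my_mul hBu, my_mul hBu]
      have e : -(s/2) + 2*s + -(s/2) = s := by ring
      rw [e]
    have rhs_eq : B ^ (-(s/2)) * E * B ^ (-(s/2)) = A ^ (-r) * (B ^ t * A ^ (-r)) := by
      rw [hE]
      simp only [mul_assoc]
      rw [my_mulP hBu, my_mul hBu]
      have e0 : -(s/2) + s/2 = 0 := by ring
      have e1 : s/2 + -(s/2) = 0 := by ring
      rw [e0, e1, CFC.rpow_zero B hB, one_mul, mul_one]
    rwa [lhs_eq, rhs_eq] at hc
  -- step 3 : A^r * B^s * A^r ≤ B^t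
  have step3 : A ^ r * B ^ s * A ^ r ≤ B ^ t := by
    have hc := star_left_conjugate_le_conjugate step2 (A ^ r)
    rw [my_rpow_sa hA] at hc
    have rhs_eq : A ^ r * (A ^ (-r) * (B ^ t * A ^ (-r))) * A ^ r = B ^ t := by
      rw [my_mulP hAu]
      have e0 : r + -r = 0 := by ring
      rw [e0, CFC.rpow_zero A hA, one_mul, mul_assoc, my_mul hAu]
      have e1 : -r + r = 0 := by ring
      rw [e1, CFC.rpow_zero A hA, mul_one]
    rwa [rhs_eq] at hc
  -- step 4 : the norm bound
  set Z : H →L[ℂ] H := B ^ (s/2) * (A ^ r * B ^ (-(t/2))) with hZ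
  have hZstar : star Z = B ^ (-(t/2)) * (A ^ r * B ^ (s/2)) := by
    rw [hZ, star_mul, star_mul, my_rpow_sa hA, my_rpow_sa hB, my_rpow_sa hB, mul_assoc]
  have hZZ : star Z * Z = B ^ (-(t/2)) * (A ^ r * B ^ s * A ^ r) * B ^ (-(t/2)) := by
    rw [hZstar, hZ]
    simp only [mul_assoc]
    rw [my_mulP hBu]
    have e : s/2 + s/2 = s := by ring
    rw [e]
  have hZZle : star Z * Z ≤ 1 := by
    have hc := star_left_conjugate_le_conjugate step3 (B ^ (-(t/2)))
    rw [my_rpow_sa hB] at hc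
    have rhs_eq : B ^ (-(t/2)) * B ^ t * B ^ (-(t/2)) = 1 := by
      rw [my_mul hBu, my_mul hBu]
      have e : -(t/2) + t + -(t/2) = 0 := by ring
      rw [e]
      exact CFC.rpow_zero B hB
    rw [rhs_eq] at hc
    rwa [hZZ]
  have hZnorm : ‖Z‖ ≤ 1 := by
    have h2 : ‖star Z * Z‖ ≤ 1 :=
      (CStarAlgebra.norm_le_one_iff_of_nonneg _ (star_mul_self_nonneg Z)).mpr hZZle
    have h3' := CStarRing.norm_star_mul_self (x := Z)
    nlinarith [norm_nonneg Z]
  -- step 5 : A^r ≤ B^r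
  have step5 : A ^ r ≤ B ^ r := by
    set Q : H →L[ℂ] H := B ^ (-(r/2)) * A ^ r * B ^ (-(r/2)) with hQ
    have hQnn : 0 ≤ Q := by
      have h0 := conjugate_nonneg_of_nonneg (CFC.rpow_nonneg (a := A) (y := r))
        (CFC.rpow_nonneg (a := B) (y := -(r/2)))
      first
      | (rw [my_rpow_sa hB] at h0; rwa [hQ])
      | rwa [hQ]
    set W : H →L[ℂ] H := A ^ r * B ^ (-r) with hW
    have hQsim : Q = ↑(myUnit hBu hB (-(r/2))) * W * ↑(myUnit hBu hB (-(r/2)))⁻¹ := by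
      rw [myUnit_val, myUnit_inv, hQ, hW, neg_neg]
      simp only [mul_assoc]
      rw [my_mul hBu]
      have e : -r + r/2 = -(r/2) := by ring
      rw [e]
    have hZsim : Z = ↑(myUnit hBu hB (s/2)) * W * ↑(myUnit hBu hB (s/2))⁻¹ := by
      rw [myUnit_val, myUnit_inv, hZ, hW]
      simp only [mul_assoc]
      rw [my_mul hBu]
      have e : -r + -(s/2) = -(t/2) := by rw [hrdef]; ring
      rw [e]
    have hQnorm : ‖Q‖ ≤ 1 :=
      le_trans (my_norm_le_of_similar hQnn _ _ hQsim hZsim) hZnorm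
    have hQ1 : Q ≤ 1 := (CStarAlgebra.norm_le_one_iff_of_nonneg _ hQnn).mp hQnorm
    have hc := star_left_conjugate_le_conjugate hQ1 (B ^ (r/2))
    rw [my_rpow_sa hB] at hc
    have lhs_eq : B ^ (r/2) * Q * B ^ (r/2) = A ^ r := by
      rw [hQ]
      simp only [mul_assoc]
      rw [my_mulP hBu, my_mul hBu]
      have e0 : r/2 + -(r/2) = 0 := by ring
      have e1 : -(r/2) + r/2 = 0 := by ring
      rw [e0, e1, CFC.rpow_zero B hB, one_mul, mul_one]
    have rhs_eq : B ^ (r/2) * 1 * B ^ (r/2) = B ^ r := by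
      rw [mul_one, my_mul hBu]
      have e : r/2 + r/2 = r := by ring
      rw [e]
    rwa [lhs_eq, rhs_eq] at hc
  -- step 6 : conclude via LH with exponent 1/r
  have eA : (A ^ r) ^ (1/r) = A := by
    rw [CFC.rpow_rpow A r (1/r) (ne_of_gt hr0) (hAu.isStrictlyPositive hA)]
    have e : r * (1/r) = 1 := by field_simp
    rw [e, CFC.rpow_one A hA]
  have eB : (B ^ r) ^ (1/r) = B := by
    rw [CFC.rpow_rpow B r (1/r) (ne_of_gt hr0) (hBu.isStrictlyPositive hB)]
    have e : r * (1/r) = 1 := by field_simp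
    rw [e, CFC.rpow_one B hB]
  have final := my_LH (CFC.rpow_nonneg (a := A) (y := r)) (CFC.rpow_nonneg (a := B) (y := r))
    (my_isUnit_rpow hAu hA r) (my_isUnit_rpow hBu hB r) step5
    (r := 1/r) (by positivity) (by rw [div_le_one hr0]; exact hr1)
  rwa [eA, eB] at final
end

section
/- (Furuta inequality) Let A and B be bounded linear operators on a Hilbert space with A ≥ B ≥ 0 and let r ≥ 0, p ≥ 0, q ≥ 1 satisfy (1+r)q ≥ p + r. Then (A^{r/2} A^{p} A^{r/2})^{1/q} ≥ (A^{r/2} B^{p} A^{r/2})^{1/q}. -/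
open CFC

variable {H : Type*} [NormedAddCommGroup H] [InnerProductSpace ℂ H] [CompleteSpace H]

section FurutaDevelopment

open Filter Polynomial
open scoped NNReal ENNReal Topology

variable {A : Type*} [CStarAlgebra A] [PartialOrder A] [StarOrderedRing A]

namespace FurutaProof


lemma star_rpow (a : A) (t : ℝ) : star (a ^ t) = a ^ t :=
  (IsSelfAdjoint.of_nonneg rpow_nonneg).star_eq

lemma isUnit_rpow {a : A} (hu : IsUnit a) (t : ℝ) (ha : 0 ≤ a := by cfc_tac) :
    IsUnit (a ^ t) :=
  ⟨⟨a ^ t, a ^ (-t),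
    CFC.rpow_mul_rpow_neg t (hu.isStrictlyPositive ha),
    CFC.rpow_neg_mul_rpow t (hu.isStrictlyPositive ha)⟩, rfl⟩

lemma rpow_mul_rpow {a : A} (hu : IsUnit a) {x y : ℝ} (ha : 0 ≤ a := by cfc_tac) :
    a ^ x * a ^ y = a ^ (x + y) :=
  (CFC.rpow_add hu).symm

lemma iSup_nnnorm_sdiff_zero (S : Set ℂ) :
    ⨆ k ∈ S, (‖k‖₊ : ℝ≥0∞) = ⨆ k ∈ S \ {0}, (‖k‖₊ : ℝ≥0∞) := by
  apply le_antisymm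
  · refine iSup₂_le fun k hk => ?_
    rcases eq_or_ne k 0 with rfl | h
    · simp
    · exact le_iSup₂ (f := fun k (_ : k ∈ S \ {0}) => (‖k‖₊ : ℝ≥0∞)) k ⟨hk, h⟩
  · exact iSup₂_le fun k hk =>
      le_iSup₂ (f := fun k (_ : k ∈ S) => (‖k‖₊ : ℝ≥0∞)) k hk.1

lemma spectralRadius_mul_comm (a b : A) :
    spectralRadius ℂ (a * b) = spectralRadius ℂ (b * a) := by
  rw [spectralRadius, spectralRadius, iSup_nnnorm_sdiff_zero (spectrum ℂ (a * b)),
    iSup_nnnorm_sdiff_zero (spectrum ℂ (b * a)), spectrum.nonzero_mul_comm]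

/-- If `b ^ t ≤ a ^ t` with `a, b` invertible nonneg elements, then
`a ^ (-(t/2)) * b ^ (t/2)` is a contraction. -/
lemma norm_contraction_le_one {a b : A} (ha : 0 ≤ a) (hb : 0 ≤ b) (hua : IsUnit a)
    (hub : IsUnit b) {t : ℝ} (h : b ^ t ≤ a ^ t) :
    ‖a ^ (-(t/2)) * b ^ (t/2)‖ ≤ 1 := by
  set y := a ^ (-(t/2)) * b ^ (t/2) with hy
  have hyy : y * star y = a ^ (-(t/2)) * b ^ t * a ^ (-(t/2)) := by
    rw [hy, star_mul, star_rpow, star_rpow, mul_assoc, ← mul_assoc (b ^ (t/2)),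
      rpow_mul_rpow hub, add_halves, ← mul_assoc]
  have hconj : a ^ (-(t/2)) * b ^ t * a ^ (-(t/2)) ≤ 1 := by
    calc a ^ (-(t/2)) * b ^ t * a ^ (-(t/2))
        = a ^ (-(t/2)) * b ^ t * star (a ^ (-(t/2))) := by rw [star_rpow]
      _ ≤ a ^ (-(t/2)) * a ^ t * star (a ^ (-(t/2))) := star_right_conjugate_le_conjugate h _
      _ = 1 := by
          rw [star_rpow, rpow_mul_rpow hua, rpow_mul_rpow hua,
            show -(t/2) + t + -(t/2) = (0:ℝ) by ring, rpow_zero a ha]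
  have hle1 : y * star y ≤ 1 := by rw [hyy]; exact hconj
  have h1 : ‖y * star y‖ ≤ 1 :=
    (CStarAlgebra.norm_le_one_iff_of_nonneg _ (mul_star_self_nonneg y)).mpr hle1
  have h2 : ‖y‖ * ‖y‖ ≤ 1 := by rwa [← CStarRing.norm_self_mul_star]
  nlinarith [norm_nonneg y]

/-- The halving step for the Löwner–Heinz theorem. -/
lemma half_step {a b : A} (ha : 0 ≤ a) (hb : 0 ≤ b) (hua : IsUnit a) (hub : IsUnit b)
    {s t : ℝ} (hs : b ^ s ≤ a ^ s) (ht : b ^ t ≤ a ^ t) :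
    b ^ ((s + t)/2) ≤ a ^ ((s + t)/2) := by
  rcases subsingleton_or_nontrivial A with hA | hA
  · exact le_of_eq (Subsingleton.elim _ _)
  set c : ℝ := (s + t)/2 with hc
  set X := a ^ (-(c/2)) * b ^ c * a ^ (-(c/2)) with hX
  have hXnn : 0 ≤ X := by
    have := star_left_conjugate_nonneg (a := b ^ c) rpow_nonneg (a ^ (-(c/2)))
    rwa [star_rpow] at this
  have hrad : (‖X‖₊ : ℝ≥0∞) = spectralRadius ℂ (b ^ c * a ^ (-c)) := by
    rw [← (IsSelfAdjoint.of_nonneg hXnn).spectralRadius_eq_nnnorm, hX, mul_assoc,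
      spectralRadius_mul_comm, mul_assoc, rpow_mul_rpow hua,
      show -(c/2) + -(c/2) = -c by ring]
  have hsplit : b ^ c * a ^ (-c) =
      b ^ (t/2) * ((b ^ (s/2) * a ^ (-(s/2))) * a ^ (-(t/2))) := by
    rw [show c = t/2 + s/2 by rw [hc]; ring, ← rpow_mul_rpow hub,
      show -(t/2 + s/2) = -(s/2) + -(t/2) by ring, ← rpow_mul_rpow hua]
    simp only [mul_assoc]
  have hbound : (‖X‖₊ : ℝ≥0∞) ≤ 1 := by
    rw [hrad, hsplit, spectralRadius_mul_comm,
      show (b ^ (s/2) * a ^ (-(s/2))) * a ^ (-(t/2)) * b ^ (t/2)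
        = (b ^ (s/2) * a ^ (-(s/2))) * (a ^ (-(t/2)) * b ^ (t/2)) by rw [mul_assoc]]
    refine (spectrum.spectralRadius_le_nnnorm _).trans ?_
    have hn1 : ‖b ^ (s/2) * a ^ (-(s/2))‖₊ ≤ 1 := by
      have : ‖b ^ (s/2) * a ^ (-(s/2))‖ ≤ 1 := by
        rw [show b ^ (s/2) * a ^ (-(s/2)) = star (a ^ (-(s/2)) * b ^ (s/2)) by
          rw [star_mul, star_rpow, star_rpow], norm_star]
        exact norm_contraction_le_one ha hb hua hub hs
      exact this
    have hn2 : ‖a ^ (-(t/2)) * b ^ (t/2)‖₊ ≤ 1 := norm_contraction_le_one ha hb hua hub ht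
    calc (‖(b ^ (s/2) * a ^ (-(s/2))) * (a ^ (-(t/2)) * b ^ (t/2))‖₊ : ℝ≥0∞)
        ≤ (‖b ^ (s/2) * a ^ (-(s/2))‖₊ * ‖a ^ (-(t/2)) * b ^ (t/2)‖₊ : ℝ≥0) := by
          exact_mod_cast nnnorm_mul_le _ _
      _ ≤ 1 := by exact_mod_cast mul_le_one' hn1 hn2
  have hXle1 : X ≤ 1 := by
    refine (CStarAlgebra.norm_le_one_iff_of_nonneg X hXnn).mp ?_
    have := ENNReal.coe_le_coe.mp (by simpa using hbound)
    exact this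
  calc b ^ c = a ^ (c/2) * X * a ^ (c/2) := by
        rw [hX, ← mul_assoc, ← mul_assoc, rpow_mul_rpow hua,
          show c/2 + -(c/2) = (0:ℝ) by ring, rpow_zero a ha, one_mul, mul_assoc,
          rpow_mul_rpow hua, show -(c/2) + c/2 = (0:ℝ) by ring, rpow_zero a ha, mul_one]
    _ = a ^ (c/2) * X * star (a ^ (c/2)) := by rw [star_rpow]
    _ ≤ a ^ (c/2) * 1 * star (a ^ (c/2)) := star_right_conjugate_le_conjugate hXle1 _
    _ = a ^ c := by rw [star_rpow, mul_one, rpow_mul_rpow hua, add_halves]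




/-- Uniform convergence of a continuous two-parameter family along a convergent sequence. -/
lemma tendstoUniformlyOn_param {F : ℝ → ℝ → ℝ} (hF : Continuous (Function.uncurry F))
    {u : ℕ → ℝ} {t : ℝ} (hu : Tendsto u atTop (𝓝 t)) {K : Set ℝ} (hK : IsCompact K) :
    TendstoUniformlyOn (fun n x => F (u n) x) (F t) atTop K := by
  haveI : CompactSpace K := isCompact_iff_compactSpace.mp hK
  rw [tendstoUniformlyOn_iff_tendstoUniformly_comp_coe]
  let G : C(ℝ × K, ℝ) := ⟨fun p => F p.1 p.2,
    hF.comp (continuous_fst.prodMk (continuous_subtype_val.comp continuous_snd))⟩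
  let g : C(ℝ, C(K, ℝ)) := ContinuousMap.curry G
  have hg : Tendsto (fun n => g (u n)) atTop (𝓝 (g t)) := (g.continuous.tendsto t).comp hu
  exact ContinuousMap.tendsto_iff_tendstoUniformly.mp hg

/-- Spectrum inclusion for nonneg elements. -/
lemma spectrum_subset_Icc [Nontrivial A] {a : A} (ha : 0 ≤ a) :
    spectrum ℝ a ⊆ Set.Icc 0 ‖a‖ := fun x hx =>
  ⟨spectrum_nonneg_of_nonneg ha hx, by
    simpa [Real.norm_eq_abs, abs_of_nonneg (spectrum_nonneg_of_nonneg ha hx)]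
      using spectrum.norm_le_norm_of_mem hx⟩

/-- Convergence of `cfc` along a uniformly convergent sequence of functions. -/
lemma tendsto_cfc_of_tendstoUniformlyOn {a : A} (ha : 0 ≤ a) {f : ℕ → ℝ → ℝ} {g : ℝ → ℝ}
    (hf : ∀ n, Continuous (f n)) (hg : Continuous g)
    (h : TendstoUniformlyOn f g atTop (Set.Icc 0 ‖a‖)) :
    Tendsto (fun n => cfc (f n) a) atTop (𝓝 (cfc g a)) := by
  rcases subsingleton_or_nontrivial A with hA | hA
  · exact tendsto_const_nhds.congr fun n => Subsingleton.elim _ _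
  rw [Metric.tendsto_nhds]
  intro ε hε
  rw [Metric.tendstoUniformlyOn_iff] at h
  filter_upwards [h (ε/2) (by positivity)] with n hn
  have key : cfc (f n) a - cfc g a = cfc (fun x => f n x - g x) a :=
    (cfc_sub _ _ a (hf n).continuousOn hg.continuousOn).symm
  have hb : ‖cfc (f n) a - cfc g a‖ ≤ ε/2 := by
    rw [key]
    refine norm_cfc_le (by positivity) fun x hx => ?_
    have := hn x (spectrum_subset_Icc ha hx)
    rw [dist_eq_norm] at this
    rw [show f n x - g x = -(g x - f n x) by ring, norm_neg]
    exact this.le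
  rw [dist_eq_norm]
  linarith

lemma rpow_eq_cfc_real {a : A} (t : ℝ) (ha : 0 ≤ a) :
    a ^ t = cfc (fun x : ℝ => ((x.toNNReal ^ t : ℝ≥0) : ℝ)) a := by
  rw [rpow_def, cfc_nnreal_eq_real _ a]

lemma continuous_aux (t : ℝ) (ht : 0 ≤ t) :
    Continuous (fun x : ℝ => ((x.toNNReal ^ t : ℝ≥0) : ℝ)) :=
  NNReal.continuous_coe.comp ((NNReal.continuous_rpow_const ht).comp continuous_real_toNNReal)

/-- Order-limit lemma. -/
lemma le_of_tendsto_of_le' {x y : A} {f g : ℕ → A} (hf : Tendsto f atTop (𝓝 x))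
    (hg : Tendsto g atTop (𝓝 y)) (h : ∀ n, f n ≤ g n) : x ≤ y := by
  have hmem : ∀ n, g n - f n ∈ {z : A | 0 ≤ z} := fun n => sub_nonneg.mpr (h n)
  have := CStarAlgebra.isClosed_nonneg.mem_of_tendsto (hg.sub hf)
    (Filter.Eventually.of_forall hmem)
  exact sub_nonneg.mp this

/-- Continuity of `a ^ ·` in the exponent, along positive sequences converging
to a positive limit. -/
lemma tendsto_rpow_exponent {a : A} (ha : 0 ≤ a) {u : ℕ → ℝ} {t : ℝ}
    (hlim : Tendsto u atTop (𝓝 t)) (ht : 0 < t) :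
    Tendsto (fun n => a ^ (u n)) atTop (𝓝 (a ^ t)) := by
  set F : ℝ → ℝ → ℝ := fun s x => ((x.toNNReal ^ max s (t/2) : ℝ≥0) : ℝ) with hF
  have hFc : Continuous (Function.uncurry F) := by
    rw [Function.uncurry_def, continuous_iff_continuousAt]
    intro p
    have h1 : ContinuousAt (fun p : ℝ × ℝ => (p.2.toNNReal, max p.1 (t/2))) p :=
      ((continuous_real_toNNReal.comp continuous_snd).prodMk
        (continuous_fst.max continuous_const)).continuousAt
    have h2 : ContinuousAt (fun q : ℝ≥0 × ℝ => q.1 ^ q.2) (p.2.toNNReal, max p.1 (t/2)) :=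
      NNReal.continuousAt_rpow (Or.inr (lt_max_of_lt_right (by linarith)))
    have h3 : ContinuousAt (fun p : ℝ × ℝ => (p.2.toNNReal ^ max p.1 (t/2) : ℝ≥0)) p :=
      ContinuousAt.comp (f := fun p : ℝ × ℝ => (p.2.toNNReal, max p.1 (t/2))) h2 h1
    exact NNReal.continuous_coe.continuousAt.comp h3
  have hunif := tendstoUniformlyOn_param hFc hlim (isCompact_Icc (a := (0:ℝ)) (b := ‖a‖))
  have hfn : ∀ n, Continuous fun x => F (u n) x := fun n =>
    hFc.comp (Continuous.prodMk_right (u n))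
  have hftc : Continuous (F t) := hFc.comp (Continuous.prodMk_right t)
  have hcfc := tendsto_cfc_of_tendstoUniformlyOn ha hfn hftc hunif
  have hFt : cfc (F t) a = a ^ t := by
    rw [rpow_eq_cfc_real t ha]
    exact cfc_congr fun x _ => by rw [hF]; simp [max_eq_left (by linarith : t/2 ≤ t)]
  have hev : ∀ᶠ n in atTop, cfc (F (u n)) a = a ^ (u n) := by
    filter_upwards [hlim.eventually (lt_mem_nhds (show t/2 < t by linarith))] with n hn
    rw [rpow_eq_cfc_real (u n) ha]
    exact cfc_congr fun x _ => by rw [hF]; simp [max_eq_left hn.le]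
  rw [hFt] at hcfc
  exact hcfc.congr' hev




lemma LH_dyadic (n : ℕ) : ∀ k : ℕ, k ≤ 2^n → ∀ a b : A, 0 ≤ b → b ≤ a → IsUnit a → IsUnit b →
    b ^ ((k : ℝ)/2^n) ≤ a ^ ((k : ℝ)/2^n) := by
  induction n with
  | zero =>
    intro k hk a b hb hba hua hub
    interval_cases k
    · simp only [Nat.cast_zero, pow_zero, zero_div]
      rw [rpow_zero a (hb.trans hba), rpow_zero b hb]
    · simp only [Nat.cast_one, pow_zero, div_one]
      rw [rpow_one a (hb.trans hba), rpow_one b hb]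
      exact hba
  | succ n ih =>
    intro k hk a b hb hba hua hub
    have ha := hb.trans hba
    set i := min k (2^n) with hi
    set j := k - i with hj
    have hij : i + j = k := by omega
    have hi2 : i ≤ 2^n := min_le_right _ _
    have hj2 : j ≤ 2^n := by
      have : k ≤ 2^n * 2 := by simpa [pow_succ] using hk
      omega
    have h2n : (0:ℝ) < 2^n := by positivity
    have hexp : (k : ℝ)/2^(n+1) = ((i:ℝ)/2^n + (j:ℝ)/2^n)/2 := by
      rw [← hij, pow_succ]
      push_cast
      rw [← add_div, div_div]
    rw [hexp]
    exact half_step ha hb hua hub (ih i hi2 a b hb hba hua hub) (ih j hj2 a b hb hba hua hub)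

lemma LH_units {a b : A} (hb : 0 ≤ b) (hba : b ≤ a) (hua : IsUnit a) (hub : IsUnit b)
    {t : ℝ} (ht0 : 0 ≤ t) (ht1 : t ≤ 1) : b ^ t ≤ a ^ t := by
  have ha := hb.trans hba
  rcases eq_or_lt_of_le ht0 with rfl | ht0'
  · rw [rpow_zero a ha, rpow_zero b hb]
  set u : ℕ → ℝ := fun n => (⌊t * 2^n⌋₊ : ℝ)/2^n with hu
  have h2 : ∀ n : ℕ, (0:ℝ) < 2^n := fun n => by positivity
  have hun : ∀ n, b ^ u n ≤ a ^ u n := by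
    intro n
    refine LH_dyadic n ⌊t * 2^n⌋₊ ?_ a b hb hba hua hub
    calc ⌊t * 2^n⌋₊ ≤ ⌊((2^n : ℕ) : ℝ)⌋₊ := by
          refine Nat.floor_le_floor ?_
          push_cast
          nlinarith [h2 n]
      _ = 2^n := Nat.floor_natCast _
  have hlim : Tendsto u atTop (𝓝 t) := by
    have hle : ∀ n, u n ≤ t := fun n => by
      rw [hu]
      dsimp only
      rw [div_le_iff₀ (h2 n)]
      exact Nat.floor_le (by positivity)
    have hge : ∀ n, t - (1/2)^n ≤ u n := fun n => by
      have hfl : t * 2^n < ⌊t * 2^n⌋₊ + 1 := Nat.lt_floor_add_one _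
      have key : t ≤ (⌊t * 2^n⌋₊:ℝ)/2^n + 1/2^n := by
        rw [← add_div, le_div_iff₀ (h2 n)]
        linarith
      rw [hu]
      dsimp only
      rw [one_div_pow]
      linarith
    have hlower : Tendsto (fun n : ℕ => t - (1/2:ℝ)^n) atTop (𝓝 t) := by
      have := tendsto_pow_atTop_nhds_zero_of_lt_one (show (0:ℝ) ≤ 1/2 by norm_num)
        (show (1/2:ℝ) < 1 by norm_num)
      simpa using tendsto_const_nhds.sub this
    exact tendsto_of_tendsto_of_tendsto_of_le_of_le hlower tendsto_const_nhds hge hle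
  exact le_of_tendsto_of_le' (tendsto_rpow_exponent hb hlim ht0')
    (tendsto_rpow_exponent ha hlim ht0') hun

lemma algebraMap_nnreal_nonneg {a : A} (ha : 0 ≤ a) (ε : ℝ≥0) :
    (0:A) ≤ algebraMap ℝ≥0 A ε := by
  have h := cfc_predicate (R := ℝ≥0) (fun _ : ℝ≥0 => ε) a
  rwa [cfc_const ε a ha] at h

lemma add_algebraMap_rpow_eq {a : A} (ha : 0 ≤ a) (ε : ℝ≥0) (t : ℝ) (ht : 0 ≤ t) :
    (a + algebraMap ℝ≥0 A ε) ^ t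
      = cfc (fun x : ℝ => (((x.toNNReal + ε) ^ t : ℝ≥0) : ℝ)) a := by
  have h1 : cfc (fun x : ℝ≥0 => x + ε) a = a + algebraMap ℝ≥0 A ε := by
    rw [cfc_add_const ε (fun x : ℝ≥0 => x) a (by fun_prop) ha, cfc_id' ℝ≥0 a]
  rw [rpow_def, ← h1,
    ← cfc_comp' (fun x : ℝ≥0 => x ^ t) (fun x : ℝ≥0 => x + ε) a
      ((NNReal.continuous_rpow_const ht).continuousOn) (by fun_prop),
    cfc_nnreal_eq_real _ a]

lemma tendsto_translate {a : A} (ha : 0 ≤ a) {t : ℝ} (ht : 0 ≤ t) {e : ℕ → ℝ≥0}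
    (he : Tendsto (fun n => ((e n : ℝ≥0) : ℝ)) atTop (𝓝 0)) :
    Tendsto (fun n => (a + algebraMap ℝ≥0 A (e n)) ^ t) atTop (𝓝 (a ^ t)) := by
  set F : ℝ → ℝ → ℝ := fun s x => (((x.toNNReal + s.toNNReal) ^ t : ℝ≥0) : ℝ) with hF
  have hFc : Continuous (Function.uncurry F) := by
    rw [Function.uncurry_def]
    have h1 : Continuous fun p : ℝ × ℝ => (p.2.toNNReal + p.1.toNNReal : ℝ≥0) :=
      (continuous_real_toNNReal.comp continuous_snd).add
        (continuous_real_toNNReal.comp continuous_fst)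
    have h2 : Continuous fun p : ℝ × ℝ => ((p.2.toNNReal + p.1.toNNReal : ℝ≥0) ^ t : ℝ≥0) :=
      (NNReal.continuous_rpow_const ht).comp h1
    exact NNReal.continuous_coe.comp h2
  have hfn : ∀ n, Continuous fun x => F ((e n : ℝ)) x := fun n =>
    hFc.comp (Continuous.prodMk_right _)
  have hftc : Continuous (F 0) := hFc.comp (Continuous.prodMk_right 0)
  have hunif := tendstoUniformlyOn_param hFc he (isCompact_Icc (a := (0:ℝ)) (b := ‖a‖))
  have hcfc := tendsto_cfc_of_tendstoUniformlyOn ha hfn hftc hunif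
  have hF0 : cfc (F 0) a = a ^ t := by
    rw [rpow_eq_cfc_real t ha]
    exact cfc_congr fun x _ => by rw [hF]; simp
  have hFn : ∀ n, cfc (F ((e n : ℝ))) a = (a + algebraMap ℝ≥0 A (e n)) ^ t := by
    intro n
    rw [add_algebraMap_rpow_eq ha (e n) t ht]
    exact cfc_congr fun x _ => by rw [hF]; simp
  rw [hF0] at hcfc
  exact hcfc.congr (fun n => hFn n)

/-- Löwner–Heinz. -/
lemma LH {a b : A} (hb : 0 ≤ b) (hba : b ≤ a)
    {t : ℝ} (ht0 : 0 ≤ t) (ht1 : t ≤ 1) : b ^ t ≤ a ^ t := by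
  have ha := hb.trans hba
  set e : ℕ → ℝ≥0 := fun n => (n+1 : ℝ≥0)⁻¹ with he
  have he0 : Tendsto (fun n => ((e n : ℝ≥0) : ℝ)) atTop (𝓝 0) := by
    rw [he]
    have : Tendsto (fun n : ℕ => ((n:ℝ)+1)⁻¹) atTop (𝓝 0) := tendsto_one_div_add_atTop_nhds_zero_nat.congr fun n => by
      rw [one_div]
    exact this.congr fun n => by push_cast; ring_nf
  have hnn : ∀ n, (0:A) ≤ algebraMap ℝ≥0 A (e n) := fun n => algebraMap_nnreal_nonneg ha _
  have hu : ∀ n, IsUnit (algebraMap ℝ≥0 A (e n)) := fun n =>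
    (isUnit_iff_ne_zero.mpr (by simp [he])).map (algebraMap ℝ≥0 A)
  have hua : ∀ n, IsUnit (a + algebraMap ℝ≥0 A (e n)) := fun n =>
    CStarAlgebra.isUnit_of_le _ (le_add_of_nonneg_left ha) ((hu n).isStrictlyPositive (hnn n))
  have hub : ∀ n, IsUnit (b + algebraMap ℝ≥0 A (e n)) := fun n =>
    CStarAlgebra.isUnit_of_le _ (le_add_of_nonneg_left hb) ((hu n).isStrictlyPositive (hnn n))
  have hord : ∀ n, (b + algebraMap ℝ≥0 A (e n)) ^ t ≤ (a + algebraMap ℝ≥0 A (e n)) ^ t := by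
    intro n
    exact LH_units (add_nonneg hb (hnn n)) (add_le_add_left hba _) (hua n) (hub n) ht0 ht1
  exact le_of_tendsto_of_le' (tendsto_translate hb ht0 he0) (tendsto_translate ha ht0 he0) hord




lemma pow_swap (x : A) (n : ℕ) : x * (star x * x) ^ n = (x * star x) ^ n * x := by
  induction n with
  | zero => simp
  | succ n ihn =>
    rw [pow_succ, ← mul_assoc, ihn, pow_succ]
    simp only [mul_assoc]

lemma aeval_swap (x : A) (p : ℝ[X]) :
    x * (aeval (star x * x) p) = (aeval (x * star x) p) * x := by
  induction p using Polynomial.induction_on' with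
  | add p q hp hq => simp only [map_add, mul_add, add_mul, hp, hq]
  | monomial n c =>
    simp only [aeval_monomial]
    rw [← mul_assoc, ← Algebra.commutes, mul_assoc, pow_swap, ← mul_assoc, mul_assoc]

lemma cfc_real_swap {x : A} {f : ℝ → ℝ} (hf : Continuous f) :
    x * cfc f (star x * x) = cfc f (x * star x) * x := by
  rcases subsingleton_or_nontrivial A with hA | hA
  · exact Subsingleton.elim _ _
  set u := star x * x with hu
  set v := x * star x with hv
  have hunn : 0 ≤ u := star_mul_self_nonneg x
  have hvnn : 0 ≤ v := mul_star_self_nonneg x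
  set M : ℝ := max ‖u‖ ‖v‖ with hM
  have hM0 : 0 ≤ M := le_max_of_le_left (norm_nonneg _)
  have hsu : spectrum ℝ u ⊆ Set.Icc 0 M :=
    (spectrum_subset_Icc hunn).trans (Set.Icc_subset_Icc le_rfl (le_max_left _ _))
  have hsv : spectrum ℝ v ⊆ Set.Icc 0 M :=
    (spectrum_subset_Icc hvnn).trans (Set.Icc_subset_Icc le_rfl (le_max_right _ _))
  rw [← sub_eq_zero, ← norm_le_zero_iff]
  refine le_of_forall_pos_le_add ?_
  intro ε hε
  rw [zero_add]
  obtain ⟨p, hp⟩ := exists_polynomial_near_continuousMap 0 M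
    ((⟨f, hf⟩ : C(ℝ, ℝ)).restrict (Set.Icc 0 M)) (ε / (2 * ‖x‖ + 1))
    (by positivity)
  have hclose : ∀ y ∈ Set.Icc (0:ℝ) M, ‖f y - p.eval y‖ ≤ ε / (2 * ‖x‖ + 1) := by
    intro y hy
    have := (p.toContinuousMapOn (Set.Icc 0 M) - (⟨f, hf⟩ : C(ℝ, ℝ)).restrict (Set.Icc 0 M)).norm_coe_le_norm ⟨y, hy⟩
    simp only [ContinuousMap.sub_apply, Polynomial.toContinuousMapOn_apply,
      Polynomial.toContinuousMap_apply, ContinuousMap.restrict_apply,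
      ContinuousMap.coe_mk] at this
    rw [← norm_neg]
    simpa [neg_sub] using this.trans hp.le
  have hbound : ∀ (a : A), 0 ≤ a → IsSelfAdjoint a → spectrum ℝ a ⊆ Set.Icc 0 M →
      ‖cfc f a - aeval a p‖ ≤ ε / (2 * ‖x‖ + 1) := by
    intro a ha hsa hs
    rw [← cfc_polynomial p a hsa, ← cfc_sub f p.eval a hf.continuousOn
      p.continuous_aeval.continuousOn]
    exact norm_cfc_le (by positivity) fun y hy => hclose y (hs hy)
  have hpoly : x * aeval u p = aeval v p * x := by rw [hu, hv]; exact aeval_swap x p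
  calc ‖x * cfc f u - cfc f v * x‖
      = ‖x * (cfc f u - aeval u p) + (aeval v p - cfc f v) * x‖ := by
        congr 1
        rw [mul_sub, sub_mul, hpoly]
        abel
    _ ≤ ‖x * (cfc f u - aeval u p)‖ + ‖(aeval v p - cfc f v) * x‖ := norm_add_le _ _
    _ ≤ ‖x‖ * ‖cfc f u - aeval u p‖ + ‖aeval v p - cfc f v‖ * ‖x‖ :=
        add_le_add (norm_mul_le _ _) (norm_mul_le _ _)
    _ ≤ ‖x‖ * (ε / (2 * ‖x‖ + 1)) + (ε / (2 * ‖x‖ + 1)) * ‖x‖ := by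
        have h1 := hbound u hunn (IsSelfAdjoint.of_nonneg hunn) hsu
        have h2 := hbound v hvnn (IsSelfAdjoint.of_nonneg hvnn) hsv
        rw [← norm_neg (aeval v p - cfc f v), neg_sub]
        gcongr
    _ ≤ ε := by
        have h3 : (0:ℝ) < 2 * ‖x‖ + 1 := by positivity
        have hc : ε / (2 * ‖x‖ + 1) * (2 * ‖x‖ + 1) = ε := div_mul_cancel₀ _ h3.ne'
        have hc0 : 0 ≤ ε / (2 * ‖x‖ + 1) := by positivity
        nlinarith [norm_nonneg x]

lemma rpow_swap (x : A) {t : ℝ} (ht : 0 ≤ t) :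
    x * (star x * x) ^ t = (x * star x) ^ t * x := by
  rw [rpow_eq_cfc_real t (star_mul_self_nonneg x), rpow_eq_cfc_real t (mul_star_self_nonneg x)]
  exact cfc_real_swap (continuous_aux t ht)

lemma rpow_swap_unit {x : A} (hx : IsUnit x) (s : ℝ) :
    x * (star x * x) ^ s = (x * star x) ^ s * x := by
  rcases le_or_gt 0 s with hs | hs
  · exact rpow_swap x hs
  · have hu : IsUnit (star x * x) := hx.star.mul hx
    have hv : IsUnit (x * star x) := hx.mul hx.star
    have hunn : 0 ≤ star x * x := star_mul_self_nonneg x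
    have hvnn : 0 ≤ x * star x := mul_star_self_nonneg x
    have h := rpow_swap x (show 0 ≤ -s by linarith)
    have h2 := congrArg (fun z => (x * star x) ^ s * z * (star x * x) ^ s) h
    calc x * (star x * x) ^ s
        = (x * star x) ^ s * ((x * star x) ^ (-s) * x) * (star x * x) ^ s := by
          rw [← mul_assoc, rpow_mul_rpow hv, add_neg_cancel, rpow_zero _ hvnn, one_mul]
      _ = (x * star x) ^ s * (x * (star x * x) ^ (-s)) * (star x * x) ^ s := by rw [← h]
      _ = (x * star x) ^ s * x := by
          rw [mul_assoc ((x * star x) ^ s), mul_assoc x, rpow_mul_rpow hu,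
            neg_add_cancel, rpow_zero _ hunn, mul_one]

lemma LH_neg_units {a b : A} (hb : 0 ≤ b) (hba : b ≤ a) (hua : IsUnit a) (hub : IsUnit b)
    {t : ℝ} (ht0 : 0 ≤ t) (ht1 : t ≤ 1) : a ^ (-t) ≤ b ^ (-t) := by
  have ha := hb.trans hba
  have h := LH_units hb hba hua hub ht0 ht1
  set ub : Aˣ := (isUnit_rpow hub t hb).unit with hubdef
  set ua : Aˣ := (isUnit_rpow hua t ha).unit with huadef
  have hub' : (ub : A) = b ^ t := IsUnit.unit_spec _
  have hua' : (ua : A) = a ^ t := IsUnit.unit_spec _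
  have hinv := CStarAlgebra.inv_le_inv (a := ub) (b := ua)
    (by rw [hub']; exact rpow_nonneg) (by rw [hub', hua']; exact h)
  have hainv : (↑ua⁻¹ : A) = a ^ (-t) := by
    refine Units.inv_eq_of_mul_eq_one_right ?_
    rw [hua', rpow_mul_rpow hua, add_neg_cancel, rpow_zero a ha]
  have hbinv : (↑ub⁻¹ : A) = b ^ (-t) := by
    refine Units.inv_eq_of_mul_eq_one_right ?_
    rw [hub', rpow_mul_rpow hub, add_neg_cancel, rpow_zero b hb]
  rwa [hainv, hbinv] at hinv




lemma rpow_rpow' {a : A} (hu : IsUnit a) (x y : ℝ) (ha : 0 ≤ a) :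
    (a ^ x) ^ y = a ^ (x * y) := by
  rcases eq_or_ne x 0 with rfl | hx
  · rw [rpow_zero a ha, one_rpow, zero_mul, rpow_zero a ha]
  · exact rpow_rpow a x y hx (hu.isStrictlyPositive ha)

/-- Base case of the Furuta inequality, `0 ≤ r ≤ 1`, invertible elements. -/
lemma furuta_base {a b : A} (hb : 0 ≤ b) (hba : b ≤ a) (hua : IsUnit a) (hub : IsUnit b)
    {p r : ℝ} (hp : 1 ≤ p) (hr0 : 0 ≤ r) (hr1 : r ≤ 1) :
    (a ^ (r/2) * b ^ p * a ^ (r/2)) ^ ((1+r)/(p+r)) ≤ a ^ (1+r) := by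
  have ha := hb.trans hba
  set x := a ^ (r/2) * b ^ (p/2) with hx
  have hxu : IsUnit x := (isUnit_rpow hua _ ha).mul (isUnit_rpow hub _ hb)
  have hsx : star x = b ^ (p/2) * a ^ (r/2) := by rw [hx, star_mul, star_rpow, star_rpow]
  have hxxs : x * star x = a ^ (r/2) * b ^ p * a ^ (r/2) := by
    rw [hx, hsx, mul_assoc, ← mul_assoc (b ^ (p/2)), rpow_mul_rpow hub, add_halves, ← mul_assoc]
  have hsxx : star x * x = b ^ (p/2) * a ^ r * b ^ (p/2) := by
    rw [hsx, hx, mul_assoc, ← mul_assoc (a ^ (r/2)), rpow_mul_rpow hua, add_halves, ← mul_assoc]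
  have hxxsu : IsUnit (x * star x) := hxu.mul hxu.star
  have hsxxu : IsUnit (star x * x) := hxu.star.mul hxu
  set δ : ℝ := (1+r)/(p+r) with hδ
  have hpr : (0:ℝ) < p + r := by linarith
  have hδ0 : 0 < δ := by positivity
  have hδ1 : δ ≤ 1 := by rw [hδ, div_le_one hpr]; linarith
  have hbpru : IsUnit (b ^ (p+r)) := isUnit_rpow hub _ hb
  -- `b ^ (p+r) ≤ star x * x`
  have h1 : b ^ (p+r) ≤ star x * x := by
    rw [hsxx]
    have har : b ^ r ≤ a ^ r := LH_units hb hba hua hub hr0 hr1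
    calc b ^ (p+r) = b ^ (p/2) * b ^ r * b ^ (p/2) := by
          rw [rpow_mul_rpow hub, rpow_mul_rpow hub, show p/2 + r + p/2 = p + r by ring]
      _ = b ^ (p/2) * b ^ r * star (b ^ (p/2)) := by rw [star_rpow]
      _ ≤ b ^ (p/2) * a ^ r * star (b ^ (p/2)) := star_right_conjugate_le_conjugate har _
      _ = b ^ (p/2) * a ^ r * b ^ (p/2) := by rw [star_rpow]
  -- antitone negative power
  have h2 : (star x * x) ^ (δ - 1) ≤ (b ^ (p+r)) ^ (δ - 1) := by
    have := LH_neg_units (rpow_nonneg) h1 hsxxu hbpru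
      (t := 1 - δ) (by linarith) (by linarith)
    rw [show -(1 - δ) = δ - 1 by ring] at this
    exact this
  -- the key identity
  have e2' : (x * star x) ^ (δ-1) * (x * star x) = (x * star x) ^ δ := by
    have e := rpow_mul_rpow hxxsu (x := δ-1) (y := 1) (mul_star_self_nonneg x)
    rwa [rpow_one _ (mul_star_self_nonneg x), show δ - 1 + 1 = δ by ring] at e
  have h3 : x * (star x * x) ^ (δ-1) * star x = (x * star x) ^ δ := by
    rw [rpow_swap_unit hxu (δ-1), mul_assoc]
    exact e2'
  have hδe : (p+r) * (δ - 1) = 1 - p := by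
    rw [hδ]
    field_simp
    ring
  have h4 : (b ^ (p+r)) ^ (δ-1) = b ^ (1-p) := by
    rw [rpow_rpow' hub _ _ hb, hδe]
  calc (a ^ (r/2) * b ^ p * a ^ (r/2)) ^ δ
      = x * (star x * x) ^ (δ-1) * star x := by rw [← hxxs]; exact h3.symm
    _ ≤ x * (b ^ (p+r)) ^ (δ-1) * star x := star_right_conjugate_le_conjugate h2 x
    _ = x * b ^ (1-p) * star x := by rw [h4]
    _ = a ^ (r/2) * b * a ^ (r/2) := by
        rw [hx, hsx, mul_assoc, mul_assoc, ← mul_assoc (b ^ (1-p)), rpow_mul_rpow hub,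
          ← mul_assoc (b ^ (p/2)), rpow_mul_rpow hub, show p/2 + (1 - p + p/2) = 1 by ring,
          rpow_one b hb, ← mul_assoc]
    _ = a ^ (r/2) * b * star (a ^ (r/2)) := by rw [star_rpow]
    _ ≤ a ^ (r/2) * a * star (a ^ (r/2)) := star_right_conjugate_le_conjugate hba _
    _ = a ^ (1+r) := by
        rw [star_rpow]
        have e := rpow_mul_rpow hua (x := r/2) (y := 1) ha
        rw [rpow_one a ha] at e
        rw [e, rpow_mul_rpow hua, show r/2 + 1 + r/2 = 1 + r by ring]

lemma furuta_core_n : ∀ (n : ℕ) {p r : ℝ}, 1 ≤ p → 0 ≤ r → r ≤ 2^n - 1 →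
    ∀ {a b : A}, 0 ≤ b → b ≤ a → IsUnit a → IsUnit b →
      (a ^ (r/2) * b ^ p * a ^ (r/2)) ^ ((1+r)/(p+r)) ≤ a ^ (1+r) := by
  intro n
  induction n with
  | zero =>
    intro p r hp hr0 hn a b hb hba hua hub
    have hr : r = 0 := le_antisymm (by simpa using hn) hr0
    subst hr
    have ha := hb.trans hba
    simp only [zero_div, add_zero]
    rw [rpow_zero a ha, one_mul, mul_one, rpow_rpow' hub _ _ hb,
      mul_one_div, div_self (by linarith : p ≠ 0), rpow_one b hb, rpow_one a ha]
    exact hba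
  | succ n ih =>
    intro p r hp hr0 hn a b hb hba hua hub
    have ha := hb.trans hba
    rcases le_or_gt r 1 with hr1 | hr1
    · exact furuta_base hb hba hua hub hp hr0 hr1
    set s : ℝ := (r - 1)/2 with hs
    have hs0 : 0 ≤ s := by rw [hs]; linarith
    have hsn : s ≤ 2^n - 1 := by
      rw [hs]
      rw [pow_succ] at hn
      linarith
    set p1 : ℝ := (p + 1)/2 with hp1
    have hp1' : 1 ≤ p1 := by rw [hp1]; linarith
    set c := a ^ (1/2:ℝ) * b ^ p * a ^ (1/2:ℝ) with hc
    have hcnn : 0 ≤ c := by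
      rw [hc, show a ^ (1/2:ℝ) * b ^ p * a ^ (1/2:ℝ)
        = a ^ (1/2:ℝ) * b ^ p * star (a ^ (1/2:ℝ)) from by rw [star_rpow]]
      exact star_right_conjugate_nonneg rpow_nonneg _
    have hcu : IsUnit c :=
      ((isUnit_rpow hua _ ha).mul (isUnit_rpow hub _ hb)).mul (isUnit_rpow hua _ ha)
    have hbase : c ^ ((2:ℝ)/(p+1)) ≤ a ^ (2:ℝ) := by
      have h := furuta_base hb hba hua hub hp zero_le_one le_rfl
      rw [show (1:ℝ)+1 = 2 by norm_num] at h
      exact h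
    have hb1nn : (0:A) ≤ c ^ ((2:ℝ)/(p+1)) := rpow_nonneg
    have hb1u : IsUnit (c ^ ((2:ℝ)/(p+1))) := isUnit_rpow hcu _ hcnn
    have ha1u : IsUnit (a ^ (2:ℝ)) := isUnit_rpow hua _ ha
    have key := ih hp1' hs0 hsn hb1nn hbase ha1u hb1u
    have e1 : (a ^ (2:ℝ)) ^ (s/2) = a ^ s := by
      rw [rpow_rpow' hua _ _ ha, show 2*(s/2) = s from by ring]
    have e2 : (c ^ ((2:ℝ)/(p+1))) ^ p1 = c := by
      rw [rpow_rpow' hcu _ _ hcnn, hp1,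
        show 2/(p+1) * ((p+1)/2) = 1 from by field_simp, rpow_one c hcnn]
    have e3 : (a ^ (2:ℝ)) ^ (1+s) = a ^ (1+r) := by
      rw [rpow_rpow' hua _ _ ha, show 2*(1+s) = 1+r from by rw [hs]; ring]
    have em1 : a ^ s * a ^ (1/2:ℝ) = a ^ (r/2) := by
      rw [rpow_mul_rpow hua, show s + 1/2 = r/2 from by rw [hs]; ring]
    have em2 : a ^ (1/2:ℝ) * a ^ s = a ^ (r/2) := by
      rw [rpow_mul_rpow hua, show 1/2 + s = r/2 from by rw [hs]; ring]
    have e4 : a ^ s * c * a ^ s = a ^ (r/2) * b ^ p * a ^ (r/2) := by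
      rw [hc, show a ^ s * (a ^ (1/2:ℝ) * b ^ p * a ^ (1/2:ℝ)) * a ^ s
        = (a ^ s * a ^ (1/2:ℝ)) * b ^ p * (a ^ (1/2:ℝ) * a ^ s) from by
          simp only [mul_assoc], em1, em2]
    have e5 : (1+s)/(p1+s) = (1+r)/(p+r) := by
      rw [hs, hp1, div_eq_div_iff (by positivity) (by positivity)]
      ring
    rw [e1, e2, e3, e4, e5] at key
    exact key




lemma furuta_core {p r : ℝ} (hp : 1 ≤ p) (hr0 : 0 ≤ r) {a b : A} (hb : 0 ≤ b) (hba : b ≤ a)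
    (hua : IsUnit a) (hub : IsUnit b) :
    (a ^ (r/2) * b ^ p * a ^ (r/2)) ^ ((1+r)/(p+r)) ≤ a ^ (1+r) := by
  obtain ⟨n, hn⟩ : ∃ n : ℕ, r ≤ 2^n - 1 := by
    obtain ⟨n, hn⟩ := pow_unbounded_of_one_lt (r + 1) (show (1:ℝ) < 2 by norm_num)
    exact ⟨n, by linarith⟩
  exact furuta_core_n n hp hr0 hn hb hba hua hub

lemma conj_nonneg_rpow {a : A} (b : A) (hb : 0 ≤ b) (s : ℝ) :
    0 ≤ a ^ s * b * a ^ s := by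
  have := star_right_conjugate_nonneg hb (a ^ s)
  rwa [star_rpow] at this

lemma furuta_units {a b : A} (hb : 0 ≤ b) (hba : b ≤ a) (hua : IsUnit a) (hub : IsUnit b)
    {r p q : ℝ} (hr : 0 ≤ r) (hp : 0 ≤ p) (hq : 1 ≤ q) (hpq : p + r ≤ (1+r)*q) :
    (a ^ (r/2) * b ^ p * a ^ (r/2)) ^ (1/q) ≤ (a ^ (r/2) * a ^ p * a ^ (r/2)) ^ (1/q) := by
  have ha := hb.trans hba
  have hq0 : 0 < q := by linarith
  have hmid : a ^ (r/2) * a ^ p * a ^ (r/2) = a ^ (p+r) := by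
    rw [rpow_mul_rpow hua, rpow_mul_rpow hua, show r/2 + p + r/2 = p + r by ring]
  have hYnn : 0 ≤ a ^ (r/2) * b ^ p * a ^ (r/2) := conj_nonneg_rpow _ rpow_nonneg _
  have hYu : IsUnit (a ^ (r/2) * b ^ p * a ^ (r/2)) :=
    ((isUnit_rpow hua _ ha).mul (isUnit_rpow hub _ hb)).mul (isUnit_rpow hua _ ha)
  rw [hmid]
  have h1q0 : 0 ≤ 1/q := by positivity
  have h1q1 : 1/q ≤ 1 := by rw [div_le_one hq0]; exact hq
  rcases le_or_gt p 1 with hp1 | hp1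
  · -- easy case : p ≤ 1
    have h1 : a ^ (r/2) * b ^ p * a ^ (r/2) ≤ a ^ (p+r) := by
      rw [← hmid]
      calc a ^ (r/2) * b ^ p * a ^ (r/2)
          = a ^ (r/2) * b ^ p * star (a ^ (r/2)) := by rw [star_rpow]
        _ ≤ a ^ (r/2) * a ^ p * star (a ^ (r/2)) :=
            star_right_conjugate_le_conjugate (LH_units hb hba hua hub hp hp1) _
        _ = a ^ (r/2) * a ^ p * a ^ (r/2) := by rw [star_rpow]
    exact LH_units hYnn h1 (isUnit_rpow hua _ ha) hYu h1q0 h1q1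
  · -- hard case : p > 1
    have hpr : (0:ℝ) < p + r := by linarith
    have hcore := furuta_core hp1.le hr hb hba hua hub
    set β : ℝ := (p+r)/((1+r)*q) with hβ
    have hβ0 : 0 < β := by positivity
    have hβ1 : β ≤ 1 := by
      rw [hβ, div_le_one (by positivity)]
      exact hpq
    have happ := LH_units (rpow_nonneg) hcore (isUnit_rpow hua _ ha)
      (isUnit_rpow hYu _ hYnn) hβ0.le hβ1
    rw [rpow_rpow' hYu _ _ hYnn, rpow_rpow' hua _ _ ha,
      show (1+r)/(p+r) * β = 1/q from by rw [hβ]; field_simp; try ring,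
      show (1+r)*β = (p+r)/q from by rw [hβ]; field_simp; try ring] at happ
    rw [rpow_rpow' hua _ _ ha, show (p+r) * (1/q) = (p+r)/q from by ring]
    exact happ

lemma norm_rpow_sub_aeval_le [Nontrivial A] {z : A} (hz : 0 ≤ z) {t : ℝ} (ht : 0 ≤ t)
    {M ε : ℝ} (hM : ‖z‖ ≤ M) (hε : 0 ≤ ε) {pl : ℝ[X]}
    (hcl : ∀ y ∈ Set.Icc (0:ℝ) M, ‖((y.toNNReal ^ t : ℝ≥0) : ℝ) - pl.eval y‖ ≤ ε) :
    ‖z ^ t - aeval z pl‖ ≤ ε := by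
  rw [rpow_eq_cfc_real t hz, ← cfc_polynomial pl z (IsSelfAdjoint.of_nonneg hz),
    ← cfc_sub (fun x : ℝ => ((x.toNNReal ^ t : ℝ≥0) : ℝ)) (fun x : ℝ => eval x pl) z
      (continuous_aux t ht).continuousOn (pl.continuous.continuousOn)]
  refine norm_cfc_le hε fun y hy => ?_
  exact hcl y ((Set.Icc_subset_Icc le_rfl hM) (spectrum_subset_Icc hz hy))

/-- Norm continuity of `rpow` in the element along sequences of nonneg elements. -/
lemma tendsto_rpow_element {z : A} {zs : ℕ → A} (hz : 0 ≤ z) (hzs : ∀ n, 0 ≤ zs n)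
    (hlim : Tendsto zs atTop (𝓝 z)) {t : ℝ} (ht : 0 ≤ t) :
    Tendsto (fun n => zs n ^ t) atTop (𝓝 (z ^ t)) := by
  rcases subsingleton_or_nontrivial A with hA | hA
  · exact tendsto_const_nhds.congr fun n => Subsingleton.elim _ _
  rw [Metric.tendsto_nhds]
  intro ε hε
  set M : ℝ := ‖z‖ + 1 with hMdef
  have hM0 : (0:ℝ) < M := by positivity
  obtain ⟨pl, hpl⟩ := exists_polynomial_near_continuousMap 0 M
    ((⟨_, continuous_aux t ht⟩ : C(ℝ, ℝ)).restrict (Set.Icc 0 M)) (ε/3) (by positivity)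
  have hclose : ∀ y ∈ Set.Icc (0:ℝ) M, ‖((y.toNNReal ^ t : ℝ≥0) : ℝ) - pl.eval y‖ ≤ ε/3 := by
    intro y hy
    have := (pl.toContinuousMapOn (Set.Icc 0 M) -
      (⟨_, continuous_aux t ht⟩ : C(ℝ, ℝ)).restrict (Set.Icc 0 M)).norm_coe_le_norm ⟨y, hy⟩
    simp only [ContinuousMap.sub_apply, Polynomial.toContinuousMapOn_apply,
      Polynomial.toContinuousMap_apply, ContinuousMap.restrict_apply,
      ContinuousMap.coe_mk] at this
    rw [← norm_neg, neg_sub]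
    exact (this.trans hpl.le)
  have haeval : Tendsto (fun n => aeval (zs n) pl) atTop (𝓝 (aeval z pl)) :=
    (pl.continuous_aeval.tendsto z).comp hlim
  have hev1 : ∀ᶠ n in atTop, dist (aeval (zs n) pl) (aeval z pl) < ε/3 :=
    Metric.tendsto_nhds.mp haeval (ε/3) (by positivity)
  have hev2 : ∀ᶠ n in atTop, ‖zs n‖ ≤ M := by
    filter_upwards [Metric.tendsto_nhds.mp hlim 1 one_pos] with n hn
    have : ‖zs n - z‖ < 1 := by rwa [dist_eq_norm] at hn
    have hzz : z + (zs n - z) = zs n := by abel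
    calc ‖zs n‖ = ‖z + (zs n - z)‖ := by rw [hzz]
      _ ≤ ‖z‖ + ‖zs n - z‖ := norm_add_le _ _
      _ ≤ M := by rw [hMdef]; linarith
  filter_upwards [hev1, hev2] with n h1 h2
  have b1 : ‖zs n ^ t - aeval (zs n) pl‖ ≤ ε/3 :=
    norm_rpow_sub_aeval_le (hzs n) ht h2 (by positivity) hclose
  have b3 : ‖z ^ t - aeval z pl‖ ≤ ε/3 :=
    norm_rpow_sub_aeval_le hz ht (by rw [hMdef]; linarith) (by positivity) hclose
  calc dist (zs n ^ t) (z ^ t)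
      ≤ dist (zs n ^ t) (aeval (zs n) pl) + dist (aeval (zs n) pl) (aeval z pl)
        + dist (aeval z pl) (z ^ t) := dist_triangle4 _ _ _ _
    _ < ε/3 + ε/3 + ε/3 := by
        have d1 : dist (zs n ^ t) (aeval (zs n) pl) ≤ ε/3 := by rwa [dist_eq_norm]
        have d3 : dist (aeval z pl) (z ^ t) ≤ ε/3 := by
          rw [dist_eq_norm, ← norm_neg, neg_sub]; exact b3
        linarith [h1]
    _ = ε := by ring

/-- The Furuta inequality. -/
theorem furuta {a b : A} (hb : 0 ≤ b) (hba : b ≤ a)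
    {r p q : ℝ} (hr : 0 ≤ r) (hp : 0 ≤ p) (hq : 1 ≤ q) (hpq : p + r ≤ (1+r)*q) :
    (a ^ (r/2) * b ^ p * a ^ (r/2)) ^ (1/q) ≤ (a ^ (r/2) * a ^ p * a ^ (r/2)) ^ (1/q) := by
  have ha := hb.trans hba
  set e : ℕ → ℝ≥0 := fun n => (n+1 : ℝ≥0)⁻¹ with he
  have he0 : Tendsto (fun n => ((e n : ℝ≥0) : ℝ)) atTop (𝓝 0) := by
    rw [he]
    have h := tendsto_one_div_add_atTop_nhds_zero_nat (𝕜 := ℝ)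
    refine h.congr fun n => ?_
    push_cast
    rw [one_div]
  have hnn : ∀ n, (0:A) ≤ algebraMap ℝ≥0 A (e n) := fun n => algebraMap_nnreal_nonneg ha _
  have hu : ∀ n, IsUnit (algebraMap ℝ≥0 A (e n)) := fun n =>
    (isUnit_iff_ne_zero.mpr (by simp [he])).map (algebraMap ℝ≥0 A)
  set aa : ℕ → A := fun n => a + algebraMap ℝ≥0 A (e n) with haa
  set bb : ℕ → A := fun n => b + algebraMap ℝ≥0 A (e n) with hbb
  have haan : ∀ n, 0 ≤ aa n := fun n => add_nonneg ha (hnn n)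
  have hbbn : ∀ n, 0 ≤ bb n := fun n => add_nonneg hb (hnn n)
  have haau : ∀ n, IsUnit (aa n) := fun n =>
    CStarAlgebra.isUnit_of_le _ (le_add_of_nonneg_left ha) ((hu n).isStrictlyPositive (hnn n))
  have hbbu : ∀ n, IsUnit (bb n) := fun n =>
    CStarAlgebra.isUnit_of_le _ (le_add_of_nonneg_left hb) ((hu n).isStrictlyPositive (hnn n))
  have hstep : ∀ n, (aa n ^ (r/2) * bb n ^ p * aa n ^ (r/2)) ^ (1/q) ≤
      (aa n ^ (r/2) * aa n ^ p * aa n ^ (r/2)) ^ (1/q) := fun n =>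
    furuta_units (hbbn n) (add_le_add_left hba _) (haau n) (hbbu n) hr hp hq hpq
  have l1 : Tendsto (fun n => aa n ^ (r/2)) atTop (𝓝 (a ^ (r/2))) :=
    tendsto_translate ha (by positivity) he0
  have l2 : Tendsto (fun n => bb n ^ p) atTop (𝓝 (b ^ p)) := tendsto_translate hb hp he0
  have l3 : Tendsto (fun n => aa n ^ p) atTop (𝓝 (a ^ p)) := tendsto_translate ha hp he0
  have lin1 : Tendsto (fun n => aa n ^ (r/2) * bb n ^ p * aa n ^ (r/2)) atTop
      (𝓝 (a ^ (r/2) * b ^ p * a ^ (r/2))) := (l1.mul l2).mul l1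
  have lin2 : Tendsto (fun n => aa n ^ (r/2) * aa n ^ p * aa n ^ (r/2)) atTop
      (𝓝 (a ^ (r/2) * a ^ p * a ^ (r/2))) := (l1.mul l3).mul l1
  have hout1 := tendsto_rpow_element (conj_nonneg_rpow _ rpow_nonneg _)
    (fun n => conj_nonneg_rpow _ rpow_nonneg _) lin1 (show 0 ≤ 1/q by positivity)
  have hout2 := tendsto_rpow_element (conj_nonneg_rpow _ rpow_nonneg _)
    (fun n => conj_nonneg_rpow _ rpow_nonneg _) lin2 (show 0 ≤ 1/q by positivity)
  exact le_of_tendsto_of_le' hout1 hout2 hstep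


end FurutaProof

end FurutaDevelopment

theorem stmt5 (A B : H →L[ℂ] H) (hB : 0 ≤ B) (hBA : B ≤ A)
    (r p q : ℝ) (hr : 0 ≤ r) (hp : 0 ≤ p) (hq : 1 ≤ q) (hpq : p + r ≤ (1 + r) * q) :
    (A ^ (r/2) * A ^ p * A ^ (r/2)) ^ (1/q) ≥ (A ^ (r/2) * B ^ p * A ^ (r/2)) ^ (1/q) :=
  FurutaProof.furuta hB hBA hr hp hq hpq
end

section
/- Let A, B be positive invertible bounded linear operators on a Hilbert space, let t > s > 0 and n ≥ 2 a natural number, and suppose C^{n/((n+2)s+(n-2)t)} ≥ B, where C = B^{s/n} (A^{(s-t)/n} B^{2t/n})^{n-1} A^{(s-t)/n} B^{s/n}. If (n+2)s + (n-2)t ≤ n, then log B ≥ log A. -/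
open CFC
open scoped NNReal ENNReal


section Aux

variable {A : Type*} [CStarAlgebra A] [PartialOrder A] [StarOrderedRing A]

namespace ChaoticAux

lemma isUnit_rpow {a : A} (ha : 0 ≤ a) (hau : IsUnit a) (x : ℝ) : IsUnit (a ^ x) := by
  have h0 : 0 ∉ spectrum ℝ≥0 a := spectrum.zero_notMem ℝ≥0 hau
  exact ⟨⟨a ^ x, a ^ (-x), rpow_mul_rpow_neg x (hau.isStrictlyPositive ha), rpow_neg_mul_rpow x (hau.isStrictlyPositive ha)⟩, rfl⟩

lemma sa_rpow {a : A} (x : ℝ) : IsSelfAdjoint (a ^ x) :=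
  IsSelfAdjoint.of_nonneg rpow_nonneg

lemma rpow_mul_rpow {a : A} (ha : 0 ≤ a) (hau : IsUnit a) (x y : ℝ) :
    a ^ x * a ^ y = a ^ (x + y) :=
  (rpow_add hau).symm

lemma rpow_rpow' {a : A} (ha : 0 ≤ a) (hau : IsUnit a) (x y : ℝ) (hx : x ≠ 0) :
    (a ^ x) ^ y = a ^ (x * y) :=
  rpow_rpow a x y hx (hau.isStrictlyPositive ha)

lemma conj_le_conj {a b : A} (c : A) (hc : IsSelfAdjoint c) (hab : a ≤ b) :
    c * a * c ≤ c * b * c := by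
  simpa [hc.star_eq] using star_left_conjugate_le_conjugate hab c

end ChaoticAux

end Aux

namespace ChaoticAux

set_option linter.unusedSectionVars false

variable {A : Type*} [CStarAlgebra A] [PartialOrder A] [StarOrderedRing A] [Nontrivial A]

lemma srad_le_swap (a b : A) : spectralRadius ℂ (a * b) ≤ spectralRadius ℂ (b * a) := by
  rw [spectralRadius, spectralRadius]
  refine iSup₂_le fun k hk => ?_
  rcases eq_or_ne k 0 with rfl | h0
  · simp
  · have hk' : k ∈ spectrum ℂ (a * b) \ {0} := ⟨hk, h0⟩
    rw [spectrum.nonzero_mul_comm] at hk'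
    exact le_iSup₂ (f := fun k (_ : k ∈ spectrum ℂ (b * a)) => (‖k‖₊ : ℝ≥0∞)) k hk'.1

lemma srad_swap (a b : A) : spectralRadius ℂ (a * b) = spectralRadius ℂ (b * a) :=
  le_antisymm (srad_le_swap a b) (srad_le_swap b a)

lemma srad_congr {a b : A} (h : spectrum ℂ a = spectrum ℂ b) :
    spectralRadius ℂ a = spectralRadius ℂ b := by
  rw [spectralRadius, spectralRadius, h]

lemma norm_le_one_of_rpow_le {a b : A} (ha : 0 ≤ a) (hau : IsUnit a) (hb : 0 ≤ b) (hbu : IsUnit b)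
    {x : ℝ} (hx : a ^ (2*x) ≤ b ^ (2*x)) : ‖a ^ x * b ^ (-x)‖ ≤ 1 := by
  have h1 : b ^ (-x) * a ^ (2*x) * b ^ (-x) ≤ b ^ (-x) * b ^ (2*x) * b ^ (-x) :=
    conj_le_conj _ (sa_rpow _) hx
  have h2 : b ^ (-x) * b ^ (2*x) * b ^ (-x) = 1 := by
    rw [rpow_mul_rpow hb hbu, rpow_mul_rpow hb hbu, show -x + 2*x + -x = 0 by ring,
      rpow_zero b hb]
  have h3 : (0:A) ≤ b ^ (-x) * a ^ (2*x) * b ^ (-x) := by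
    have := star_left_conjugate_nonneg (a := a ^ (2*x)) rpow_nonneg (c := b ^ (-x))
    simpa [(sa_rpow (a := b) (-x)).star_eq] using this
  have h4 : ‖b ^ (-x) * a ^ (2*x) * b ^ (-x)‖ ≤ 1 :=
    (CStarAlgebra.norm_le_one_iff_of_nonneg _ h3).mpr (h2 ▸ h1)
  have h5 : b ^ (-x) * a ^ (2*x) * b ^ (-x) = star (a ^ x * b ^ (-x)) * (a ^ x * b ^ (-x)) := by
    rw [star_mul, (sa_rpow (a := a) x).star_eq, (sa_rpow (a := b) (-x)).star_eq]
    rw [show b ^ (-x) * a ^ x * (a ^ x * b ^ (-x)) = b ^ (-x) * (a ^ x * a ^ x) * b ^ (-x) by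
        simp only [mul_assoc],
      rpow_mul_rpow ha hau, show x + x = 2*x by ring]
  rw [h5, CStarRing.norm_star_mul_self] at h4
  nlinarith [norm_nonneg (a ^ x * b ^ (-x))]

lemma midpoint_le {a b : A} (ha : 0 ≤ a) (hau : IsUnit a) (hb : 0 ≤ b) (hbu : IsUnit b)
    {α β : ℝ} (hα : a ^ α ≤ b ^ α) (hβ : a ^ β ≤ b ^ β) :
    a ^ ((α + β)/2) ≤ b ^ ((α + β)/2) := by
  set c : ℝ := (α + β)/2 with hc
  have hbm : ∀ x y : ℝ, b ^ x * b ^ y = b ^ (x+y) := rpow_mul_rpow hb hbu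
  have ham : ∀ x y : ℝ, a ^ x * a ^ y = a ^ (x+y) := rpow_mul_rpow ha hau
  -- norm bounds
  have n1 : ‖a ^ (α/2) * b ^ (-(α/2))‖ ≤ 1 := by
    refine norm_le_one_of_rpow_le ha hau hb hbu ?_
    rw [show 2*(α/2) = α by ring]; exact hα
  have n2 : ‖a ^ (β/2) * b ^ (-(β/2))‖ ≤ 1 := by
    refine norm_le_one_of_rpow_le ha hau hb hbu ?_
    rw [show 2*(β/2) = β by ring]; exact hβ
  have n2' : ‖b ^ (-(β/2)) * a ^ (β/2)‖ ≤ 1 := by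
    have he : b ^ (-(β/2)) * a ^ (β/2) = star (a ^ (β/2) * b ^ (-(β/2))) := by
      rw [star_mul, (sa_rpow (a := a) (β/2)).star_eq, (sa_rpow (a := b) (-(β/2))).star_eq]
    rw [he, norm_star]; exact n2
  -- the unit b^(c/2)
  have hu1 : b ^ (c/2) * b ^ (-(c/2)) = 1 := by rw [hbm, show c/2 + -(c/2) = 0 by ring, rpow_zero b hb]
  have hu2 : b ^ (-(c/2)) * b ^ (c/2) = 1 := by rw [hbm, show -(c/2) + c/2 = 0 by ring, rpow_zero b hb]
  set u : Aˣ := ⟨b ^ (c/2), b ^ (-(c/2)), hu1, hu2⟩ with hu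
  set X : A := b ^ (-(c/2)) * a ^ c * b ^ (-(c/2)) with hX
  have hX0 : (0:A) ≤ X := by
    have := star_left_conjugate_nonneg (a := a ^ c) rpow_nonneg (c := b ^ (-(c/2)))
    simpa [(sa_rpow (a := b) (-(c/2))).star_eq] using this
  have hXsa : IsSelfAdjoint X := .of_nonneg hX0
  have spec_eq : spectrum ℂ X = spectrum ℂ (a ^ c * b ^ (-c)) := by
    have hXe : X = ↑u⁻¹ * (a ^ c * b ^ (-c)) * ↑u := by
      show X = b ^ (-(c/2)) * (a ^ c * b ^ (-c)) * b ^ (c/2)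
      rw [hX]
      simp only [mul_assoc, hbm]
      rw [show -c + c/2 = -(c/2) by ring]
    rw [hXe, spectrum.units_conjugate']
  have key : spectralRadius ℂ (a ^ c * b ^ (-c)) ≤ 1 := by
    have hsplit : a ^ c * b ^ (-c)
        = a ^ (β/2) * (a ^ (α/2) * b ^ (-(α/2)) * b ^ (-(β/2))) := by
      rw [show a ^ (β/2) * (a ^ (α/2) * b ^ (-(α/2)) * b ^ (-(β/2)))
          = (a ^ (β/2) * a ^ (α/2)) * (b ^ (-(α/2)) * b ^ (-(β/2))) by simp only [mul_assoc],
        ham, hbm, show β/2 + α/2 = c by rw [hc]; ring, show -(α/2) + -(β/2) = -c by rw [hc]; ring]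
    rw [hsplit, srad_swap]
    calc spectralRadius ℂ (a ^ (α/2) * b ^ (-(α/2)) * b ^ (-(β/2)) * a ^ (β/2))
        ≤ ‖a ^ (α/2) * b ^ (-(α/2)) * b ^ (-(β/2)) * a ^ (β/2)‖₊ := spectrum.spectralRadius_le_nnnorm _
      _ ≤ ‖a ^ (α/2) * b ^ (-(α/2))‖₊ * ‖b ^ (-(β/2)) * a ^ (β/2)‖₊ := by
          rw [mul_assoc (a ^ (α/2) * b ^ (-(α/2)))]
          exact_mod_cast ENNReal.coe_le_coe.mpr (nnnorm_mul_le _ _)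
      _ ≤ 1 * 1 := by
          have e1 : (‖a ^ (α/2) * b ^ (-(α/2))‖₊ : ℝ≥0∞) ≤ 1 := by exact_mod_cast n1
          have e2 : (‖b ^ (-(β/2)) * a ^ (β/2)‖₊ : ℝ≥0∞) ≤ 1 := by exact_mod_cast n2'
          exact mul_le_mul' e1 e2
      _ = 1 := by rw [mul_one]
  -- conclude
  have hXnorm : ‖X‖ ≤ 1 := by
    have h6 : (‖X‖₊ : ℝ≥0∞) = spectralRadius ℂ (a ^ c * b ^ (-c)) := by
      rw [← hXsa.spectralRadius_eq_nnnorm, srad_congr spec_eq]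
    have : (‖X‖₊ : ℝ≥0∞) ≤ 1 := h6 ▸ key
    simpa using (NNReal.coe_le_coe.mpr (ENNReal.coe_le_coe.mp (by simpa using this)) : ((‖X‖₊:ℝ≥0):ℝ) ≤ ((1:ℝ≥0):ℝ))
  have hXle : X ≤ 1 := (CStarAlgebra.norm_le_one_iff_of_nonneg _ hX0).mp hXnorm
  have := conj_le_conj (b ^ (c/2)) (sa_rpow _) hXle
  calc a ^ c = b ^ (c/2) * X * b ^ (c/2) := by
        rw [hX, show b ^ (c/2) * (b ^ (-(c/2)) * a ^ c * b ^ (-(c/2))) * b ^ (c/2)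
            = (b ^ (c/2) * b ^ (-(c/2))) * (a ^ c * (b ^ (-(c/2)) * b ^ (c/2))) by
          simp only [mul_assoc], hu1, hu2, one_mul, mul_one]
    _ ≤ b ^ (c/2) * 1 * b ^ (c/2) := this
    _ = b ^ c := by rw [mul_one, hbm, show c/2 + c/2 = c by ring]

end ChaoticAux

namespace ChaoticAux

open Filter Topology

variable {A : Type*} [CStarAlgebra A] [PartialOrder A] [StarOrderedRing A] [Nontrivial A]

lemma spec_real_pos {a : A} (ha : 0 ≤ a) (hau : IsUnit a) : ∀ x ∈ spectrum ℝ a, 0 < x := by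
  intro x hx
  rcases lt_or_eq_of_le (spectrum_nonneg_of_nonneg ha hx) with h | h
  · exact h
  · exact absurd (h ▸ hx) (by simpa [spectrum.zero_mem_iff] using hau)

lemma exists_spec_lower {a : A} (ha : 0 ≤ a) (hau : IsUnit a) :
    ∃ ε > 0, ∀ x ∈ spectrum ℝ a, ε ≤ x := by
  obtain ⟨r, hr, hle⟩ := (CFC.exists_pos_algebraMap_le_iff (a := a) ha.isSelfAdjoint).mpr
    (spec_real_pos ha hau)
  refine ⟨r, hr, fun x hx => ?_⟩
  exact (algebraMap_le_iff_le_spectrum (a := a) ha.isSelfAdjoint).mp hle x hx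

lemma spec_upper {a : A} (x : ℝ) (hx : x ∈ spectrum ℝ a) : x ≤ ‖a‖ :=
  (Real.le_norm_self x).trans (spectrum.norm_le_norm_of_mem hx)

lemma rpow_eq_cfc_real {a : A} (ha : 0 ≤ a) (r : ℝ) :
    a ^ r = cfc (fun x : ℝ => x ^ r) a := by
  rw [rpow_def, cfc_nnreal_eq_real _ a ha]
  refine cfc_congr fun x hx => ?_
  have hx0 : 0 ≤ x := spectrum_nonneg_of_nonneg ha hx
  rw [NNReal.coe_rpow, Real.coe_toNNReal x hx0]

lemma contOn_rpow (w : ℝ) (s : Set ℝ) (hs : ∀ x ∈ s, 0 < x) :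
    ContinuousOn (fun x : ℝ => x ^ w) s := fun x hx =>
  (Real.continuousAt_rpow_const x w (Or.inl (ne_of_gt (hs x hx)))).continuousWithinAt

lemma cfc_dist {a : A} {f g : ℝ → ℝ} {c : ℝ} (hc : 0 ≤ c)
    (hf : ContinuousOn f (spectrum ℝ a)) (hg : ContinuousOn g (spectrum ℝ a))
    (hfg : ∀ x ∈ spectrum ℝ a, |f x - g x| ≤ c) : ‖cfc f a - cfc g a‖ ≤ c := by
  rw [← cfc_sub f g a hf hg]
  exact norm_cfc_le hc fun x hx => by simpa [Real.norm_eq_abs] using hfg x hx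

lemma abs_exp_sub_exp {p q c : ℝ} (hp : |p| ≤ c) (hq : |q| ≤ c) :
    |Real.exp p - Real.exp q| ≤ Real.exp (3*c) * |p - q| := by
  have key : ∀ u v : ℝ, |u| ≤ c → |v| ≤ c → v ≤ u →
      Real.exp u - Real.exp v ≤ Real.exp (3*c) * (u - v) := by
    intro u v hu hv huv
    have h1 : Real.exp u - Real.exp v = Real.exp v * (Real.exp (u - v) - 1) := by
      rw [mul_sub, mul_one, ← Real.exp_add]; ring_nf
    have hd0 : 0 ≤ u - v := by linarith
    have h2 : Real.exp (u - v) - 1 ≤ (u - v) * Real.exp (u - v) := by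
      have hA : (-(u-v)) + 1 ≤ Real.exp (-(u-v)) := Real.add_one_le_exp _
      have hB : Real.exp (-(u-v)) * Real.exp (u-v) = 1 := by
        rw [← Real.exp_add]; simp
      nlinarith [mul_le_mul_of_nonneg_right hA (Real.exp_pos (u-v)).le]
    have hv' : Real.exp v ≤ Real.exp c := Real.exp_le_exp.mpr (le_trans (le_abs_self v) hv)
    have hd' : Real.exp (u - v) ≤ Real.exp (2*c) := by
      apply Real.exp_le_exp.mpr
      have h3 : u - v ≤ |u| + |v| := by
        calc u - v ≤ |u - v| := le_abs_self _
          _ ≤ |u| + |v| := abs_sub _ _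
      linarith
    have hge1 : (1:ℝ) ≤ Real.exp (u - v) := by
      have := Real.add_one_le_exp (u - v); linarith
    calc Real.exp u - Real.exp v = Real.exp v * (Real.exp (u - v) - 1) := h1
      _ ≤ Real.exp c * ((u - v) * Real.exp (2*c)) := by
          refine mul_le_mul hv' (h2.trans ?_) (by linarith) (Real.exp_pos c).le
          exact mul_le_mul_of_nonneg_left hd' hd0
      _ = (Real.exp c * Real.exp (2*c)) * (u - v) := by ring
      _ = Real.exp (3*c) * (u - v) := by
          rw [← Real.exp_add, show c + 2*c = 3*c by ring]
  rcases le_total q p with h | h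
  · rw [abs_of_nonneg (by nlinarith [Real.exp_le_exp.mpr h] : (0:ℝ) ≤ Real.exp p - Real.exp q),
      abs_of_nonneg (by linarith : (0:ℝ) ≤ p - q)]
    exact key p q hp hq h
  · rw [abs_of_nonpos (by nlinarith [Real.exp_le_exp.mpr h] : Real.exp p - Real.exp q ≤ 0),
      abs_of_nonpos (by linarith : p - q ≤ 0)]
    have := key q p hq hp h
    linarith

end ChaoticAux

namespace ChaoticAux

set_option linter.unusedSectionVars false

open Filter Topology

variable {A : Type*} [CStarAlgebra A] [PartialOrder A] [StarOrderedRing A] [Nontrivial A]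

lemma abs_log_le {ε M x : ℝ} (hε : 0 < ε) (hx1 : ε ≤ x) (hx2 : x ≤ M) :
    |Real.log x| ≤ max |Real.log ε| |Real.log M| := by
  have hx0 : 0 < x := lt_of_lt_of_le hε hx1
  rcases abs_cases (Real.log x) with ⟨he, _⟩ | ⟨he, _⟩
  · rw [he]
    exact le_max_of_le_right ((Real.log_le_log_iff hx0 (lt_of_lt_of_le hx0 hx2)).mpr hx2 |>.trans (le_abs_self _))
  · rw [he]
    have h1 : Real.log ε ≤ Real.log x := (Real.log_le_log_iff hε hx0).mpr hx1
    have h2 : -Real.log x ≤ -Real.log ε := by linarith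
    exact h2.trans ((neg_le_abs _).trans (le_max_left _ _))

lemma tendsto_rpow_exponent {a : A} (ha : 0 ≤ a) (hau : IsUnit a) {r : ℝ} {u : ℕ → ℝ}
    (hu : Tendsto u atTop (𝓝 r)) :
    Tendsto (fun m => a ^ (u m)) atTop (𝓝 (a ^ r)) := by
  obtain ⟨ε, hε, hlow⟩ := exists_spec_lower ha hau
  set M : ℝ := ‖a‖ with hM
  set L : ℝ := max |Real.log ε| |Real.log M| with hL
  have hL0 : 0 ≤ L := le_trans (abs_nonneg _) (le_max_left _ _)
  set K : ℝ := |r| + 1 with hK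
  set C : ℝ := Real.exp (3*(L*K)) * L with hC
  have hC0 : 0 ≤ C := mul_nonneg (Real.exp_pos _).le hL0
  have hspec : ∀ x ∈ spectrum ℝ a, 0 < x := spec_real_pos ha hau
  have hlog : ∀ x ∈ spectrum ℝ a, |Real.log x| ≤ L := fun x hx =>
    abs_log_le hε (hlow x hx) (spec_upper x hx)
  rw [tendsto_iff_norm_sub_tendsto_zero]
  have hev : ∀ᶠ m in atTop, |u m - r| < 1 := by
    have := (Metric.tendsto_nhds.mp hu) 1 one_pos
    simpa [Real.dist_eq] using this
  refine squeeze_zero' (g := fun m => C * |u m - r|)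
    (Eventually.of_forall fun m => norm_nonneg _) (hev.mono fun m hm => ?_) ?_
  · -- ‖a ^ u m - a ^ r‖ ≤ C * |u m - r|
    rw [rpow_eq_cfc_real ha (u m), rpow_eq_cfc_real ha r]
    refine cfc_dist (mul_nonneg hC0 (abs_nonneg _)) (contOn_rpow _ _ hspec) (contOn_rpow _ _ hspec)
      fun x hx => ?_
    have hx0 : 0 < x := hspec x hx
    rw [Real.rpow_def_of_pos hx0, Real.rpow_def_of_pos hx0]
    have hum : |u m| ≤ K := by
      rw [hK]
      have := abs_sub_abs_le_abs_sub (u m) r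
      linarith
    have h1 : |Real.log x * u m| ≤ L*K := by
      rw [abs_mul]
      exact mul_le_mul (hlog x hx) hum (abs_nonneg _) hL0
    have h2 : |Real.log x * r| ≤ L*K := by
      rw [abs_mul]
      refine mul_le_mul (hlog x hx) (by rw [hK]; linarith [abs_nonneg r]) (abs_nonneg _) hL0
    calc |Real.exp (Real.log x * u m) - Real.exp (Real.log x * r)|
        ≤ Real.exp (3*(L*K)) * |Real.log x * u m - Real.log x * r| := abs_exp_sub_exp h1 h2
      _ = Real.exp (3*(L*K)) * (|Real.log x| * |u m - r|) := by
          rw [← abs_mul]; ring_nf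
      _ ≤ Real.exp (3*(L*K)) * (L * |u m - r|) := by
          refine mul_le_mul_of_nonneg_left ?_ (Real.exp_pos _).le
          exact mul_le_mul_of_nonneg_right (hlog x hx) (abs_nonneg _)
      _ = C * |u m - r| := by rw [hC]; ring
  · have : Tendsto (fun m => u m - r) atTop (𝓝 0) := by
      simpa using hu.sub (tendsto_const_nhds (x := r))
    have habs : Tendsto (fun m => |u m - r|) atTop (𝓝 0) := by
      simpa using this.abs
    simpa using habs.const_mul C

lemma tendsto_inv_smul_rpow_sub_one {a : A} (ha : 0 ≤ a) (hau : IsUnit a) {h : ℕ → ℝ}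
    (hpos : ∀ m, 0 < h m) (hto : Tendsto h atTop (𝓝 0)) :
    Tendsto (fun m => (h m)⁻¹ • (a ^ (h m) - 1)) atTop (𝓝 (CFC.log a)) := by
  obtain ⟨ε, hε, hlow⟩ := exists_spec_lower ha hau
  set M : ℝ := ‖a‖ with hM
  set L : ℝ := max |Real.log ε| |Real.log M| with hL
  have hL0 : 0 ≤ L := le_trans (abs_nonneg _) (le_max_left _ _)
  have hspec : ∀ x ∈ spectrum ℝ a, 0 < x := spec_real_pos ha hau
  have hlog : ∀ x ∈ spectrum ℝ a, |Real.log x| ≤ L := fun x hx =>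
    abs_log_le hε (hlow x hx) (spec_upper x hx)
  have contlog : ContinuousOn Real.log (spectrum ℝ a) :=
    Real.continuousOn_log.mono fun x hx => by
      simp only [Set.mem_compl_iff, Set.mem_singleton_iff]
      exact ne_of_gt (hspec x hx)
  have key : ∀ m : ℕ, (h m)⁻¹ • (a ^ (h m) - 1)
      = cfc (fun x : ℝ => (h m)⁻¹ * (x ^ (h m) - 1)) a := by
    intro m
    have h1 : a ^ (h m) - 1 = cfc (fun x : ℝ => x ^ (h m) - 1) a := by
      rw [cfc_sub (fun x : ℝ => x ^ (h m)) (fun _ : ℝ => 1) a (contOn_rpow _ _ hspec)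
        continuousOn_const, cfc_const_one ℝ a, rpow_eq_cfc_real ha]
    rw [h1, ← cfc_smul ((h m)⁻¹) (fun x : ℝ => x ^ (h m) - 1) a
      ((contOn_rpow _ _ hspec).sub continuousOn_const)]
    simp only [smul_eq_mul]
  rw [CFC.log, tendsto_iff_norm_sub_tendsto_zero]
  have hev : ∀ᶠ m in atTop, h m * L < 1 := by
    rcases eq_or_lt_of_le hL0 with hL0' | hL0'
    · exact Eventually.of_forall fun m => by rw [← hL0']; simpa using one_pos
    · have := (Metric.tendsto_nhds.mp hto) (1/L) (by positivity)
      refine this.mono fun m hm => ?_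
      rw [Real.dist_eq, sub_zero, abs_of_pos (hpos m)] at hm
      rw [← lt_div_iff₀ hL0']
      exact hm
  refine squeeze_zero' (g := fun m => L^2 * h m)
    (Eventually.of_forall fun m => norm_nonneg _) (hev.mono fun m hm => ?_) ?_
  · rw [key m]
    refine cfc_dist (c := L^2 * h m) (mul_nonneg (sq_nonneg L) (hpos m).le) ?_ contlog
      fun x hx => ?_
    · apply ContinuousOn.mul continuousOn_const
      exact (contOn_rpow _ _ hspec).sub continuousOn_const
    · have hx0 : 0 < x := hspec x hx
      have hy : |Real.log x * h m| ≤ L * h m := by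
        rw [abs_mul, abs_of_pos (hpos m)]
        exact mul_le_mul_of_nonneg_right (hlog x hx) (hpos m).le
      have hy1 : |Real.log x * h m| ≤ 1 := by
        refine hy.trans ?_
        calc L * h m = h m * L := by ring
          _ ≤ 1 := hm.le
      have hexp := Real.abs_exp_sub_one_sub_id_le hy1
      rw [Real.rpow_def_of_pos hx0]
      have hhm : (0:ℝ) < h m := hpos m
      have expand : (h m)⁻¹ * (Real.exp (Real.log x * h m) - 1) - Real.log x
          = (h m)⁻¹ * (Real.exp (Real.log x * h m) - 1 - Real.log x * h m) := by
        field_simp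
      rw [expand, abs_mul, abs_inv, abs_of_pos hhm]
      calc (h m)⁻¹ * |Real.exp (Real.log x * h m) - 1 - Real.log x * h m|
          ≤ (h m)⁻¹ * (Real.log x * h m)^2 := by
            exact mul_le_mul_of_nonneg_left hexp (by positivity)
        _ ≤ (h m)⁻¹ * ((L * h m)^2) := by
            refine mul_le_mul_of_nonneg_left ?_ (by positivity)
            calc (Real.log x * h m)^2 = |Real.log x * h m|^2 := (sq_abs _).symm
              _ ≤ (L * h m)^2 := by
                  refine pow_le_pow_left₀ (_root_.abs_nonneg _) hy 2
        _ = L^2 * h m := by field_simp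
  · have : Tendsto (fun m => L^2 * h m) atTop (𝓝 (L^2 * 0)) := hto.const_mul _
    simpa using this

end ChaoticAux

namespace ChaoticAux

set_option linter.unusedSectionVars false

open Filter Topology

variable {A : Type*} [CStarAlgebra A] [PartialOrder A] [StarOrderedRing A] [Nontrivial A]

lemma dyadic_rpow_le {a b : A} (ha : 0 ≤ a) (hau : IsUnit a) (hb : 0 ≤ b) (hbu : IsUnit b)
    (hab : a ≤ b) : ∀ (m k : ℕ), k ≤ 2^m → a ^ ((k:ℝ)/2^m) ≤ b ^ ((k:ℝ)/2^m) := by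
  intro m
  induction m with
  | zero =>
    intro k hk
    interval_cases k
    · rw [show ((0:ℕ):ℝ)/2^(0:ℕ) = 0 by norm_num, rpow_zero a ha, rpow_zero b hb]
    · rw [show ((1:ℕ):ℝ)/2^(0:ℕ) = 1 by norm_num, rpow_one a ha, rpow_one b hb]
      exact hab
  | succ m ih =>
    intro k hk
    have hN : (2:ℕ)^(m+1) = 2 * 2^m := by ring
    rcases Nat.even_or_odd k with ⟨j, hj⟩ | ⟨j, hj⟩
    · have hj2 : j ≤ 2^m := by omega
      have he : ((k:ℝ))/2^(m+1) = (j:ℝ)/2^m := by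
        subst hj; push_cast; rw [pow_succ]; field_simp; ring
      rw [he]
      exact ih j hj2
    · have hj1 : j + 1 ≤ 2^m := by omega
      have h1 := ih j (by omega)
      have h2 := ih (j+1) hj1
      have hmid := midpoint_le ha hau hb hbu h1 h2
      have he : ((j:ℝ)/2^m + ((j+1:ℕ):ℝ)/2^m)/2 = (k:ℝ)/2^(m+1) := by
        subst hj; push_cast; rw [pow_succ]; field_simp; ring
      rwa [he] at hmid

lemma rpow_le_rpow_of_le {a b : A} (ha : 0 ≤ a) (hau : IsUnit a) (hb : 0 ≤ b) (hbu : IsUnit b)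
    (hab : a ≤ b) {r : ℝ} (hr0 : 0 ≤ r) (hr1 : r ≤ 1) : a ^ r ≤ b ^ r := by
  set u : ℕ → ℝ := fun m => (⌊r * 2^m⌋₊ : ℝ) / 2^m with hu
  have h2m : ∀ m : ℕ, (0:ℝ) < 2^m := fun m => by positivity
  have hfloor_le : ∀ m : ℕ, ⌊r * 2^m⌋₊ ≤ 2^m := by
    intro m
    have hle : r * 2^m ≤ (2^m : ℝ) := by
      calc r * 2^m ≤ 1 * 2^m := mul_le_mul_of_nonneg_right hr1 (h2m m).le
        _ = 2^m := one_mul _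
    calc ⌊r * 2^m⌋₊ ≤ ⌊(2^m : ℝ)⌋₊ := Nat.floor_le_floor hle
      _ = 2^m := by
          rw [show ((2:ℝ)^m) = ((2^m : ℕ) : ℝ) by push_cast; ring, Nat.floor_natCast]
  have key : ∀ m, a ^ u m ≤ b ^ u m := fun m =>
    dyadic_rpow_le ha hau hb hbu hab m _ (hfloor_le m)
  have hconv : Tendsto u atTop (𝓝 r) := by
    have upper : ∀ m, u m ≤ r := by
      intro m
      rw [hu]
      dsimp only
      rw [div_le_iff₀ (h2m m)]
      exact Nat.floor_le (by positivity)
    have lower : ∀ m, r - (1/2)^m ≤ u m := by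
      intro m
      rw [hu]
      dsimp only
      rw [le_div_iff₀ (h2m m)]
      have hf : r * 2^m < ⌊r * 2^m⌋₊ + 1 := Nat.lt_floor_add_one _
      have hone : ((1:ℝ)/2)^m * 2^m = 1 := by
        rw [← mul_pow]; norm_num
      nlinarith [hf, hone]
    have hlowto : Tendsto (fun m : ℕ => r - (1/2)^m) atTop (𝓝 r) := by
      have : Tendsto (fun m : ℕ => ((1:ℝ)/2)^m) atTop (𝓝 0) :=
        tendsto_pow_atTop_nhds_zero_of_lt_one (by norm_num) (by norm_num)
      simpa using (tendsto_const_nhds (x := r)).sub this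
    exact tendsto_of_tendsto_of_tendsto_of_le_of_le hlowto tendsto_const_nhds lower upper
  have ta := tendsto_rpow_exponent ha hau hconv
  have tb := tendsto_rpow_exponent hb hbu hconv
  have hmem : b ^ r - a ^ r ∈ {x : A | 0 ≤ x} := by
    refine (CStarAlgebra.isClosed_nonneg (A := A)).mem_of_tendsto (tb.sub ta) ?_
    exact Eventually.of_forall fun m => by
      simpa [Set.mem_setOf_eq, sub_nonneg] using key m
  simpa [Set.mem_setOf_eq, sub_nonneg] using hmem

lemma smul_nonneg' {x : A} (hx : 0 ≤ x) {c : ℝ} (hc : 0 ≤ c) : 0 ≤ c • x := by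
  have h := star_left_conjugate_nonneg hx (c := Real.sqrt c • (1:A))
  have hstar : star (Real.sqrt c • (1:A)) = Real.sqrt c • (1:A) := by
    simp [star_smul]
  rw [hstar] at h
  calc (0:A) ≤ (Real.sqrt c • (1:A)) * x * (Real.sqrt c • (1:A)) := h
    _ = c • x := by
        simp [smul_mul_assoc, mul_smul_comm, smul_smul, Real.mul_self_sqrt hc]

lemma log_le_log_of_rpow_le {a b : A} (ha : 0 ≤ a) (hau : IsUnit a) (hb : 0 ≤ b) (hbu : IsUnit b)
    {w : ℝ} (hw : 0 < w) (hab : a ^ w ≤ b ^ w) : CFC.log a ≤ CFC.log b := by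
  set h : ℕ → ℝ := fun m => w / (m+1) with hh
  have hpos : ∀ m, 0 < h m := fun m => by positivity
  have hto : Tendsto h atTop (𝓝 0) := by
    have h0 : Tendsto (fun m : ℕ => 1/((m:ℝ)+1)) atTop (𝓝 0) :=
      tendsto_one_div_add_atTop_nhds_zero_nat
    have := h0.const_mul w
    simpa [hh, div_eq_mul_inv] using this
  have key : ∀ m, a ^ h m ≤ b ^ h m := by
    intro m
    have hmem1 : (0:ℝ) ≤ 1/((m:ℝ)+1) := by positivity
    have hmem2 : 1/((m:ℝ)+1) ≤ 1 := by
      rw [div_le_one (by positivity)]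
      simp
    have lh' := rpow_le_rpow_of_le (a := a ^ w) (b := b ^ w) rpow_nonneg
      (isUnit_rpow ha hau w) rpow_nonneg (isUnit_rpow hb hbu w) hab hmem1 hmem2
    rwa [rpow_rpow' ha hau w _ (ne_of_gt hw), rpow_rpow' hb hbu w _ (ne_of_gt hw),
      show w * (1/((m:ℝ)+1)) = h m by rw [hh]; field_simp] at lh'
  have ta := tendsto_inv_smul_rpow_sub_one ha hau hpos hto
  have tb := tendsto_inv_smul_rpow_sub_one hb hbu hpos hto
  have hmem : CFC.log b - CFC.log a ∈ {x : A | 0 ≤ x} := by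
    refine (CStarAlgebra.isClosed_nonneg (A := A)).mem_of_tendsto (tb.sub ta) ?_
    refine Eventually.of_forall fun m => ?_
    simp only [Set.mem_setOf_eq, ← smul_sub]
    have he : (b ^ h m - 1) - (a ^ h m - 1) = b ^ h m - a ^ h m := by abel
    rw [he]
    exact smul_nonneg' (sub_nonneg.mpr (key m)) (inv_nonneg.mpr (hpos m).le)
  have := hmem
  simp only [Set.mem_setOf_eq, sub_nonneg] at this
  exact this

lemma rpow_flip {a b : A} (ha : 0 ≤ a) (hau : IsUnit a) (hb : 0 ≤ b) (hbu : IsUnit b)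
    {w : ℝ} (hle : b ^ (-w) ≤ a ^ (-w)) : a ^ w ≤ b ^ w := by
  have hbm : ∀ x y : ℝ, b ^ x * b ^ y = b ^ (x+y) := rpow_mul_rpow hb hbu
  have ham : ∀ x y : ℝ, a ^ x * a ^ y = a ^ (x+y) := rpow_mul_rpow ha hau
  set y : A := b ^ (-(w/2)) * a ^ (w/2) with hy
  have hsy : star y = a ^ (w/2) * b ^ (-(w/2)) := by
    rw [hy, star_mul, (sa_rpow (a := a) (w/2)).star_eq, (sa_rpow (a := b) (-(w/2))).star_eq]
  have h1 : a^(w/2) * b^(-w) * a^(w/2) ≤ a^(w/2) * a^(-w) * a^(w/2) :=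
    conj_le_conj _ (sa_rpow _) hle
  have h2 : a^(w/2) * a^(-w) * a^(w/2) = 1 := by
    rw [ham, ham, show w/2 + -w + w/2 = 0 by ring, rpow_zero a ha]
  have hpos1 : (0:A) ≤ a^(w/2) * b^(-w) * a^(w/2) := by
    have := star_left_conjugate_nonneg (a := b ^ (-w)) rpow_nonneg (c := a ^ (w/2))
    simpa [(sa_rpow (a := a) (w/2)).star_eq] using this
  have hn1 : ‖a^(w/2) * b^(-w) * a^(w/2)‖ ≤ 1 :=
    (CStarAlgebra.norm_le_one_iff_of_nonneg _ hpos1).mpr (h2 ▸ h1)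
  have hyy : star y * y = a^(w/2) * b^(-w) * a^(w/2) := by
    rw [hsy, hy, show a ^ (w/2) * b ^ (-(w/2)) * (b ^ (-(w/2)) * a ^ (w/2))
      = a ^ (w/2) * (b ^ (-(w/2)) * b ^ (-(w/2))) * a ^ (w/2) by simp only [mul_assoc], hbm,
      show -(w/2) + -(w/2) = -w by ring]
  have hny : ‖y‖ ≤ 1 := by
    have := hn1
    rw [← hyy, CStarRing.norm_star_mul_self] at this
    nlinarith [norm_nonneg y]
  have hyY : y * star y = b^(-(w/2)) * a^w * b^(-(w/2)) := by
    rw [hsy, hy, show b ^ (-(w/2)) * a ^ (w/2) * (a ^ (w/2) * b ^ (-(w/2)))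
      = b ^ (-(w/2)) * (a ^ (w/2) * a ^ (w/2)) * b ^ (-(w/2)) by simp only [mul_assoc], ham,
      show w/2 + w/2 = w by ring]
  have hn2 : ‖b^(-(w/2)) * a^w * b^(-(w/2))‖ ≤ 1 := by
    rw [← hyY, show y * star y = star (star y) * star y by rw [star_star],
      CStarRing.norm_star_mul_self, norm_star]
    nlinarith [norm_nonneg y]
  have hpos2 : (0:A) ≤ b^(-(w/2)) * a^w * b^(-(w/2)) := by
    have := star_left_conjugate_nonneg (a := a ^ w) rpow_nonneg (c := b ^ (-(w/2)))
    simpa [(sa_rpow (a := b) (-(w/2))).star_eq] using this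
  have h3 : b^(-(w/2)) * a^w * b^(-(w/2)) ≤ 1 :=
    (CStarAlgebra.norm_le_one_iff_of_nonneg _ hpos2).mp hn2
  have h4 := conj_le_conj (b ^ (w/2)) (sa_rpow _) h3
  calc a ^ w = b ^ (w/2) * (b^(-(w/2)) * a^w * b^(-(w/2))) * b ^ (w/2) := by
        rw [show b ^ (w/2) * (b^(-(w/2)) * a^w * b^(-(w/2))) * b ^ (w/2)
          = (b ^ (w/2) * b^(-(w/2))) * (a^w * (b^(-(w/2)) * b ^ (w/2))) by simp only [mul_assoc],
          hbm, hbm, show w/2 + -(w/2) = 0 by ring, show -(w/2) + w/2 = 0 by ring, rpow_zero b hb,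
          one_mul, mul_one]
    _ ≤ b ^ (w/2) * 1 * b ^ (w/2) := h4
    _ = b ^ w := by rw [mul_one, hbm, show w/2 + w/2 = w by ring]

end ChaoticAux

namespace ChaoticAux

set_option linter.unusedSectionVars false

lemma pqp_pow {M : Type*} [Monoid M] (p q : M) (k : ℕ) :
    (p*q*p)^(k+1) = p * (q*(p*p))^k * (q*p) := by
  induction k with
  | zero => simp [mul_assoc]
  | succ k ih =>
    rw [pow_succ, ih, pow_succ]
    simp only [mul_assoc]

variable {A : Type*} [CStarAlgebra A] [PartialOrder A] [StarOrderedRing A] [Nontrivial A]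

lemma main (a b : A) (ha : 0 ≤ a) (hau : IsUnit a) (hb : 0 ≤ b) (hbu : IsUnit b)
    (s t : ℝ) (n : ℕ) (hs : 0 < s) (hst : s < t) (hn : 2 ≤ n)
    (h : b ≤ (b ^ (s/(n:ℝ)) * (a ^ ((s-t)/(n:ℝ)) * b ^ (2*t/(n:ℝ))) ^ (n-1) * a ^ ((s-t)/(n:ℝ))
      * b ^ (s/(n:ℝ))) ^ ((n:ℝ)/(((n:ℝ)+2)*s+((n:ℝ)-2)*t)))
    (h1 : ((n:ℝ)+2)*s+((n:ℝ)-2)*t ≤ (n:ℝ)) : CFC.log a ≤ CFC.log b := by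
  have hn0 : (0:ℝ) < n := by
    have : (2:ℝ) ≤ n := by exact_mod_cast hn
    linarith
  set u : ℝ := ((n:ℝ)+2)*s+((n:ℝ)-2)*t with hudef
  have hu0 : 0 < u := by
    have h2n : (2:ℝ) ≤ n := by exact_mod_cast hn
    have : 0 ≤ ((n:ℝ)-2)*t := mul_nonneg (by linarith) (by linarith)
    nlinarith
  have hbm : ∀ x y : ℝ, b ^ x * b ^ y = b ^ (x+y) := rpow_mul_rpow hb hbu
  set p : A := b ^ (t/(n:ℝ)) with hp
  set q : A := a ^ ((s-t)/(n:ℝ)) with hq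
  have hp0 : 0 ≤ p := rpow_nonneg
  have hq0 : 0 ≤ q := rpow_nonneg
  have hpu : IsUnit p := isUnit_rpow hb hbu _
  have hqu : IsUnit q := isUnit_rpow ha hau _
  set D : A := p * q * p with hD
  have hD0 : 0 ≤ D := by
    have := star_left_conjugate_nonneg (a := q) hq0 (c := p)
    simpa [hD, (sa_rpow (a := b) (t/(n:ℝ))).star_eq, hp0.isSelfAdjoint.star_eq, mul_assoc] using this
  have hDu : IsUnit D := (hpu.mul hqu).mul hpu
  have hpp : p * p = b ^ (2*t/(n:ℝ)) := by
    rw [hp, hbm, show t/(n:ℝ) + t/(n:ℝ) = 2*t/(n:ℝ) by ring]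
  set Cx : A := b ^ (s/(n:ℝ)) * (q * b ^ (2*t/(n:ℝ))) ^ (n-1) * q * b ^ (s/(n:ℝ)) with hCx
  -- key identity
  have hCD : Cx = b ^ ((s-t)/(n:ℝ)) * D^n * b ^ ((s-t)/(n:ℝ)) := by
    have hn1 : n - 1 + 1 = n := by omega
    have hDn : D^n = p * (q * b ^ (2*t/(n:ℝ))) ^ (n-1) * (q * p) := by
      rw [← hpp, hD, ← pqp_pow p q (n-1), hn1]
    rw [hDn, hCx]
    have e1 : b ^ ((s-t)/(n:ℝ)) * p = b ^ (s/(n:ℝ)) := by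
      rw [hp, hbm, show (s-t)/(n:ℝ) + t/(n:ℝ) = s/(n:ℝ) by ring]
    have e2 : p * b ^ ((s-t)/(n:ℝ)) = b ^ (s/(n:ℝ)) := by
      rw [hp, hbm, show t/(n:ℝ) + (s-t)/(n:ℝ) = s/(n:ℝ) by ring]
    calc b ^ (s/(n:ℝ)) * (q * b ^ (2*t/(n:ℝ))) ^ (n-1) * q * b ^ (s/(n:ℝ))
        = b ^ (s/(n:ℝ)) * ((q * b ^ (2*t/(n:ℝ))) ^ (n-1) * (q * (p * b ^ ((s-t)/(n:ℝ))))) := by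
          rw [e2]; simp only [mul_assoc]
      _ = (b ^ ((s-t)/(n:ℝ)) * p) * ((q * b ^ (2*t/(n:ℝ))) ^ (n-1) * (q * (p * b ^ ((s-t)/(n:ℝ))))) := by
          rw [e1]
      _ = b ^ ((s-t)/(n:ℝ)) * (p * (q * b ^ (2*t/(n:ℝ))) ^ (n-1) * (q * p)) * b ^ ((s-t)/(n:ℝ)) := by
          simp only [mul_assoc]
  have hCx0 : 0 ≤ Cx := by
    rw [hCD]
    have hDn0 : 0 ≤ D^n := CStarAlgebra.pow_nonneg hD0 n
    have := star_left_conjugate_nonneg (a := D^n) hDn0 (c := b ^ ((s-t)/(n:ℝ)))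
    simpa [(sa_rpow (a := b) ((s-t)/(n:ℝ))).star_eq] using this
  have hCxu : IsUnit Cx := by
    rw [hCD]
    exact ((isUnit_rpow hb hbu _).mul (hDu.pow n)).mul (isUnit_rpow hb hbu _)
  -- Step 1 : b ^ (u/n) ≤ Cx
  have step1 : b ^ (u/(n:ℝ)) ≤ Cx := by
    have hr0 : (0:ℝ) ≤ u/(n:ℝ) := le_of_lt (div_pos hu0 hn0)
    have hr1 : u/(n:ℝ) ≤ 1 := by
      rw [div_le_one hn0]; exact h1
    have := rpow_le_rpow_of_le hb hbu (rpow_nonneg) (isUnit_rpow hCx0 hCxu _) h hr0 hr1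
    rwa [rpow_rpow' hCx0 hCxu _ _ (ne_of_gt (div_pos hn0 hu0)),
      show (n:ℝ)/u * (u/(n:ℝ)) = 1 by field_simp, rpow_one Cx hCx0] at this
  -- Step 2 : b ^ (s+t) ≤ D ^ n
  have step2 : b ^ (s+t) ≤ D^n := by
    have hconj := conj_le_conj (b ^ ((t-s)/(n:ℝ))) (sa_rpow _) step1
    have eL : b ^ ((t-s)/(n:ℝ)) * b ^ (u/(n:ℝ)) * b ^ ((t-s)/(n:ℝ)) = b ^ (s+t) := by
      rw [hbm, hbm, hudef, show (t-s)/(n:ℝ) + (((n:ℝ)+2)*s+((n:ℝ)-2)*t)/(n:ℝ) + (t-s)/(n:ℝ)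
        = s+t by field_simp; ring]
    have eR : b ^ ((t-s)/(n:ℝ)) * Cx * b ^ ((t-s)/(n:ℝ)) = D^n := by
      rw [hCD, show b ^ ((t-s)/(n:ℝ)) * (b ^ ((s-t)/(n:ℝ)) * D^n * b ^ ((s-t)/(n:ℝ))) * b ^ ((t-s)/(n:ℝ))
        = (b ^ ((t-s)/(n:ℝ)) * b ^ ((s-t)/(n:ℝ))) * D^n * (b ^ ((s-t)/(n:ℝ)) * b ^ ((t-s)/(n:ℝ))) by
          simp only [mul_assoc], hbm, hbm, show (t-s)/(n:ℝ) + (s-t)/(n:ℝ) = 0 by ring,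
        show (s-t)/(n:ℝ) + (t-s)/(n:ℝ) = 0 by ring, rpow_zero b hb, one_mul, mul_one]
    rwa [eL, eR] at hconj
  -- Step 3 : b ^ ((s+t)/n) ≤ D
  have step3 : b ^ ((s+t)/(n:ℝ)) ≤ D := by
    have hDn0 : 0 ≤ D^n := CStarAlgebra.pow_nonneg hD0 n
    have := rpow_le_rpow_of_le rpow_nonneg (isUnit_rpow hb hbu _) hDn0 (hDu.pow n) step2
      (r := 1/(n:ℝ)) (by positivity) (by rw [div_le_one hn0]; exact_mod_cast Nat.one_le_iff_ne_zero.mpr (by omega))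
    rwa [rpow_rpow' hb hbu _ _ (ne_of_gt (by linarith : (0:ℝ) < s+t)),
      show (s+t) * (1/(n:ℝ)) = (s+t)/(n:ℝ) by ring,
      ← rpow_natCast D n hD0, rpow_rpow' hD0 hDu _ _ (by positivity : (n:ℝ) ≠ 0),
      show (n:ℝ) * (1/(n:ℝ)) = 1 by field_simp, rpow_one D hD0] at this
  -- Step 4 : b ^ ((s-t)/n) ≤ q
  have step4 : b ^ ((s-t)/(n:ℝ)) ≤ q := by
    have hconj := conj_le_conj (b ^ (-(t/(n:ℝ)))) (sa_rpow _) step3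
    have eL : b ^ (-(t/(n:ℝ))) * b ^ ((s+t)/(n:ℝ)) * b ^ (-(t/(n:ℝ))) = b ^ ((s-t)/(n:ℝ)) := by
      rw [hbm, hbm, show -(t/(n:ℝ)) + (s+t)/(n:ℝ) + -(t/(n:ℝ)) = (s-t)/(n:ℝ) by ring]
    have eR : b ^ (-(t/(n:ℝ))) * D * b ^ (-(t/(n:ℝ))) = q := by
      rw [hD, hp, show b ^ (-(t/(n:ℝ))) * (b ^ (t/(n:ℝ)) * q * b ^ (t/(n:ℝ))) * b ^ (-(t/(n:ℝ)))
        = (b ^ (-(t/(n:ℝ))) * b ^ (t/(n:ℝ))) * q * (b ^ (t/(n:ℝ)) * b ^ (-(t/(n:ℝ)))) by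
          simp only [mul_assoc], hbm, hbm, show -(t/(n:ℝ)) + t/(n:ℝ) = 0 by ring,
        show t/(n:ℝ) + -(t/(n:ℝ)) = 0 by ring, rpow_zero b hb, one_mul, mul_one]
    rwa [eL, eR] at hconj
  -- Step 5 : a ^ ((t-s)/n) ≤ b ^ ((t-s)/n)
  have step5 : a ^ ((t-s)/(n:ℝ)) ≤ b ^ ((t-s)/(n:ℝ)) := by
    refine rpow_flip ha hau hb hbu ?_
    rwa [show -((t-s)/(n:ℝ)) = (s-t)/(n:ℝ) by ring, ← hq]
  -- Step 6
  exact log_le_log_of_rpow_le ha hau hb hbu (div_pos (by linarith) hn0) step5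

end ChaoticAux



variable {H : Type*} [NormedAddCommGroup H] [InnerProductSpace ℂ H] [CompleteSpace H]

theorem stmt9 (A B : H →L[ℂ] H) (hA : 0 ≤ A) (hAu : IsUnit A) (hB : 0 ≤ B) (hBu : IsUnit B) (s t : ℝ) (n : ℕ)
    (hs : 0 < s) (hst : s < t) (hn : 2 ≤ n)
    (h : (B ^ (s/(n:ℝ)) * (A ^ ((s-t)/(n:ℝ)) * B ^ (2*t/(n:ℝ))) ^ (n-1) * A ^ ((s-t)/(n:ℝ)) * B ^ (s/(n:ℝ))) ^ ((n:ℝ)/(((n:ℝ)+2)*s+((n:ℝ)-2)*t)) ≥ B)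
    (h1 : ((n:ℝ)+2)*s+((n:ℝ)-2)*t ≤ (n:ℝ)) :
    CFC.log B ≥ CFC.log A := by
  rcases subsingleton_or_nontrivial (H →L[ℂ] H) with hsub | hnt
  · exact le_of_eq (Subsingleton.elim _ _)
  · exact ChaoticAux.main A B hA hAu hB hBu s t n hs hst hn h h1
end

section
/- Let A, B be positive invertible bounded linear operators on a Hilbert space, let t > s > 0 and n ≥ 2 a natural number, and suppose C^{n/((n+2)s+(n-2)t)} ≥ B, where C = B^{s/n} (A^{(s-t)/n} B^{2t/n})^{n-1} A^{(s-t)/n} B^{s/n}. If (n+2)s + (n-2)t ≤ n and t - s ≥ n, then B ≥ A. -/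
open CFC

open scoped NNReal ENNReal

section Stmt10Aux

set_option linter.unusedSectionVars false

variable {A : Type*} [CStarAlgebra A] [Nontrivial A] [PartialOrder A] [StarOrderedRing A]

namespace Stmt10Aux

lemma zns {a : A} (hau : IsUnit a) : (0 : ℝ≥0) ∉ spectrum ℝ≥0 a :=
  spectrum.zero_notMem ℝ≥0 hau

lemma rpow_isUnit {a : A} (hau : IsUnit a) (r : ℝ) (ha : 0 ≤ a := by cfc_tac) :
    IsUnit (a ^ r) :=
  ⟨⟨a ^ r, a ^ (-r), CFC.rpow_mul_rpow_neg r (hau.isStrictlyPositive ha), CFC.rpow_neg_mul_rpow r (hau.isStrictlyPositive ha)⟩, rfl⟩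

lemma rpow_sa {a : A} (r : ℝ) : IsSelfAdjoint (a ^ r) :=
  IsSelfAdjoint.of_nonneg rpow_nonneg

lemma rmul {a : A} (hau : IsUnit a) (x y : ℝ) (ha : 0 ≤ a := by cfc_tac) :
    a ^ x * a ^ y = a ^ (x + y) := (CFC.rpow_add hau).symm

lemma rmul' {a : A} (hau : IsUnit a) (x y : ℝ) (z : A) (ha : 0 ≤ a := by cfc_tac) :
    a ^ x * (a ^ y * z) = a ^ (x + y) * z := by
  rw [← mul_assoc, rmul hau x y]

/-- Conjugation by `a ^ u` and then by `a ^ (-u)` cancels. -/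
lemma conj_cancel {a : A} (hau : IsUnit a) (u : ℝ) (z : A) (ha : 0 ≤ a := by cfc_tac) :
    a ^ (-u) * (a ^ u * z * a ^ u) * a ^ (-u) = z := by
  have h1 : a ^ (-u) * a ^ u = 1 := CFC.rpow_neg_mul_rpow u (hau.isStrictlyPositive ha)
  have h2 : a ^ u * a ^ (-u) = 1 := CFC.rpow_mul_rpow_neg u (hau.isStrictlyPositive ha)
  calc a ^ (-u) * (a ^ u * z * a ^ u) * a ^ (-u)
      = (a ^ (-u) * a ^ u) * z * (a ^ u * a ^ (-u)) := by
        simp only [mul_assoc]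
    _ = z := by rw [h1, h2, one_mul, mul_one]

lemma conj_le_conj_iff {a : A} (hau : IsUnit a) (ha : 0 ≤ a) (u : ℝ) {y z : A} :
    a ^ u * y * a ^ u ≤ a ^ u * z * a ^ u ↔ y ≤ z := by
  constructor
  · intro h
    have := (rpow_sa (a := a) (-u)).conjugate_le_conjugate h
    rwa [conj_cancel hau u y, conj_cancel hau u z] at this
  · intro h
    exact (rpow_sa (a := a) u).conjugate_le_conjugate h

lemma star_mul_self_le_one_iff (x : A) : star x * x ≤ 1 ↔ ‖x‖ ≤ 1 := by
  rw [← CStarAlgebra.norm_le_one_iff_of_nonneg _ (star_mul_self_nonneg x),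
      CStarRing.norm_star_mul_self]
  constructor <;> intro h <;> nlinarith [norm_nonneg x]

lemma mul_star_self_le_one_iff (x : A) : x * star x ≤ 1 ↔ ‖x‖ ≤ 1 := by
  simpa [norm_star] using star_mul_self_le_one_iff (star x)

/-- The basic bridge: `a ^ r ≤ b ^ r` iff a certain product is a contraction. -/
lemma rpow_le_rpow_iff_norm {a b : A} (ha : 0 ≤ a) (hb : 0 ≤ b)
    (hau : IsUnit a) (hbu : IsUnit b) (r : ℝ) :
    a ^ r ≤ b ^ r ↔ ‖a ^ (r / 2) * b ^ (-(r / 2))‖ ≤ 1 := by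
  rw [← star_mul_self_le_one_iff]
  have e1 : star (a ^ (r / 2) * b ^ (-(r / 2))) * (a ^ (r / 2) * b ^ (-(r / 2)))
      = b ^ (-(r / 2)) * a ^ r * b ^ (-(r / 2)) := by
    rw [star_mul, (rpow_sa (r / 2)).star_eq, (rpow_sa (-(r / 2))).star_eq]
    calc b ^ (-(r / 2)) * a ^ (r / 2) * (a ^ (r / 2) * b ^ (-(r / 2)))
        = b ^ (-(r / 2)) * (a ^ (r / 2) * a ^ (r / 2)) * b ^ (-(r / 2)) := by
          simp only [mul_assoc]
      _ = b ^ (-(r / 2)) * a ^ r * b ^ (-(r / 2)) := by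
          rw [rmul hau]; norm_num
  rw [e1]
  have e2 : b ^ (-(r / 2)) * b ^ r * b ^ (-(r / 2)) = 1 := by
    rw [rmul hbu, rmul hbu, show -(r / 2) + r + -(r / 2) = 0 by ring, CFC.rpow_zero b]
  constructor
  · intro h
    calc b ^ (-(r / 2)) * a ^ r * b ^ (-(r / 2))
        ≤ b ^ (-(r / 2)) * b ^ r * b ^ (-(r / 2)) := (conj_le_conj_iff hbu hb _).mpr h
      _ = 1 := e2
  · intro h
    have h' : b ^ (-(r / 2)) * a ^ r * b ^ (-(r / 2)) ≤ b ^ (-(r / 2)) * b ^ r * b ^ (-(r / 2)) :=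
      e2 ▸ h
    exact (conj_le_conj_iff hbu hb _).mp h'

lemma norm_swap {a b : A} (x y : ℝ) :
    ‖a ^ x * b ^ y‖ = ‖b ^ y * a ^ x‖ := by
  conv_lhs => rw [← norm_star, star_mul, (rpow_sa x).star_eq, (rpow_sa y).star_eq]

lemma le_sr {z : A} {k : ℂ} (hk : k ∈ spectrum ℂ z) : (‖k‖₊ : ℝ≥0∞) ≤ spectralRadius ℂ z :=
  le_iSup₂ (f := fun (k : ℂ) (_ : k ∈ spectrum ℂ z) => (‖k‖₊ : ℝ≥0∞)) k hk

lemma sr_swap (x y : A) : spectralRadius ℂ (x * y) ≤ spectralRadius ℂ (y * x) := by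
  refine iSup₂_le fun k hk => ?_
  rcases eq_or_ne k 0 with rfl | hk0
  · simp
  · exact le_sr ((spectrum.unit_mem_mul_comm (r := Units.mk0 k hk0)).mp hk)

lemma sr_conj (w : A) (v : Aˣ) : spectralRadius ℂ (↑v * w * ↑v⁻¹) = spectralRadius ℂ w := by
  unfold spectralRadius
  rw [spectrum.units_conjugate]

/-- Midpoint step for the Löwner–Heinz theorem. -/
lemma midpoint {a b : A} (ha : 0 ≤ a) (hb : 0 ≤ b) (hau : IsUnit a) (hbu : IsUnit b)
    {r₁ r₂ : ℝ} (h₁ : a ^ r₁ ≤ b ^ r₁) (h₂ : a ^ r₂ ≤ b ^ r₂) :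
    a ^ ((r₁ + r₂) / 2) ≤ b ^ ((r₁ + r₂) / 2) := by
  set m : ℝ := (r₁ + r₂) / 2 with hm
  -- contraction facts
  have n₂ : ‖a ^ (r₂ / 2) * b ^ (-(r₂ / 2))‖ ≤ 1 :=
    (rpow_le_rpow_iff_norm ha hb hau hbu r₂).mp h₂
  have n₁ : ‖b ^ (-(r₁ / 2)) * a ^ (r₁ / 2)‖ ≤ 1 := by
    rw [← norm_swap]; exact (rpow_le_rpow_iff_norm ha hb hau hbu r₁).mp h₁
  -- the conjugated element
  set u : A := b ^ (-(m / 2)) * a ^ m * b ^ (-(m / 2)) with hu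
  have hu0 : 0 ≤ u := by
    have := star_left_conjugate_nonneg (rpow_nonneg (a := a) (y := m)) (b ^ (-(m / 2)))
    rwa [(rpow_sa (-(m / 2))).star_eq] at this
  -- the unit v = b ^ (-(m/2))
  set v : Aˣ := ⟨b ^ (-(m / 2)), b ^ (m / 2),
    CFC.rpow_neg_mul_rpow (m / 2) (hbu.isStrictlyPositive hb), CFC.rpow_mul_rpow_neg (m / 2) (hbu.isStrictlyPositive hb)⟩ with hv
  have hvc : (↑v : A) = b ^ (-(m / 2)) := rfl
  have hvc' : (↑v⁻¹ : A) = b ^ (m / 2) := rfl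
  have keyconj : u = ↑v * (a ^ m * b ^ (-m)) * ↑v⁻¹ := by
    rw [hvc, hvc', hu]
    have e : b ^ (-m) * b ^ (m / 2) = b ^ (-(m / 2)) := by
      rw [rmul hbu]; congr 1; ring
    calc b ^ (-(m / 2)) * a ^ m * b ^ (-(m / 2))
        = b ^ (-(m / 2)) * a ^ m * (b ^ (-m) * b ^ (m / 2)) := by rw [e]
      _ = b ^ (-(m / 2)) * (a ^ m * b ^ (-m)) * b ^ (m / 2) := by
          simp only [mul_assoc]
  -- split a^m b^{-m} = a^{r₁/2} * (a^{r₂/2} * b^{-m})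
  have split : a ^ m * b ^ (-m) = a ^ (r₁ / 2) * (a ^ (r₂ / 2) * b ^ (-m)) := by
    rw [rmul' hau, show r₁ / 2 + r₂ / 2 = m by rw [hm]; ring]
  have splitb : a ^ (r₂ / 2) * b ^ (-m) * a ^ (r₁ / 2)
      = (a ^ (r₂ / 2) * b ^ (-(r₂ / 2))) * (b ^ (-(r₁ / 2)) * a ^ (r₁ / 2)) := by
    have : b ^ (-m) = b ^ (-(r₂ / 2)) * b ^ (-(r₁ / 2)) := by
      rw [rmul hbu, show -(r₂ / 2) + -(r₁ / 2) = -m by rw [hm]; ring]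
    rw [this]
    simp only [mul_assoc]
  -- spectral radius chain
  have husa : IsSelfAdjoint u := IsSelfAdjoint.of_nonneg hu0
  have chain : (‖u‖₊ : ℝ≥0∞) ≤ (‖a ^ (r₂ / 2) * b ^ (-m) * a ^ (r₁ / 2)‖₊ : ℝ≥0∞) := by
    calc (‖u‖₊ : ℝ≥0∞) = spectralRadius ℂ u := husa.spectralRadius_eq_nnnorm.symm
      _ = spectralRadius ℂ (a ^ m * b ^ (-m)) := by rw [keyconj, sr_conj]
      _ = spectralRadius ℂ (a ^ (r₁ / 2) * (a ^ (r₂ / 2) * b ^ (-m))) := by rw [split]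
      _ ≤ spectralRadius ℂ ((a ^ (r₂ / 2) * b ^ (-m)) * a ^ (r₁ / 2)) := sr_swap _ _
      _ ≤ _ := by
          have := spectrum.spectralRadius_le_nnnorm (𝕜 := ℂ)
            (a ^ (r₂ / 2) * b ^ (-m) * a ^ (r₁ / 2))
          simpa [mul_assoc] using this
  have hnu : ‖u‖ ≤ 1 := by
    have h1 : ‖u‖₊ ≤ ‖a ^ (r₂ / 2) * b ^ (-m) * a ^ (r₁ / 2)‖₊ := by exact_mod_cast chain
    have h2 : ‖a ^ (r₂ / 2) * b ^ (-m) * a ^ (r₁ / 2)‖ ≤ 1 := by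
      rw [splitb]
      calc ‖(a ^ (r₂ / 2) * b ^ (-(r₂ / 2))) * (b ^ (-(r₁ / 2)) * a ^ (r₁ / 2))‖
          ≤ ‖a ^ (r₂ / 2) * b ^ (-(r₂ / 2))‖ * ‖b ^ (-(r₁ / 2)) * a ^ (r₁ / 2)‖ := norm_mul_le _ _
        _ ≤ 1 * 1 := mul_le_mul n₂ n₁ (norm_nonneg _) zero_le_one
        _ = 1 := by norm_num
    calc ‖u‖ = (‖u‖₊ : ℝ) := rfl
      _ ≤ ‖a ^ (r₂ / 2) * b ^ (-m) * a ^ (r₁ / 2)‖ := by exact_mod_cast h1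
      _ ≤ 1 := h2
  -- conclude
  have hule : u ≤ 1 := (CStarAlgebra.norm_le_one_iff_of_nonneg u hu0).mp hnu
  have := (rpow_sa (a := b) (m / 2)).conjugate_le_conjugate hule
  have e1 : b ^ (m / 2) * u * b ^ (m / 2) = a ^ m := by
    rw [hu]
    have := conj_cancel hbu (-(m / 2)) (a ^ m) hb
    rwa [neg_neg] at this
  have e2 : b ^ (m / 2) * 1 * b ^ (m / 2) = b ^ m := by
    rw [mul_one, rmul hbu]; norm_num
  rw [e1, e2] at this
  exact this

lemma dyadic {a b : A} (ha : 0 ≤ a) (hb : 0 ≤ b) (hau : IsUnit a) (hbu : IsUnit b)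
    (hab : a ≤ b) : ∀ n : ℕ, ∀ k : ℕ, k ≤ 2 ^ n →
      a ^ ((k : ℝ) / 2 ^ n) ≤ b ^ ((k : ℝ) / 2 ^ n) := by
  intro n
  induction n with
  | zero =>
    intro k hk
    interval_cases k
    · norm_num [CFC.rpow_zero a, CFC.rpow_zero b]
    · norm_num [CFC.rpow_one a, CFC.rpow_one b, hab]
  | succ n ih =>
    intro k hk
    rcases Nat.even_or_odd k with ⟨j, hj⟩ | ⟨j, hj⟩
    · have e : (k : ℝ) / 2 ^ (n + 1) = (j : ℝ) / 2 ^ n := by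
        subst hj; push_cast; ring
      rw [e]
      exact ih j (by omega)
    · have hj1 : j + 1 ≤ 2 ^ n := by omega
      have e : (k : ℝ) / 2 ^ (n + 1) = ((j : ℝ) / 2 ^ n + ((j + 1 : ℕ) : ℝ) / 2 ^ n) / 2 := by
        subst hj; push_cast; ring
      rw [e]
      exact midpoint ha hb hau hbu (ih j (by omega)) (ih (j + 1) hj1)

lemma norm_rpow_le {c : A} (hc : 0 ≤ c) {d : ℝ} (hd : 0 ≤ d) {M : ℝ} (hM : 1 ≤ M)
    (hcM : ‖c‖ ≤ M) : ‖c ^ d‖ ≤ M ^ d := by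
  have key : ‖c ^ d‖₊ ≤ ‖c‖₊ ^ d := by
    have : c ^ d ≤ algebraMap ℝ≥0 A (‖c‖₊ ^ d) := by
      rw [CFC.rpow_def, ← cfc_const (‖c‖₊ ^ d) c]
      exact cfc_mono fun x hx => NNReal.rpow_le_rpow (spectrum.le_nnnorm_of_mem hx) hd
    exact (CStarAlgebra.nnnorm_le_iff_of_nonneg _ _ rpow_nonneg).mpr this
  have h1 : ‖c ^ d‖ ≤ ‖c‖ ^ d := by
    have := NNReal.coe_le_coe.mpr key
    rwa [NNReal.coe_rpow] at this
  exact h1.trans (Real.rpow_le_rpow (norm_nonneg c) hcM hd)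

/-- Löwner–Heinz theorem for positive invertible elements. -/
theorem loewner_heinz {a b : A} (ha : 0 ≤ a) (hb : 0 ≤ b) (hau : IsUnit a) (hbu : IsUnit b)
    (hab : a ≤ b) {r : ℝ} (hr0 : 0 ≤ r) (hr1 : r ≤ 1) : a ^ r ≤ b ^ r := by
  rw [rpow_le_rpow_iff_norm ha hb hau hbu]
  -- the inverse element of a, positive with norm bound
  have hainv : (0 : A) ≤ ↑hau.unit⁻¹ := by
    rw [← CFC.rpow_neg_one_eq_inv hau.unit (by simpa using ha)]
    exact rpow_nonneg
  set Ka : ℝ := max ‖(↑hau.unit⁻¹ : A)‖ 1 with hKa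
  set Kb : ℝ := max ‖b‖ 1 with hKb
  have hKa1 : 1 ≤ Ka := le_max_right _ _
  have hKb1 : 1 ≤ Kb := le_max_right _ _
  set K : ℝ := Ka * Kb with hK
  have hK1 : 1 ≤ K := by
    rw [hK]; nlinarith
  -- main bound for each n
  have main : ∀ n : ℕ, ‖a ^ (r / 2) * b ^ (-(r / 2))‖ ≤ K ^ ((1 : ℝ) / 2 ^ n) := by
    intro n
    set k : ℕ := ⌈r * 2 ^ n⌉₊ with hk
    have hk2 : k ≤ 2 ^ n := by
      rw [hk]
      refine Nat.ceil_le.mpr ?_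
      calc r * 2 ^ n ≤ 1 * 2 ^ n := by
            apply mul_le_mul_of_nonneg_right hr1 (by positivity)
        _ = ((2 ^ n : ℕ) : ℝ) := by push_cast; ring
    set r' : ℝ := (k : ℝ) / 2 ^ n with hr'
    have hrr' : r ≤ r' := by
      rw [hr', hk]
      rw [le_div_iff₀ (by positivity)]
      exact Nat.le_ceil _
    have hr'r : r' ≤ r + 1 / 2 ^ n := by
      rw [hr', hk]
      rw [div_le_iff₀ (by positivity)]
      calc (⌈r * 2 ^ n⌉₊ : ℝ) ≤ r * 2 ^ n + 1 := by
            have := Nat.ceil_lt_add_one (by positivity : (0:ℝ) ≤ r * 2 ^ n)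
            exact this.le
        _ = (r + 1 / 2 ^ n) * 2 ^ n := by
            have h2n : (2:ℝ) ^ n ≠ 0 := by positivity
            field_simp
    set d : ℝ := (r' - r) / 2 with hd
    have hd0 : 0 ≤ d := by rw [hd]; linarith
    have hd1 : d ≤ 1 / 2 ^ n := by
      rw [hd]
      have h2n : (0:ℝ) < 2 ^ n := by positivity
      nlinarith [hr'r]
    -- dyadic contraction
    have hdyad : a ^ r' ≤ b ^ r' := dyadic ha hb hau hbu hab n k hk2
    have hnd : ‖a ^ (r' / 2) * b ^ (-(r' / 2))‖ ≤ 1 :=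
      (rpow_le_rpow_iff_norm ha hb hau hbu r').mp hdyad
    -- decompose
    have dec : a ^ (r / 2) * b ^ (-(r / 2))
        = a ^ (-d) * (a ^ (r' / 2) * b ^ (-(r' / 2))) * b ^ d := by
      have e1 : a ^ (-d) * a ^ (r' / 2) = a ^ (r / 2) := by
        rw [rmul hau, show -d + r' / 2 = r / 2 by rw [hd]; ring]
      have e2 : b ^ (-(r' / 2)) * b ^ d = b ^ (-(r / 2)) := by
        rw [rmul hbu, show -(r' / 2) + d = -(r / 2) by rw [hd]; ring]
      calc a ^ (r / 2) * b ^ (-(r / 2))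
          = (a ^ (-d) * a ^ (r' / 2)) * (b ^ (-(r' / 2)) * b ^ d) := by rw [e1, e2]
        _ = a ^ (-d) * (a ^ (r' / 2) * b ^ (-(r' / 2))) * b ^ d := by
            simp only [mul_assoc]
    -- norms of the small factors
    have hna : ‖a ^ (-d)‖ ≤ Ka ^ d := by
      have e : a ^ (-d) = (↑hau.unit⁻¹ : A) ^ d := by
        have := CFC.rpow_neg hau.unit d (by simpa using ha)
        simpa using this
      rw [e]
      exact norm_rpow_le hainv hd0 hKa1 (le_max_left _ _)
    have hnb : ‖b ^ d‖ ≤ Kb ^ d := norm_rpow_le hb hd0 hKb1 (le_max_left _ _)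
    -- combine
    calc ‖a ^ (r / 2) * b ^ (-(r / 2))‖
        = ‖a ^ (-d) * (a ^ (r' / 2) * b ^ (-(r' / 2))) * b ^ d‖ := by rw [dec]
      _ ≤ ‖a ^ (-d) * (a ^ (r' / 2) * b ^ (-(r' / 2)))‖ * ‖b ^ d‖ := norm_mul_le _ _
      _ ≤ (‖a ^ (-d)‖ * ‖a ^ (r' / 2) * b ^ (-(r' / 2))‖) * ‖b ^ d‖ := by
          apply mul_le_mul_of_nonneg_right (norm_mul_le _ _) (norm_nonneg _)
      _ ≤ (Ka ^ d * 1) * Kb ^ d := by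
          apply mul_le_mul _ hnb (norm_nonneg _) (by positivity)
          exact mul_le_mul hna hnd (norm_nonneg _) (by positivity)
      _ = (Ka * Kb) ^ d := by
          rw [mul_one, ← Real.mul_rpow (by linarith) (by linarith)]
      _ ≤ K ^ ((1 : ℝ) / 2 ^ n) := by
          rw [hK]
          exact Real.rpow_le_rpow_of_exponent_le hK1 hd1
  -- limit as n → ∞
  have hKpos : (0 : ℝ) < K := by linarith
  have htend : Filter.Tendsto (fun n : ℕ => K ^ ((1 : ℝ) / 2 ^ n)) Filter.atTop (nhds 1) := by
    have h1 : Filter.Tendsto (fun n : ℕ => (1 : ℝ) / 2 ^ n) Filter.atTop (nhds 0) := by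
      have := tendsto_pow_atTop_nhds_zero_of_lt_one
        (by norm_num : (0:ℝ) ≤ 1/2) (by norm_num : (1:ℝ)/2 < 1)
      simpa [div_pow] using this
    have h2 : ContinuousAt (fun x : ℝ => K ^ x) 0 := by
      have : (fun x : ℝ => K ^ x) = fun x : ℝ => Real.exp (Real.log K * x) := by
        funext x
        rw [Real.rpow_def_of_pos hKpos]
      rw [this]
      exact (Real.continuous_exp.comp (continuous_const.mul continuous_id)).continuousAt
    have := h2.tendsto.comp h1
    simpa [Real.rpow_natCast, Function.comp_def] using this
  exact ge_of_tendsto htend (Filter.Eventually.of_forall main)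

/-- From `b ^ (-c) ≤ a ^ (-c)` conclude `a ^ c ≤ b ^ c`. -/
lemma rpow_le_rpow_of_neg {a b : A} (ha : 0 ≤ a) (hb : 0 ≤ b)
    (hau : IsUnit a) (hbu : IsUnit b) {c : ℝ} (h : b ^ (-c) ≤ a ^ (-c)) : a ^ c ≤ b ^ c := by
  rw [rpow_le_rpow_iff_norm ha hb hau hbu, ← norm_star, star_mul,
    (rpow_sa (c / 2)).star_eq, (rpow_sa (-(c / 2))).star_eq]
  have h0 := (rpow_le_rpow_iff_norm hb ha hbu hau (-c)).mp h
  have e1 : (-c : ℝ) / 2 = -(c / 2) := by ring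
  have e2 : (-((-c : ℝ) / 2)) = c / 2 := by ring
  rwa [e2, e1] at h0

end Stmt10Aux

end Stmt10Aux

open Stmt10Aux

variable {H : Type*} [NormedAddCommGroup H] [InnerProductSpace ℂ H] [CompleteSpace H]

set_option maxHeartbeats 2000000 in
theorem stmt10 (A B : H →L[ℂ] H) (hA : 0 ≤ A) (hAu : IsUnit A) (hB : 0 ≤ B) (hBu : IsUnit B) (s t : ℝ) (n : ℕ)
    (hs : 0 < s) (hst : s < t) (hn : 2 ≤ n)
    (h : (B ^ (s/(n:ℝ)) * (A ^ ((s-t)/(n:ℝ)) * B ^ (2*t/(n:ℝ))) ^ (n-1) * A ^ ((s-t)/(n:ℝ)) * B ^ (s/(n:ℝ))) ^ ((n:ℝ)/(((n:ℝ)+2)*s+((n:ℝ)-2)*t)) ≥ B)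
    (h1 : ((n:ℝ)+2)*s+((n:ℝ)-2)*t ≤ (n:ℝ)) (h3 : (n:ℝ) ≤ t - s) :
    B ≥ A := by
  -- only n = 2 is consistent with the numeric hypotheses
  rcases eq_or_lt_of_le hn with hn2 | hn3
  swap
  · exfalso
    have hn3' : (3 : ℝ) ≤ (n : ℝ) := by exact_mod_cast hn3
    have hst' : s + (n:ℝ) ≤ t := by linarith
    have key : ((n:ℝ) - 2) * (s + n) ≤ ((n:ℝ) - 2) * t :=
      mul_le_mul_of_nonneg_left hst' (by linarith)
    nlinarith [key, h1, hs, hn3', mul_pos (show (0:ℝ) < n by linarith) hs]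
  subst hn2
  -- handle the trivial algebra case
  rcases subsingleton_or_nontrivial (H →L[ℂ] H) with htriv | hnontriv
  · exact le_of_eq (Subsingleton.elim A B)
  -- clean up the hypothesis h
  have hs' : s ≠ 0 := ne_of_gt hs
  have h2s : 2 * s ≤ 1 := by
    have : ((2:ℕ):ℝ) = 2 := by norm_num
    rw [this] at h1
    nlinarith [h1]
  have hts2 : (2:ℝ) ≤ t - s := by
    have : ((2:ℕ):ℝ) = 2 := by norm_num
    rwa [this] at h3
  have e₁ : s / ((2:ℕ):ℝ) = s / 2 := by norm_num
  have e₂ : (s - t) / ((2:ℕ):ℝ) = (s - t) / 2 := by norm_num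
  have e₃ : 2 * t / ((2:ℕ):ℝ) = t := by push_cast; ring
  have e₄ : ((2:ℕ):ℝ) / ((((2:ℕ):ℝ) + 2) * s + (((2:ℕ):ℝ) - 2) * t) = 1 / (2 * s) := by
    push_cast
    rw [show ((2:ℝ) + 2) * s + ((2:ℝ) - 2) * t = 4 * s by ring]
    rw [div_eq_div_iff (by positivity) (by positivity)]
    ring
  rw [e₁, e₂, e₃, e₄, show (2 - 1 : ℕ) = 1 from rfl, pow_one] at h
  -- notation
  set x : H →L[ℂ] H := A ^ ((s - t) / 2) with hx
  set c : H →L[ℂ] H := B ^ (s / 2) * (x * B ^ t) * x * B ^ (s / 2) with hc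
  -- h : B ≤ c ^ (1/(2s))
  have hx0 : 0 ≤ x := rpow_nonneg
  have hxu : IsUnit x := rpow_isUnit hAu _
  have hxsa : IsSelfAdjoint x := rpow_sa _
  -- c is positive and invertible
  have hceq : c = star (B ^ (t / 2) * x * B ^ (s / 2)) * (B ^ (t / 2) * x * B ^ (s / 2)) := by
    rw [star_mul, star_mul, (rpow_sa (a := B) (s / 2)).star_eq, (rpow_sa (a := B) (t / 2)).star_eq,
      hxsa.star_eq, hc]
    have em : B ^ (t / 2) * (B ^ (t / 2) * (x * B ^ (s / 2))) = B ^ t * (x * B ^ (s / 2)) := by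
      rw [rmul' hBu, show t / 2 + t / 2 = t by ring]
    simp only [mul_assoc]
    rw [em]
  have hc0 : 0 ≤ c := by rw [hceq]; exact star_mul_self_nonneg _
  have hcu : IsUnit c := by
    rw [hc]
    exact (((((rpow_isUnit hBu (s/2)).mul ((hxu.mul (rpow_isUnit hBu t)))).mul hxu).mul
      (rpow_isUnit hBu (s/2))))
  -- Step 1 : B ^ (2 * s) ≤ c
  have step1 : B ^ (2 * s) ≤ c := by
    have lh := loewner_heinz hB (rpow_nonneg (a := c) (y := 1 / (2 * s))) hBu
      (rpow_isUnit hcu _) h (r := 2 * s) (by linarith) h2s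
    rwa [CFC.rpow_rpow c _ _ (ne_of_gt (one_div_pos.mpr (by linarith))) (hcu.isStrictlyPositive hc0),
      show (1 / (2 * s)) * (2 * s) = 1 by field_simp, CFC.rpow_one c] at lh
  -- Step 2 : B ^ (t + s) ≤ j * j where j := B^(t/2) * x * B^(t/2)
  set j : H →L[ℂ] H := B ^ (t / 2) * x * B ^ (t / 2) with hj
  have hj0 : 0 ≤ j := by
    have := star_left_conjugate_nonneg hx0 (B ^ (t / 2))
    rwa [(rpow_sa (a := B) (t / 2)).star_eq, ← hj] at this
  have hju : IsUnit j := ((rpow_isUnit hBu (t/2)).mul hxu).mul (rpow_isUnit hBu (t/2))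
  have hjj0 : 0 ≤ j * j := by
    have : j * j = star j * j := by rw [(IsSelfAdjoint.of_nonneg hj0).star_eq]
    rw [this]; exact star_mul_self_nonneg j
  have step2 : B ^ (t + s) ≤ j * j := by
    have conj := (rpow_sa (a := B) ((t - s) / 2)).conjugate_le_conjugate step1
    have eL : B ^ ((t - s) / 2) * B ^ (2 * s) * B ^ ((t - s) / 2) = B ^ (t + s) := by
      rw [rmul hBu, rmul hBu, show (t - s) / 2 + 2 * s + (t - s) / 2 = t + s by ring]
    have eR : B ^ ((t - s) / 2) * c * B ^ ((t - s) / 2) = j * j := by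
      rw [hc, hj]
      have m1 : B ^ ((t - s) / 2) * (B ^ (s / 2) * (x * (B ^ t * (x * (B ^ (s / 2) *
          B ^ ((t - s) / 2)))))) = B ^ (t / 2) * (x * (B ^ t * (x * B ^ (t / 2)))) := by
        rw [rmul hBu, show s / 2 + (t - s) / 2 = t / 2 by ring,
          rmul' hBu, show (t - s) / 2 + s / 2 = t / 2 by ring]
      have m2 : B ^ (t / 2) * (x * (B ^ (t / 2) * (B ^ (t / 2) * (x * B ^ (t / 2))))) =
          B ^ (t / 2) * (x * (B ^ t * (x * B ^ (t / 2)))) := by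
        rw [rmul' hBu, show t / 2 + t / 2 = t by ring]
      simp only [mul_assoc]
      rw [m1, m2]
    rw [eL, eR] at conj
    exact conj
  -- Step 3 : B ^ ((t + s) / 2) ≤ j
  have step3 : B ^ ((t + s) / 2) ≤ j := by
    have lh := loewner_heinz (rpow_nonneg (a := B) (y := t + s)) hjj0
      (rpow_isUnit hBu _) (hju.mul hju) step2 (r := 1 / 2) (by norm_num) (by norm_num)
    rwa [CFC.rpow_rpow B _ _ (ne_of_gt (by linarith : (0:ℝ) < t + s)) (hBu.isStrictlyPositive hB),
      show (t + s) * (1 / 2) = (t + s) / 2 by ring, ← CFC.sqrt_eq_rpow,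
      CFC.sqrt_mul_self j hj0] at lh
  -- Step 4 : B ^ ((s - t) / 2) ≤ x
  have step4 : B ^ ((s - t) / 2) ≤ x := by
    have conj := (rpow_sa (a := B) (-(t / 2))).conjugate_le_conjugate step3
    have eL : B ^ (-(t / 2)) * B ^ ((t + s) / 2) * B ^ (-(t / 2)) = B ^ ((s - t) / 2) := by
      rw [rmul hBu, rmul hBu, show -(t / 2) + (t + s) / 2 + -(t / 2) = (s - t) / 2 by ring]
    have eR : B ^ (-(t / 2)) * j * B ^ (-(t / 2)) = x := by
      rw [hj]
      exact conj_cancel hBu (t / 2) x hB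
    rw [eL, eR] at conj
    exact conj
  -- Step 5 : A ^ ((t - s) / 2) ≤ B ^ ((t - s) / 2)
  have step5 : A ^ ((t - s) / 2) ≤ B ^ ((t - s) / 2) := by
    apply rpow_le_rpow_of_neg hA hB hAu hBu (c := (t - s) / 2)
    rw [show -((t - s) / 2) = (s - t) / 2 by ring]
    exact step4
  -- Step 6 : conclude
  have hts0 : (0:ℝ) < t - s := by linarith
  have final := loewner_heinz (rpow_nonneg (a := A) (y := (t - s) / 2))
    (rpow_nonneg (a := B) (y := (t - s) / 2)) (rpow_isUnit hAu _) (rpow_isUnit hBu _)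
    step5 (r := 2 / (t - s)) (div_nonneg (by norm_num) (by linarith))
    (by rw [div_le_one hts0]; exact hts2)
  rwa [CFC.rpow_rpow A _ _ (ne_of_gt (by linarith : (0:ℝ) < (t - s) / 2)) (hAu.isStrictlyPositive hA),
    CFC.rpow_rpow B _ _ (ne_of_gt (by linarith : (0:ℝ) < (t - s) / 2)) (hBu.isStrictlyPositive hB),
    show (t - s) / 2 * (2 / (t - s)) = 1 by field_simp,
    CFC.rpow_one A, CFC.rpow_one B] at final
end

section
/- Let A, B be positive invertible bounded linear operators on a Hilbert space and t > s > 0 with 5s + t > 3 and 3 ≥ 3s - t. If (B^{s/3} A^{(s-t)/3} B^{2t/3} A^{(s-t)/3} B^{2t/3} A^{(s-t)/3} B^{s/3})^{3/(5s+t)} ≥ B, then log B ≥ log A; and if additionally t - s ≥ 3, then B ≥ A. -/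
set_option linter.unusedSectionVars false
set_option linter.unusedVariables false
set_option maxHeartbeats 1000000

open CFC NNReal Filter Topology
open scoped ContinuousFunctionalCalculus

namespace FurutaAux

variable {A : Type*} [CStarAlgebra A] [PartialOrder A] [StarOrderedRing A]

lemma spec0 {a : A} (hau : IsUnit a) : 0 ∉ spectrum ℝ≥0 a := spectrum.zero_notMem ℝ≥0 hau

lemma spp {a : A} (ha : 0 ≤ a) (hau : IsUnit a) : IsStrictlyPositive a := hau.isStrictlyPositive ha

lemma rpow_isUnit {a : A} (ha : 0 ≤ a) (hau : IsUnit a) (x : ℝ) : IsUnit (a ^ x) :=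
  ⟨⟨a ^ x, a ^ (-x), CFC.rpow_mul_rpow_neg x (spp ha hau),
    CFC.rpow_neg_mul_rpow x (spp ha hau)⟩, rfl⟩

lemma star_rpow (a : A) (x : ℝ) : star (a ^ x) = a ^ x :=
  (IsSelfAdjoint.of_nonneg CFC.rpow_nonneg).star_eq

lemma rpow_mul_rpow {a : A} (ha : 0 ≤ a) (hau : IsUnit a) (x y : ℝ) :
    a ^ x * a ^ y = a ^ (x + y) := (CFC.rpow_add hau).symm

lemma sr_swap (a b : A) : spectralRadius ℝ (a * b) = spectralRadius ℝ (b * a) := by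
  have key : ∀ x y : A, spectralRadius ℝ (x * y) ≤ spectralRadius ℝ (y * x) := by
    intro x y
    rw [spectralRadius, spectralRadius]
    refine iSup₂_le fun k hk => ?_
    rcases eq_or_ne k 0 with rfl | hk0
    · simp
    · have hmem : k ∈ spectrum ℝ (x * y) \ {0} := ⟨hk, hk0⟩
      rw [spectrum.nonzero_mul_comm x y] at hmem
      exact le_iSup₂ (f := fun k (_ : k ∈ spectrum ℝ (y * x)) => (‖k‖₊ : ENNReal)) k hmem.1
  exact le_antisymm (key a b) (key b a)

lemma norm_eq_sr {c : A} (hc : 0 ≤ c) : ‖c‖ = (spectralRadius ℝ c).toReal :=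
  ((IsSelfAdjoint.of_nonneg hc).toReal_spectralRadius_eq_norm).symm

lemma sr_le_one {c : A} (h : ‖c‖ ≤ 1) : spectralRadius ℝ c ≤ 1 := by
  rcases subsingleton_or_nontrivial A with hS | hN
  · rw [Subsingleton.elim c 0]
    simp [spectralRadius, spectrum.zero_eq]
  · calc spectralRadius ℝ c ≤ (‖c‖₊ : ENNReal) :=
        spectrum.spectralRadius_le_nnnorm (𝕜 := ℝ) (a := c)
      _ ≤ 1 := by exact_mod_cast (by exact_mod_cast h : ‖c‖₊ ≤ (1:ℝ≥0))

lemma norm_half_le {a b : A} (ha : 0 ≤ a) (hb : 0 ≤ b) (hau : IsUnit a) (hbu : IsUnit b)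
    {α : ℝ} (h : a ^ α ≤ b ^ α) : ‖a ^ (α / 2) * b ^ (-(α / 2))‖ ≤ 1 := by
  rcases subsingleton_or_nontrivial A with hS | hN
  · rw [Subsingleton.elim (a ^ (α / 2) * b ^ (-(α / 2))) 0, norm_zero]; norm_num
  rcases eq_or_ne α 0 with rfl | hα
  · simp only [zero_div, neg_zero, CFC.rpow_zero a ha, CFC.rpow_zero b hb, mul_one, norm_one,
      le_refl]
  · have h2 := (le_iff_norm_sqrt_mul_rpow _ _ CFC.rpow_nonneg
      (spp CFC.rpow_nonneg (rpow_isUnit hb hbu α))).mp h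
    rwa [CFC.sqrt_rpow hau hα, CFC.rpow_rpow b α (-(1/2)) hα (spp hb hbu),
      show α * -(1/2) = -(α/2) by ring] at h2

lemma norm_half_le' {a b : A} (ha : 0 ≤ a) (hb : 0 ≤ b) (hau : IsUnit a) (hbu : IsUnit b)
    {α : ℝ} (h : a ^ α ≤ b ^ α) : ‖b ^ (-(α / 2)) * a ^ (α / 2)‖ ≤ 1 := by
  have := norm_half_le ha hb hau hbu h
  rwa [← norm_star, star_mul, star_rpow, star_rpow] at this

lemma midpoint_mem {a b : A} (ha : 0 ≤ a) (hb : 0 ≤ b) (hau : IsUnit a) (hbu : IsUnit b)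
    {α β : ℝ} (hα : a ^ α ≤ b ^ α) (hβ : a ^ β ≤ b ^ β) :
    a ^ ((α + β) / 2) ≤ b ^ ((α + β) / 2) := by
  set γ := (α + β) / 2 with hγdef
  rcases eq_or_ne γ 0 with hγ | hγ
  · rw [hγ, CFC.rpow_zero a ha, CFC.rpow_zero b hb]
  rw [le_iff_norm_sqrt_mul_rpow _ _ CFC.rpow_nonneg (spp CFC.rpow_nonneg (rpow_isUnit hb hbu γ)),
    CFC.sqrt_rpow hau hγ, CFC.rpow_rpow b γ (-(1/2)) hγ (spp hb hbu),
    show γ * -(1/2) = -(γ/2) by ring, ← sq_le_one_iff₀ (norm_nonneg _), sq,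
    ← CStarRing.norm_star_mul_self]
  set w : A := a ^ (γ/2) * b ^ (-(γ/2)) with hw
  have hP : star w * w = b ^ (-(γ/2)) * (a ^ γ * b ^ (-(γ/2))) := by
    rw [hw, star_mul, star_rpow, star_rpow]
    rw [mul_assoc, ← mul_assoc (a ^ (γ/2)), rpow_mul_rpow ha hau]
    rw [show γ/2 + γ/2 = γ by ring]
  have hPpos : 0 ≤ star w * w := star_mul_self_nonneg w
  rw [norm_eq_sr hPpos]
  have e1 : spectralRadius ℝ (star w * w) =
      spectralRadius ℝ (b ^ (-(β/2)) * (a ^ γ * b ^ (-(α/2)))) := by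
    rw [hP, sr_swap]
    rw [mul_assoc, rpow_mul_rpow hb hbu]
    rw [show -(γ/2) + -(γ/2) = -(α/2) + -(β/2) by rw [hγdef]; ring]
    rw [← rpow_mul_rpow hb hbu, ← mul_assoc, sr_swap]
  have hsplit : b ^ (-(β/2)) * (a ^ γ * b ^ (-(α/2))) =
      (b ^ (-(β/2)) * a ^ (β/2)) * (a ^ (α/2) * b ^ (-(α/2))) := by
    rw [show γ = β/2 + α/2 by rw [hγdef]; ring, ← rpow_mul_rpow ha hau]
    simp only [mul_assoc]
  have hbound : spectralRadius ℝ (b ^ (-(β/2)) * (a ^ γ * b ^ (-(α/2)))) ≤ 1 := by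
    rw [hsplit]
    refine sr_le_one ?_
    calc ‖(b ^ (-(β/2)) * a ^ (β/2)) * (a ^ (α/2) * b ^ (-(α/2)))‖
        ≤ ‖b ^ (-(β/2)) * a ^ (β/2)‖ * ‖a ^ (α/2) * b ^ (-(α/2))‖ := norm_mul_le _ _
      _ ≤ 1 * 1 := by
          gcongr
          · exact norm_half_le' ha hb hau hbu hβ
          · exact norm_half_le ha hb hau hbu hα
      _ = 1 := by norm_num
  calc (spectralRadius ℝ (star w * w)).toReal
      ≤ (1 : ENNReal).toReal := ENNReal.toReal_mono (by norm_num) (e1 ▸ hbound)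
    _ = 1 := by simp

lemma spec_real_pos {a : A} (ha : 0 ≤ a) (hau : IsUnit a) {x : ℝ}
    (hx : x ∈ spectrum ℝ a) : 0 < x := by
  refine lt_of_le_of_ne (spectrum_nonneg_of_nonneg ha hx) ?_
  rintro rfl
  exact spectrum.zero_notMem ℝ hau hx

lemma rpow_eq_cfc_real {a : A} (ha : 0 ≤ a) (hau : IsUnit a) (γ : ℝ) :
    a ^ γ = cfc (fun x : ℝ => x ^ γ) a := by
  rw [CFC.rpow_def, cfc_nnreal_eq_real _ a ha]
  refine cfc_congr fun x hx => ?_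
  have hx0 : 0 < x := spec_real_pos ha hau hx
  rw [NNReal.coe_rpow, Real.coe_toNNReal x hx0.le]

lemma contOn_rpow {a : A} (ha : 0 ≤ a) (hau : IsUnit a) (γ : ℝ) :
    ContinuousOn (fun x : ℝ => x ^ γ) (spectrum ℝ a) := fun x hx =>
  (Real.continuousAt_rpow_const x γ (Or.inl (spec_real_pos ha hau hx).ne')).continuousWithinAt

lemma contOn_log {a : A} (ha : 0 ≤ a) (hau : IsUnit a) :
    ContinuousOn Real.log (spectrum ℝ a) :=
  Real.continuousOn_log.mono fun x hx => (spec_real_pos ha hau hx).ne'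

lemma abs_log_le [Nontrivial A] {a : A} (ha : 0 ≤ a) (hau : IsUnit a) {x : ℝ}
    (hx : x ∈ spectrum ℝ a) : |Real.log x| ≤ ‖CFC.log a‖ := by
  have hmem : Real.log x ∈ spectrum ℝ (CFC.log a) := by
    rw [CFC.log, cfc_map_spectrum Real.log a (IsSelfAdjoint.of_nonneg ha) (contOn_log ha hau)]
    exact ⟨x, hx, rfl⟩
  simpa using spectrum.norm_le_norm_of_mem hmem

lemma norm_rpow_sub_rpow_le [Nontrivial A] {a : A} (ha : 0 ≤ a) (hau : IsUnit a) (γ₀ γ : ℝ)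
    (hδ : |γ - γ₀| * (‖CFC.log a‖ + 1) ≤ 1) :
    ‖a ^ γ - a ^ γ₀‖ ≤
      Real.exp (|γ₀| * (‖CFC.log a‖ + 1)) * (2 * (‖CFC.log a‖ + 1)) * |γ - γ₀| := by
  set L : ℝ := ‖CFC.log a‖ + 1 with hL
  have hL0 : 0 < L := by positivity
  have hrep : a ^ γ - a ^ γ₀ = cfc (fun x : ℝ => x ^ γ - x ^ γ₀) a := by
    rw [rpow_eq_cfc_real ha hau, rpow_eq_cfc_real ha hau,
      ← cfc_sub _ _ a (contOn_rpow ha hau γ) (contOn_rpow ha hau γ₀)]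
  rw [hrep]
  refine norm_cfc_le (by positivity) fun x hx => ?_
  have hx0 : 0 < x := spec_real_pos ha hau hx
  have hlog : |Real.log x| ≤ L := (abs_log_le ha hau hx).trans (by rw [hL]; linarith)
  rw [Real.rpow_def_of_pos hx0, Real.rpow_def_of_pos hx0]
  have key : Real.exp (Real.log x * γ) - Real.exp (Real.log x * γ₀) =
      Real.exp (Real.log x * γ₀) * (Real.exp (Real.log x * (γ - γ₀)) - 1) := by
    rw [mul_sub, ← Real.exp_add]
    ring_nf
  rw [Real.norm_eq_abs, key, abs_mul, Real.abs_exp]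
  have h1 : Real.exp (Real.log x * γ₀) ≤ Real.exp (|γ₀| * L) := by
    apply Real.exp_le_exp.mpr
    calc Real.log x * γ₀ ≤ |Real.log x * γ₀| := le_abs_self _
      _ = |Real.log x| * |γ₀| := abs_mul _ _
      _ ≤ L * |γ₀| := by gcongr
      _ = |γ₀| * L := mul_comm _ _
  have hu : |Real.log x * (γ - γ₀)| ≤ 1 := by
    rw [abs_mul]
    calc |Real.log x| * |γ - γ₀| ≤ L * |γ - γ₀| := by gcongr
      _ = |γ - γ₀| * L := mul_comm _ _
      _ ≤ 1 := hδ
  have h2 : |Real.exp (Real.log x * (γ - γ₀)) - 1| ≤ 2 * (L * |γ - γ₀|) := by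
    calc |Real.exp (Real.log x * (γ - γ₀)) - 1| ≤ 2 * |Real.log x * (γ - γ₀)| :=
          Real.abs_exp_sub_one_le hu
      _ = 2 * (|Real.log x| * |γ - γ₀|) := by rw [abs_mul]
      _ ≤ 2 * (L * |γ - γ₀|) := by gcongr
  calc Real.exp (Real.log x * γ₀) * |Real.exp (Real.log x * (γ - γ₀)) - 1|
      ≤ Real.exp (|γ₀| * L) * (2 * (L * |γ - γ₀|)) := by
        refine mul_le_mul h1 h2 (abs_nonneg _) (Real.exp_nonneg _)
    _ = Real.exp (|γ₀| * L) * (2 * L) * |γ - γ₀| := by ring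
  
lemma tendsto_rpow_exp [Nontrivial A] {a : A} (ha : 0 ≤ a) (hau : IsUnit a) {u : ℕ → ℝ} {γ₀ : ℝ}
    (hu : Tendsto u atTop (𝓝 γ₀)) : Tendsto (fun n => a ^ (u n)) atTop (𝓝 (a ^ γ₀)) := by
  rw [tendsto_iff_norm_sub_tendsto_zero]
  set L : ℝ := ‖CFC.log a‖ + 1 with hLdef
  have hL0 : 0 < L := by positivity
  set K : ℝ := Real.exp (|γ₀| * L) * (2 * L) with hK
  have habs : Tendsto (fun n => |u n - γ₀|) atTop (𝓝 0) := by
    have h0 : Tendsto (fun n => u n - γ₀) atTop (𝓝 (γ₀ - γ₀)) := hu.sub_const γ₀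
    rw [sub_self] at h0
    simpa using h0.abs
  apply squeeze_zero_norm' (a := fun n => K * |u n - γ₀|)
  · have hev : ∀ᶠ n in atTop, |u n - γ₀| < L⁻¹ :=
      habs.eventually_lt_const (by positivity)
    filter_upwards [hev] with n hn
    have hsmall : |u n - γ₀| * L ≤ 1 := by
      have := mul_le_mul_of_nonneg_right hn.le hL0.le
      rwa [inv_mul_cancel₀ hL0.ne'] at this
    have := norm_rpow_sub_rpow_le ha hau γ₀ (u n) hsmall
    rwa [Real.norm_eq_abs, _root_.abs_of_nonneg (norm_nonneg _)]
  · simpa using habs.const_mul K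

theorem rpow_le_rpow_of_le {a b : A} (ha : 0 ≤ a) (hb : 0 ≤ b) (hau : IsUnit a) (hbu : IsUnit b)
    (hab : a ≤ b) {γ : ℝ} (hγ0 : 0 ≤ γ) (hγ1 : γ ≤ 1) : a ^ γ ≤ b ^ γ := by
  rcases subsingleton_or_nontrivial A with hS | hN
  · exact (Subsingleton.elim _ _).le
  have dyadic : ∀ n : ℕ, ∀ k : ℕ, k ≤ 2 ^ n → a ^ ((k : ℝ) / 2 ^ n) ≤ b ^ ((k : ℝ) / 2 ^ n) := by
    intro n
    induction n with
    | zero =>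
      intro k hk
      interval_cases k
      · simp only [Nat.cast_zero, pow_zero, zero_div, CFC.rpow_zero a ha, CFC.rpow_zero b hb,
          le_refl]
      · simp only [Nat.cast_one, pow_zero, div_one, CFC.rpow_one a ha, CFC.rpow_one b hb]
        exact hab
    | succ n ih =>
      intro k hk
      rcases Nat.even_or_odd k with ⟨m, hm⟩ | ⟨m, hm⟩
      · have hm' : m ≤ 2 ^ n := by
          have : 2 ^ (n + 1) = 2 * 2 ^ n := by ring
          omega
        have heq : ((k : ℝ) / 2 ^ (n + 1)) = (m : ℝ) / 2 ^ n := by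
          subst hm
          push_cast
          field_simp
          ring
        rw [heq]
        exact ih m hm'
      · have hm' : m + 1 ≤ 2 ^ n := by
          have : 2 ^ (n + 1) = 2 * 2 ^ n := by ring
          omega
        have heq : ((k : ℝ) / 2 ^ (n + 1)) = ((m : ℝ) / 2 ^ n + ((m + 1 : ℕ) : ℝ) / 2 ^ n) / 2 := by
          subst hm
          push_cast
          field_simp
          ring
        rw [heq]
        exact midpoint_mem ha hb hau hbu (ih m (by omega)) (ih (m + 1) hm')
  set q : ℕ → ℝ := fun n => ((⌊γ * 2 ^ n⌋₊ : ℕ) : ℝ) / 2 ^ n with hqdef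
  have hfloor_le : ∀ n : ℕ, ⌊γ * 2 ^ n⌋₊ ≤ 2 ^ n := by
    intro n
    have h1 : γ * 2 ^ n ≤ ((2 ^ n : ℕ) : ℝ) := by
      push_cast
      nlinarith [pow_pos (show (0:ℝ) < 2 by norm_num) n]
    calc ⌊γ * 2 ^ n⌋₊ ≤ ⌊((2 ^ n : ℕ) : ℝ)⌋₊ := Nat.floor_mono h1
      _ = 2 ^ n := Nat.floor_natCast _
  have hqS : ∀ n, a ^ q n ≤ b ^ q n := fun n => dyadic n _ (hfloor_le n)
  have hqlim : Tendsto q atTop (𝓝 γ) := by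
    rw [tendsto_iff_norm_sub_tendsto_zero]
    apply squeeze_zero_norm' (a := fun n : ℕ => ((1:ℝ)/2) ^ n)
    · refine Eventually.of_forall fun n => ?_
      have h2n : (0:ℝ) < 2 ^ n := by positivity
      have hle : q n ≤ γ := by
        rw [hqdef]
        rw [div_le_iff₀ h2n]
        exact Nat.floor_le (by positivity)
      have hgt : γ - q n ≤ (1/2) ^ n := by
        have h3 : γ * 2 ^ n < (⌊γ * 2 ^ n⌋₊ : ℝ) + 1 := Nat.lt_floor_add_one _
        rw [hqdef]
        rw [div_pow, one_pow, sub_le_iff_le_add, ← add_div, le_div_iff₀ h2n]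
        linarith
      simp only [Real.norm_eq_abs, abs_abs]
      rw [abs_sub_comm, _root_.abs_of_nonneg (by linarith)]
      exact hgt
    · exact tendsto_pow_atTop_nhds_zero_of_lt_one (by norm_num) (by norm_num)
  have hmem : (b ^ γ - a ^ γ) ∈ {x : A | 0 ≤ x} := by
    refine CStarAlgebra.isClosed_nonneg.mem_of_tendsto
      ((tendsto_rpow_exp hb hbu hqlim).sub (tendsto_rpow_exp ha hau hqlim)) ?_
    exact Eventually.of_forall fun n => sub_nonneg.mpr (hqS n)
  exact sub_nonneg.mp hmem



lemma self_mul_rpow {a : A} (ha : 0 ≤ a) (hau : IsUnit a) (c : ℝ) :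
    a * a ^ c = a ^ (1 + c) := by
  have h := rpow_mul_rpow ha hau 1 c
  rwa [CFC.rpow_one a ha] at h

lemma rpow_mul_self {a : A} (ha : 0 ≤ a) (hau : IsUnit a) (c : ℝ) :
    a ^ c * a = a ^ (c + 1) := by
  have h := rpow_mul_rpow ha hau c 1
  rwa [CFC.rpow_one a ha] at h

lemma rpow_neg_antitone {a b : A} (ha : 0 ≤ a) (hb : 0 ≤ b) (hau : IsUnit a) (hbu : IsUnit b)
    (hab : a ≤ b) {γ : ℝ} (hγ0 : 0 ≤ γ) (hγ1 : γ ≤ 1) : b ^ (-γ) ≤ a ^ (-γ) := by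
  rcases eq_or_ne γ 0 with rfl | hγ
  · rw [neg_zero, CFC.rpow_zero a ha, CFC.rpow_zero b hb]
  have h1 : a ^ γ ≤ b ^ γ := rpow_le_rpow_of_le ha hb hau hbu hab hγ0 hγ1
  have h2 := CStarAlgebra.rpow_neg_one_le_rpow_neg_one h1
    (spp (CFC.rpow_nonneg (a := a) (y := γ)) (rpow_isUnit ha hau γ))
  rwa [CFC.rpow_rpow a γ (-1) hγ (spp ha hau), CFC.rpow_rpow b γ (-1) hγ (spp hb hbu),
    show γ * (-1) = -γ by ring] at h2

lemma rpow_antitone_neg_exp {a b : A} (ha : 0 ≤ a) (hb : 0 ≤ b) (hau : IsUnit a) (hbu : IsUnit b)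
    (hab : a ≤ b) {μ : ℝ} (h0 : -1 ≤ μ) (h1 : μ ≤ 0) : b ^ μ ≤ a ^ μ := by
  rw [show μ = -(-μ) by ring]
  exact rpow_neg_antitone ha hb hau hbu hab (by linarith) (by linarith)

/-- Conjugation by a unitary as a star algebra homomorphism over `ℝ≥0`. -/
@[simps]
noncomputable def conjStarAlgHom {u : A} (hu : u ∈ unitary A) : A →⋆ₐ[ℝ≥0] A where
  toFun x := u * x * star u
  map_one' := by simpa using Unitary.mul_star_self_of_mem hu
  map_mul' x y := by
    have h : star u * u = 1 := Unitary.star_mul_self_of_mem hu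
    calc u * (x * y) * star u = u * x * (star u * u) * y * star u := by
          rw [h]; simp only [mul_assoc, one_mul]
      _ = u * x * star u * (u * y * star u) := by simp only [mul_assoc]
  map_zero' := by simp
  map_add' x y := by simp [mul_add, add_mul]
  commutes' r := by
    simp only [Algebra.algebraMap_eq_smul_one, mul_smul_comm, smul_mul_assoc, mul_one]
    rw [Unitary.mul_star_self_of_mem hu]
  map_star' x := by
    simp only [star_mul, star_star, mul_assoc]

lemma unitary_conj_rpow {u : A} (hu : u ∈ unitary A) {a : A} (ha : 0 ≤ a) (hau : IsUnit a)
    (c : ℝ) : (u * a * star u) ^ c = u * a ^ c * star u := by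
  have hφa : 0 ≤ u * a * star u := by
    have := star_left_conjugate_nonneg ha (star u)
    rwa [star_star] at this
  have hcont : ContinuousOn (fun x : ℝ≥0 => x ^ c) (spectrum ℝ≥0 a) :=
    NNReal.continuousOn_rpow_const (Or.inl (spec0 hau))
  have hφ : Continuous (conjStarAlgHom hu) := by
    show Continuous fun x : A => u * x * star u
    fun_prop
  have := StarAlgHomClass.map_cfc (S := ℝ≥0) (conjStarAlgHom hu) (fun x : ℝ≥0 => x ^ c) a
    hcont hφ ha hφa
  simp only [conjStarAlgHom_apply] at this
  rw [CFC.rpow_def, CFC.rpow_def]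
  exact this.symm

lemma star_mul_rpow_eq {x : A} (hx : IsUnit x) (lam : ℝ) :
    (star x * x) ^ lam = star x * (x * star x) ^ (lam - 1) * x := by
  obtain ⟨h, hh⟩ : ∃ h : A, h = star x * x := ⟨_, rfl⟩
  obtain ⟨g, hg⟩ : ∃ g : A, g = x * star x := ⟨_, rfl⟩
  have hh0 : 0 ≤ h := hh ▸ star_mul_self_nonneg x
  have hg0 : 0 ≤ g := hg ▸ mul_star_self_nonneg x
  have hhu : IsUnit h := hh ▸ hx.star.mul hx
  have hgu : IsUnit g := hg ▸ hx.mul hx.star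
  obtain ⟨u, hudef⟩ : ∃ u : A, u = x * h ^ (-(1/2) : ℝ) := ⟨_, rfl⟩
  have hsu : star u = h ^ (-(1/2) : ℝ) * star x := by rw [hudef, star_mul, star_rpow]
  have h1 : star u * u = 1 := by
    rw [hsu, hudef]
    have e1 : h ^ (-(1/2) : ℝ) * star x * (x * h ^ (-(1/2) : ℝ))
        = h ^ (-(1/2) : ℝ) * (h * h ^ (-(1/2) : ℝ)) := by
      rw [hh]; simp only [mul_assoc]
    rw [e1, self_mul_rpow hh0 hhu, rpow_mul_rpow hh0 hhu,
      show (-(1/2) + (1 + -(1/2)) : ℝ) = 0 by norm_num, CFC.rpow_zero h hh0]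
  have huu : IsUnit u := hudef ▸ hx.mul (rpow_isUnit hh0 hhu _)
  have h2 : u * star u = 1 := by
    have hinv : star u = ↑huu.unit⁻¹ := by
      calc star u = star u * (u * ↑huu.unit⁻¹) := by
            rw [show u * ↑huu.unit⁻¹ = 1 from huu.mul_val_inv, mul_one]
        _ = (star u * u) * ↑huu.unit⁻¹ := by rw [← mul_assoc]
        _ = ↑huu.unit⁻¹ := by rw [h1, one_mul]
    rw [hinv]
    exact huu.mul_val_inv
  have humem : u ∈ unitary A := Unitary.mem_iff.mpr ⟨h1, h2⟩
  have hx_eq : u * h ^ ((1:ℝ)/2) = x := by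
    rw [hudef, mul_assoc, rpow_mul_rpow hh0 hhu,
      show (-(1/2) + 1/2 : ℝ) = 0 by norm_num, CFC.rpow_zero h hh0, mul_one]
  have hsx : star x = h ^ ((1:ℝ)/2) * star u := by
    conv_lhs => rw [← hx_eq]
    rw [star_mul, star_rpow]
  have hg_eq : g = u * h * star u := by
    rw [hg]
    conv_lhs => rw [hsx, ← hx_eq]
    calc u * h ^ ((1:ℝ)/2) * (h ^ ((1:ℝ)/2) * star u)
        = u * (h ^ ((1:ℝ)/2) * h ^ ((1:ℝ)/2)) * star u := by simp only [mul_assoc]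
      _ = u * h * star u := by
          rw [rpow_mul_rpow hh0 hhu, show ((1:ℝ)/2 + 1/2 : ℝ) = 1 by norm_num,
            CFC.rpow_one h hh0]
  have key : g ^ (lam - 1) = u * h ^ (lam - 1) * star u := by
    rw [hg_eq, unitary_conj_rpow humem hh0 hhu]
  calc (star x * x) ^ lam = h ^ lam := by rw [← hh]
    _ = h ^ ((1:ℝ)/2) * h ^ (lam - 1) * h ^ ((1:ℝ)/2) := by
        rw [rpow_mul_rpow hh0 hhu, rpow_mul_rpow hh0 hhu]
        congr 1
        ring
    _ = h ^ ((1:ℝ)/2) * (star u * u) * h ^ (lam - 1) * (star u * u) * h ^ ((1:ℝ)/2) := by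
        rw [h1]; simp only [mul_one]
    _ = (h ^ ((1:ℝ)/2) * star u) * (u * h ^ (lam - 1) * star u) * (u * h ^ ((1:ℝ)/2)) := by
        simp only [mul_assoc]
    _ = star x * g ^ (lam - 1) * x := by rw [← hsx, ← key, hx_eq]
    _ = star x * (x * star x) ^ (lam - 1) * x := by rw [hg]

lemma furuta_base {a b : A} (ha : 0 ≤ a) (hb : 0 ≤ b) (hau : IsUnit a) (hbu : IsUnit b)
    (hab : b ≤ a) {p r : ℝ} (hp : 1 ≤ p) (hr0 : 0 ≤ r) (hr1 : r ≤ 1) :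
    (a ^ (r/2) * b ^ p * a ^ (r/2)) ^ ((1+r)/(p+r)) ≤ a ^ (1+r) := by
  have hpr0 : 0 < p + r := by linarith
  set x : A := b ^ (p/2) * a ^ (r/2) with hxdef
  have hxu : IsUnit x := (rpow_isUnit hb hbu _).mul (rpow_isUnit ha hau _)
  have hsx : star x = a ^ (r/2) * b ^ (p/2) := by rw [hxdef, star_mul, star_rpow, star_rpow]
  have hq : star x * x = a ^ (r/2) * b ^ p * a ^ (r/2) := by
    rw [hsx, hxdef]
    calc a ^ (r/2) * b ^ (p/2) * (b ^ (p/2) * a ^ (r/2))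
        = a ^ (r/2) * (b ^ (p/2) * b ^ (p/2)) * a ^ (r/2) := by simp only [mul_assoc]
      _ = a ^ (r/2) * b ^ p * a ^ (r/2) := by
          rw [rpow_mul_rpow hb hbu, show (p/2 + p/2 : ℝ) = p by ring]
  have hxxs : x * star x = b ^ (p/2) * a ^ r * b ^ (p/2) := by
    rw [hsx, hxdef]
    calc b ^ (p/2) * a ^ (r/2) * (a ^ (r/2) * b ^ (p/2))
        = b ^ (p/2) * (a ^ (r/2) * a ^ (r/2)) * b ^ (p/2) := by simp only [mul_assoc]
      _ = b ^ (p/2) * a ^ r * b ^ (p/2) := by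
          rw [rpow_mul_rpow ha hau, show (r/2 + r/2 : ℝ) = r by ring]
  have hbr : b ^ r ≤ a ^ r := rpow_le_rpow_of_le hb ha hbu hau hab hr0 hr1
  have hconj : b ^ (p+r) ≤ x * star x := by
    rw [hxxs]
    have step := IsSelfAdjoint.conjugate_le_conjugate hbr
      (IsSelfAdjoint.of_nonneg (CFC.rpow_nonneg (a := b) (y := p/2)))
    calc b ^ (p+r) = b ^ (p/2) * b ^ r * b ^ (p/2) := by
          rw [rpow_mul_rpow hb hbu, rpow_mul_rpow hb hbu]
          congr 1
          ring
      _ ≤ b ^ (p/2) * a ^ r * b ^ (p/2) := step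
  set lam : ℝ := (1+r)/(p+r) with hlam
  have hlam0 : 0 < lam := by positivity
  have hlam1 : lam ≤ 1 := by
    rw [hlam, div_le_one hpr0]; linarith
  have hxsx_pos : 0 ≤ x * star x := mul_star_self_nonneg x
  have hxsx_u : IsUnit (x * star x) := hxu.mul hxu.star
  have main1 : (x * star x) ^ (lam - 1) ≤ (b ^ (p+r)) ^ (lam - 1) :=
    rpow_antitone_neg_exp CFC.rpow_nonneg hxsx_pos (rpow_isUnit hb hbu _) hxsx_u hconj
      (by linarith) (by linarith)
  have hrhs : (b ^ (p+r)) ^ (lam - 1) = b ^ (1 - p) := by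
    rw [CFC.rpow_rpow b (p+r) (lam - 1) hpr0.ne' (spp hb hbu)]
    congr 1
    rw [hlam]
    field_simp
    ring
  have hident := star_mul_rpow_eq hxu lam
  have step2 : star x * (x * star x) ^ (lam - 1) * x ≤ star x * b ^ (1 - p) * x := by
    rw [← hrhs]
    exact star_left_conjugate_le_conjugate main1 x
  have hmid : star x * b ^ (1 - p) * x = a ^ (r/2) * b * a ^ (r/2) := by
    rw [hsx, hxdef]
    calc a ^ (r/2) * b ^ (p/2) * b ^ (1-p) * (b ^ (p/2) * a ^ (r/2))
        = a ^ (r/2) * (b ^ (p/2) * b ^ (1-p) * b ^ (p/2)) * a ^ (r/2) := by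
          simp only [mul_assoc]
      _ = a ^ (r/2) * b * a ^ (r/2) := by
          rw [rpow_mul_rpow hb hbu, rpow_mul_rpow hb hbu,
            show (p/2 + (1-p) + p/2 : ℝ) = 1 by ring, CFC.rpow_one b hb]
  have step3 : a ^ (r/2) * b * a ^ (r/2) ≤ a ^ (r/2) * a * a ^ (r/2) :=
    IsSelfAdjoint.conjugate_le_conjugate hab
      (IsSelfAdjoint.of_nonneg (CFC.rpow_nonneg (a := a) (y := r/2)))
  have hfin : a ^ (r/2) * a * a ^ (r/2) = a ^ (1+r) := by
    rw [rpow_mul_self ha hau, rpow_mul_rpow ha hau]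
    congr 1
    ring
  calc (a ^ (r/2) * b ^ p * a ^ (r/2)) ^ lam = (star x * x) ^ lam := by rw [hq]
    _ = star x * (x * star x) ^ (lam - 1) * x := hident
    _ ≤ star x * b ^ (1 - p) * x := step2
    _ = a ^ (r/2) * b * a ^ (r/2) := hmid
    _ ≤ a ^ (r/2) * a * a ^ (r/2) := step3
    _ = a ^ (1+r) := hfin

lemma furuta_A {a b : A} (ha : 0 ≤ a) (hb : 0 ≤ b) (hau : IsUnit a) (hbu : IsUnit b)
    (hab : b ≤ a) {p : ℝ} (hp : 1 ≤ p) {r : ℝ} (hr0 : 0 ≤ r) :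
    (a ^ (r/2) * b ^ p * a ^ (r/2)) ^ ((1+r)/(p+r)) ≤ a ^ (1+r) := by
  obtain ⟨n, hn⟩ : ∃ n : ℕ, r ≤ 2^n - 1 := by
    obtain ⟨m, hm⟩ := exists_nat_gt r
    refine ⟨m, ?_⟩
    have h2 : (m:ℝ) + 1 ≤ 2^m := by exact_mod_cast (Nat.lt_two_pow_self (n := m))
    linarith
  revert hr0 hn
  revert r
  induction n with
  | zero =>
    intro r hr0 hn
    norm_num at hn
    exact furuta_base ha hb hau hbu hab hp hr0 (by linarith)
  | succ n ih =>
    intro r hr0 hn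
    rcases le_or_gt r 1 with hr1 | hr1
    · exact furuta_base ha hb hau hbu hab hp hr0 hr1
    · obtain ⟨r₀, hr₀⟩ : ∃ r₀ : ℝ, r₀ = (r-1)/2 := ⟨_, rfl⟩
      have hr₀0 : 0 ≤ r₀ := by rw [hr₀]; linarith
      have hr₀n : r₀ ≤ 2^n - 1 := by
        have h2 : (2:ℝ)^(n+1) = 2 * 2^n := by ring
        rw [hr₀]
        rw [h2] at hn
        linarith
      have hrr : r = 1 + 2*r₀ := by rw [hr₀]; ring
      have hpr₀ : 0 < p + r₀ := by linarith
      have h1r₀ : 0 < 1 + r₀ := by linarith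
      have hlam0 : 0 < (1+r₀)/(p+r₀) := by positivity
      have IH := ih hr₀0 hr₀n
      have hq₀pos : 0 ≤ a ^ (r₀/2) * b ^ p * a ^ (r₀/2) := by
        have := star_left_conjugate_nonneg (CFC.rpow_nonneg (a := b) (y := p)) (a ^ (r₀/2))
        rwa [star_rpow] at this
      have hq₀u : IsUnit (a ^ (r₀/2) * b ^ p * a ^ (r₀/2)) :=
        ((rpow_isUnit ha hau _).mul (rpow_isUnit hb hbu _)).mul (rpow_isUnit ha hau _)
      have hB1pos : 0 ≤ (a ^ (r₀/2) * b ^ p * a ^ (r₀/2)) ^ ((1+r₀)/(p+r₀)) := CFC.rpow_nonneg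
      have hB1u : IsUnit ((a ^ (r₀/2) * b ^ p * a ^ (r₀/2)) ^ ((1+r₀)/(p+r₀))) :=
        rpow_isUnit hq₀pos hq₀u _
      have hA1pos : 0 ≤ a ^ (1+r₀) := CFC.rpow_nonneg
      have hA1u : IsUnit (a ^ (1+r₀)) := rpow_isUnit ha hau _
      have hp₁ : 1 ≤ (p+r₀)/(1+r₀) := by rw [le_div_iff₀ h1r₀]; linarith
      have base := furuta_base hA1pos hB1pos hA1u hB1u IH hp₁ zero_le_one le_rfl
      have e1 : (a ^ (1+r₀)) ^ ((1:ℝ)/2) = a ^ ((1+r₀)/2) := by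
        rw [CFC.rpow_rpow a (1+r₀) (1/2) h1r₀.ne' (spp ha hau)]
        congr 1
        ring
      have e2 : ((a ^ (r₀/2) * b ^ p * a ^ (r₀/2)) ^ ((1+r₀)/(p+r₀))) ^ ((p+r₀)/(1+r₀))
          = a ^ (r₀/2) * b ^ p * a ^ (r₀/2) := by
        rw [CFC.rpow_rpow _ _ _ hlam0.ne' (spp hq₀pos hq₀u),
          show ((1+r₀)/(p+r₀)) * ((p+r₀)/(1+r₀)) = 1 by field_simp,
          CFC.rpow_one _ hq₀pos]
      have e3 : a ^ ((1+r₀)/2) * (a ^ (r₀/2) * b ^ p * a ^ (r₀/2)) * a ^ ((1+r₀)/2)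
          = a ^ (r/2) * b ^ p * a ^ (r/2) := by
        calc a ^ ((1+r₀)/2) * (a ^ (r₀/2) * b ^ p * a ^ (r₀/2)) * a ^ ((1+r₀)/2)
            = a ^ ((1+r₀)/2) * a ^ (r₀/2) * b ^ p * (a ^ (r₀/2) * a ^ ((1+r₀)/2)) := by
              simp only [mul_assoc]
          _ = a ^ (r/2) * b ^ p * a ^ (r/2) := by
              rw [rpow_mul_rpow ha hau, rpow_mul_rpow ha hau,
                show (1+r₀)/2 + r₀/2 = r/2 by rw [hrr]; ring,
                show r₀/2 + (1+r₀)/2 = r/2 by rw [hrr]; ring]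
      have e4 : ((1:ℝ)+1)/((p+r₀)/(1+r₀)+1) = (1+r)/(p+r) := by
        rw [hrr, div_add' _ _ _ h1r₀.ne', div_div_eq_mul_div]
        rw [div_eq_div_iff (by positivity) (by nlinarith)]
        ring
      have e5 : (a ^ (1+r₀)) ^ ((1:ℝ)+1) = a ^ (1+r) := by
        rw [CFC.rpow_rpow a (1+r₀) (1+1) h1r₀.ne' (spp ha hau),
          show (1+r₀) * (1+1) = 1+r by rw [hrr]; ring]
      rw [e1, e2, e3, e4, e5] at base
      exact base

lemma furuta_B {b k : A} (hb : 0 ≤ b) (hk : 0 ≤ k) (hbu : IsUnit b) (hku : IsUnit k)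
    (hbk : b ≤ k) {p r : ℝ} (hp : 1 ≤ p) (hr0 : 0 ≤ r) :
    b ^ (1+r) ≤ (b ^ (r/2) * k ^ p * b ^ (r/2)) ^ ((1+r)/(p+r)) := by
  have hpr : 0 < p + r := by linarith
  have h1r : 0 < 1 + r := by linarith
  have hlam : 0 < (1+r)/(p+r) := by positivity
  have hki : k ^ (-1:ℝ) ≤ b ^ (-1:ℝ) := CStarAlgebra.rpow_neg_one_le_rpow_neg_one hbk (spp hb hbu)
  have hbinv_pos : 0 ≤ b ^ (-1:ℝ) := CFC.rpow_nonneg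
  have hkinv_pos : 0 ≤ k ^ (-1:ℝ) := CFC.rpow_nonneg
  have hbinv_u : IsUnit (b ^ (-1:ℝ)) := rpow_isUnit hb hbu _
  have hkinv_u : IsUnit (k ^ (-1:ℝ)) := rpow_isUnit hk hku _
  have FA := furuta_A hbinv_pos hkinv_pos hbinv_u hkinv_u hki hp hr0
  have eb : ∀ x : ℝ, (b ^ (-1:ℝ)) ^ x = b ^ (-x) := fun x => by
    rw [CFC.rpow_rpow b (-1) x (by norm_num) (spp hb hbu)]
    congr 1
    ring
  have ek : (k ^ (-1:ℝ)) ^ p = k ^ (-p) := by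
    rw [CFC.rpow_rpow k (-1) p (by norm_num) (spp hk hku)]
    congr 1
    ring
  rw [eb, eb, ek] at FA
  obtain ⟨W, hW⟩ : ∃ W : A, W = b ^ (r/2) * k ^ p * b ^ (r/2) := ⟨_, rfl⟩
  have hWpos : 0 ≤ W := by
    rw [hW]
    have := star_left_conjugate_nonneg (CFC.rpow_nonneg (a := k) (y := p)) (b ^ (r/2))
    rwa [star_rpow] at this
  have hWu : IsUnit W := by
    rw [hW]
    exact ((rpow_isUnit hb hbu _).mul (rpow_isUnit hk hku _)).mul (rpow_isUnit hb hbu _)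
  have hWV : W * (b ^ (-(r/2)) * k ^ (-p) * b ^ (-(r/2))) = 1 := by
    rw [hW]
    calc (b ^ (r/2) * k ^ p * b ^ (r/2)) * (b ^ (-(r/2)) * k ^ (-p) * b ^ (-(r/2)))
        = b ^ (r/2) * (k ^ p * ((b ^ (r/2) * b ^ (-(r/2))) * (k ^ (-p) * b ^ (-(r/2))))) := by
          simp only [mul_assoc]
      _ = b ^ (r/2) * (k ^ p * (k ^ (-p) * b ^ (-(r/2)))) := by
          rw [CFC.rpow_mul_rpow_neg (r/2) (spp hb hbu), one_mul]
      _ = b ^ (r/2) * b ^ (-(r/2)) := by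
          rw [← mul_assoc (k ^ p), CFC.rpow_mul_rpow_neg p (spp hk hku), one_mul]
      _ = 1 := CFC.rpow_mul_rpow_neg (r/2) (spp hb hbu)
  have hinv_eq : b ^ (-(r/2)) * k ^ (-p) * b ^ (-(r/2)) = W ^ (-1:ℝ) := by
    have h1 : W ^ (-1:ℝ) = ↑hWu.unit⁻¹ := by
      have h2 := CFC.rpow_neg_one_eq_inv hWu.unit (by rw [hWu.unit_spec]; exact hWpos)
      rwa [hWu.unit_spec] at h2
    rw [h1]
    exact Units.eq_inv_of_mul_eq_one_left (by rw [hWu.unit_spec]; exact hWV)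
  rw [hinv_eq] at FA
  have e5 : (W ^ (-1:ℝ)) ^ ((1+r)/(p+r)) = W ^ (-((1+r)/(p+r))) := by
    rw [CFC.rpow_rpow W (-1) _ (by norm_num) (spp hWpos hWu)]
    congr 1
    ring
  rw [e5] at FA
  have last := CStarAlgebra.rpow_neg_one_le_rpow_neg_one FA
    (spp CFC.rpow_nonneg (rpow_isUnit hWpos hWu _))
  rw [CFC.rpow_rpow b _ _ (neg_ne_zero.mpr h1r.ne') (spp hb hbu),
    CFC.rpow_rpow W _ _ (neg_ne_zero.mpr hlam.ne') (spp hWpos hWu),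
    show -(1+r) * (-1 : ℝ) = 1+r by ring,
    show -((1+r)/(p+r)) * (-1 : ℝ) = (1+r)/(p+r) by ring] at last
  rw [hW] at last
  exact last



lemma tendsto_n_rpow_sub_one [Nontrivial A] {a : A} (ha : 0 ≤ a) (hau : IsUnit a) :
    Tendsto (fun n : ℕ => (n : ℝ) • (a ^ ((n:ℝ)⁻¹) - 1)) atTop (𝓝 (CFC.log a)) := by
  rw [tendsto_iff_norm_sub_tendsto_zero]
  obtain ⟨L, hL⟩ : ∃ L : ℝ, L = ‖CFC.log a‖ + 1 := ⟨_, rfl⟩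
  have hL0 : 0 < L := by rw [hL]; positivity
  apply squeeze_zero_norm' (a := fun n : ℕ => L^2 / n)
  · have hev : ∀ᶠ n : ℕ in atTop, L ≤ (n:ℝ) :=
      tendsto_natCast_atTop_atTop.eventually_ge_atTop L
    filter_upwards [hev] with n hn
    rw [norm_norm]
    have hn0 : (0:ℝ) < n := lt_of_lt_of_le hL0 hn
    have hcont1 : ContinuousOn (fun x : ℝ => (n:ℝ) * (x ^ ((n:ℝ)⁻¹) - 1)) (spectrum ℝ a) :=
      continuousOn_const.mul ((contOn_rpow ha hau _).sub continuousOn_const)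
    have hrep : (n : ℝ) • (a ^ ((n:ℝ)⁻¹) - 1) - CFC.log a
        = cfc (fun x : ℝ => (n:ℝ) * (x ^ ((n:ℝ)⁻¹) - 1) - Real.log x) a := by
      have h1 : a ^ ((n:ℝ)⁻¹) - (1:A) = cfc (fun x : ℝ => x ^ ((n:ℝ)⁻¹) - 1) a := by
        rw [cfc_sub _ _ a (contOn_rpow ha hau _) continuousOn_const,
          ← rpow_eq_cfc_real ha hau, cfc_const_one ℝ a]
      have h2 : (n : ℝ) • (a ^ ((n:ℝ)⁻¹) - (1:A))
          = cfc (fun x : ℝ => (n:ℝ) * (x ^ ((n:ℝ)⁻¹) - 1)) a := by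
        rw [h1, ← cfc_smul (n:ℝ) (fun x : ℝ => x ^ ((n:ℝ)⁻¹) - 1) a ((contOn_rpow ha hau _).sub continuousOn_const)]
        simp only [smul_eq_mul]
      rw [h2]
      unfold CFC.log
      rw [← cfc_sub _ _ a hcont1 (contOn_log ha hau)]
    rw [hrep]
    refine norm_cfc_le (by positivity) fun x hx => ?_
    have hx0 : 0 < x := spec_real_pos ha hau hx
    have hlx : |Real.log x| ≤ L := by
      have := abs_log_le ha hau hx
      rw [hL]
      linarith
    rw [Real.rpow_def_of_pos hx0, Real.norm_eq_abs]
    have hxn : |Real.log x * (n:ℝ)⁻¹| ≤ 1 := by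
      rw [abs_mul, abs_of_pos (show (0:ℝ) < (n:ℝ)⁻¹ by positivity)]
      calc |Real.log x| * (n:ℝ)⁻¹ ≤ (n:ℝ) * (n:ℝ)⁻¹ := by
            gcongr
            exact hlx.trans hn
        _ = 1 := mul_inv_cancel₀ hn0.ne'
    have key := Real.abs_exp_sub_one_sub_id_le hxn
    have heq : (n:ℝ) * (Real.exp (Real.log x * (n:ℝ)⁻¹) - 1) - Real.log x
        = (n:ℝ) * (Real.exp (Real.log x * (n:ℝ)⁻¹) - 1 - Real.log x * (n:ℝ)⁻¹) := by
      field_simp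
    rw [heq, abs_mul, abs_of_pos hn0]
    calc (n:ℝ) * |Real.exp (Real.log x * (n:ℝ)⁻¹) - 1 - Real.log x * (n:ℝ)⁻¹|
        ≤ (n:ℝ) * (Real.log x * (n:ℝ)⁻¹)^2 := by gcongr
      _ = (Real.log x)^2 / n := by field_simp
      _ ≤ L^2 / n := by
          gcongr ?_ / _
          nlinarith [le_abs_self (Real.log x), neg_abs_le (Real.log x), hlx,
            abs_nonneg (Real.log x)]
  · exact tendsto_const_div_atTop_nhds_zero_nat _

lemma log_le_log {a b : A} (ha : 0 ≤ a) (hb : 0 ≤ b) (hau : IsUnit a) (hbu : IsUnit b)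
    (hab : a ≤ b) : CFC.log a ≤ CFC.log b := by
  rcases subsingleton_or_nontrivial A with hS | hN
  · exact (Subsingleton.elim _ _).le
  have hmem : CFC.log b - CFC.log a ∈ {x : A | 0 ≤ x} := by
    refine CStarAlgebra.isClosed_nonneg.mem_of_tendsto
      ((tendsto_n_rpow_sub_one hb hbu).sub (tendsto_n_rpow_sub_one ha hau)) ?_
    filter_upwards [eventually_ge_atTop 1] with n hn
    have h1n : (1:ℝ) ≤ (n:ℝ) := by exact_mod_cast hn
    have hkey : a ^ ((n:ℝ)⁻¹) ≤ b ^ ((n:ℝ)⁻¹) :=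
      rpow_le_rpow_of_le ha hb hau hbu hab (by positivity) (inv_le_one_of_one_le₀ h1n)
    have heq : (n:ℝ) • (b ^ ((n:ℝ)⁻¹) - 1) - (n:ℝ) • (a ^ ((n:ℝ)⁻¹) - 1)
        = (n:ℝ) • (b ^ ((n:ℝ)⁻¹) - a ^ ((n:ℝ)⁻¹)) := by
      rw [← smul_sub]
      congr 1
      abel
    rw [heq]
    exact smul_nonneg (by positivity) (sub_nonneg.mpr hkey)
  exact sub_nonneg.mp hmem

lemma log_rpow_smul {a : A} (ha : 0 ≤ a) (hau : IsUnit a) (c : ℝ) :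
    CFC.log (a ^ c) = c • CFC.log a := by
  have himg : ContinuousOn Real.log ((fun x : ℝ => x ^ c) '' spectrum ℝ a) := by
    refine Real.continuousOn_log.mono ?_
    rintro y ⟨x, hx, rfl⟩
    exact (Real.rpow_pos_of_pos (spec_real_pos ha hau hx) c).ne'
  unfold CFC.log
  rw [rpow_eq_cfc_real ha hau c,
    ← cfc_comp' Real.log (fun x : ℝ => x ^ c) a himg (contOn_rpow ha hau c)
      (IsSelfAdjoint.of_nonneg ha)]
  have h1 : cfc (fun x : ℝ => Real.log (x ^ c)) a = cfc (fun x : ℝ => c • Real.log x) a := by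
    refine cfc_congr fun x hx => ?_
    rw [Real.log_rpow (spec_real_pos ha hau hx) c, smul_eq_mul]
  rw [h1, cfc_smul c Real.log a (contOn_log ha hau)]

lemma le_of_smul_le_smul {x y : A} {c : ℝ} (hc : 0 < c) (h : c • x ≤ c • y) : x ≤ y := by
  have h0 : 0 ≤ c • (y - x) := by
    rw [smul_sub]
    exact sub_nonneg.mpr h
  have h1 : 0 ≤ c⁻¹ • (c • (y - x)) := smul_nonneg (by positivity) h0
  rw [smul_smul, inv_mul_cancel₀ hc.ne', one_smul] at h1
  exact sub_nonneg.mp h1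

theorem main_core {a b : A} (ha : 0 ≤ a) (hau : IsUnit a) (hb : 0 ≤ b) (hbu : IsUnit b)
    {s t : ℝ} (hs : 0 < s) (hst : s < t) (h1 : 3 < 5*s + t) (h2 : 3*s - t ≤ 3)
    (h : b ≤ (b ^ (s/3) * a ^ ((s-t)/3) * b ^ (2*t/3) * a ^ ((s-t)/3) * b ^ (2*t/3)
      * a ^ ((s-t)/3) * b ^ (s/3)) ^ (3/(5*s+t))) :
    a ^ ((t-s)/3) ≤ b ^ ((t-s)/3) := by
  obtain ⟨δ, hδ⟩ : ∃ δ : ℝ, δ = (t-s)/3 := ⟨_, rfl⟩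
  have hδ0 : 0 < δ := by rw [hδ]; linarith
  have hst3 : (s-t)/3 = -δ := by rw [hδ]; ring
  obtain ⟨D, hD⟩ : ∃ D : A, D = b ^ (t/3) * a ^ (-δ) * b ^ (t/3) := ⟨_, rfl⟩
  have hD0 : 0 ≤ D := by
    rw [hD]
    have := star_left_conjugate_nonneg (CFC.rpow_nonneg (a := a) (y := -δ)) (b ^ (t/3))
    rwa [star_rpow] at this
  have hDu : IsUnit D := by
    rw [hD]
    exact ((rpow_isUnit hb hbu _).mul (rpow_isUnit ha hau _)).mul (rpow_isUnit hb hbu _)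
  have e1 : b ^ (s/3) = b ^ (-δ) * b ^ (t/3) := by
    rw [rpow_mul_rpow hb hbu, show -δ + t/3 = s/3 by rw [hδ]; ring]
  have e2 : b ^ (2*t/3) = b ^ (t/3) * b ^ (t/3) := by
    rw [rpow_mul_rpow hb hbu]
    congr 1
    ring
  have hT : b ^ (s/3) * a ^ ((s-t)/3) * b ^ (2*t/3) * a ^ ((s-t)/3) * b ^ (2*t/3)
      * a ^ ((s-t)/3) * b ^ (s/3) = b ^ (-δ) * (D * D * D) * b ^ (-δ) := by
    rw [hst3, hD, e1, e2]
    simp only [mul_assoc]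
    rw [rpow_mul_rpow hb hbu, rpow_mul_rpow hb hbu, show -δ + t/3 = t/3 + -δ by ring]
  have hDDD0 : 0 ≤ D * D * D := by
    have := star_left_conjugate_nonneg hD0 D
    rwa [(IsSelfAdjoint.of_nonneg hD0).star_eq] at this
  have hTT0 : 0 ≤ b ^ (-δ) * (D * D * D) * b ^ (-δ) := by
    have := star_left_conjugate_nonneg hDDD0 (b ^ (-δ))
    rwa [star_rpow] at this
  have hTTu : IsUnit (b ^ (-δ) * (D * D * D) * b ^ (-δ)) :=
    ((rpow_isUnit hb hbu _).mul ((hDu.mul hDu).mul hDu)).mul (rpow_isUnit hb hbu _)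
  rw [hT] at h
  have h5 : (0:ℝ) < 5*s+t := by linarith
  have hα : (0:ℝ) < 3/(5*s+t) := by positivity
  have hk0 : 0 ≤ (b ^ (-δ) * (D * D * D) * b ^ (-δ)) ^ (3/(5*s+t)) := CFC.rpow_nonneg
  have hku : IsUnit ((b ^ (-δ) * (D * D * D) * b ^ (-δ)) ^ (3/(5*s+t))) :=
    rpow_isUnit hTT0 hTTu _
  have hp : 1 ≤ (5*s+t)/3 := by
    rw [le_div_iff₀ (by norm_num : (0:ℝ) < 3)]
    linarith
  have hr0 : (0:ℝ) ≤ 2*δ := by linarith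
  have fb := furuta_B hb hk0 hbu hku h hp hr0
  have eK : ((b ^ (-δ) * (D * D * D) * b ^ (-δ)) ^ (3/(5*s+t))) ^ ((5*s+t)/3)
      = b ^ (-δ) * (D * D * D) * b ^ (-δ) := by
    rw [CFC.rpow_rpow _ _ _ hα.ne' (spp hTT0 hTTu),
      show (3/(5*s+t)) * ((5*s+t)/3) = 1 by field_simp, CFC.rpow_one _ hTT0]
  rw [eK, show (2*δ/2 : ℝ) = δ by ring] at fb
  have hinner : b ^ δ * (b ^ (-δ) * (D * D * D) * b ^ (-δ)) * b ^ δ = D * D * D := by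
    calc b ^ δ * (b ^ (-δ) * (D * D * D) * b ^ (-δ)) * b ^ δ
        = (b ^ δ * b ^ (-δ)) * (D * D * D) * (b ^ (-δ) * b ^ δ) := by simp only [mul_assoc]
      _ = D * D * D := by
          rw [CFC.rpow_mul_rpow_neg δ (spp hb hbu), CFC.rpow_neg_mul_rpow δ (spp hb hbu),
            one_mul, mul_one]
  rw [hinner] at fb
  have hPeq : (5*s+t)/3 + 2*δ = s+t := by rw [hδ]; ring
  rw [hPeq] at fb
  have hDDD : D * D * D = D ^ ((3:ℕ) : ℝ) := by
    rw [CFC.rpow_natCast D 3 hD0, pow_succ, pow_two]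
  rw [hDDD] at fb
  have hstpos : (0:ℝ) < s+t := by linarith
  have eD : (D ^ ((3:ℕ):ℝ)) ^ ((1+2*δ)/(s+t)) = D ^ (3*(1+2*δ)/(s+t)) := by
    rw [CFC.rpow_rpow D _ _ (by norm_num) (spp hD0 hDu)]
    congr 1
    push_cast
    ring
  rw [eD] at fb
  have hθnum : (0:ℝ) < 3*(1+2*δ) := by linarith
  have hθ0 : (0:ℝ) ≤ (s+t)/(3*(1+2*δ)) := by positivity
  have hθ1 : (s+t)/(3*(1+2*δ)) ≤ 1 := by
    rw [div_le_one hθnum, hδ]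
    linarith
  have LH := rpow_le_rpow_of_le CFC.rpow_nonneg CFC.rpow_nonneg
    (rpow_isUnit hb hbu _) (rpow_isUnit hD0 hDu _) fb hθ0 hθ1
  have eb2 : (b ^ (1+2*δ)) ^ ((s+t)/(3*(1+2*δ))) = b ^ ((s+t)/3) := by
    rw [CFC.rpow_rpow b _ _ (by linarith : (1+2*δ:ℝ) ≠ 0) (spp hb hbu)]
    congr 1
    field_simp
  have eD2 : (D ^ (3*(1+2*δ)/(s+t))) ^ ((s+t)/(3*(1+2*δ))) = D := by
    rw [CFC.rpow_rpow D _ _ (ne_of_gt (div_pos hθnum hstpos)) (spp hD0 hDu),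
      show (3*(1+2*δ)/(s+t)) * ((s+t)/(3*(1+2*δ))) = 1 by field_simp,
      CFC.rpow_one D hD0]
  rw [eb2, eD2] at LH
  have conj := IsSelfAdjoint.conjugate_le_conjugate LH
    (IsSelfAdjoint.of_nonneg (CFC.rpow_nonneg (a := b) (y := -(t/3))))
  have eL : b ^ (-(t/3)) * b ^ ((s+t)/3) * b ^ (-(t/3)) = b ^ (-δ) := by
    rw [rpow_mul_rpow hb hbu, rpow_mul_rpow hb hbu]
    congr 1
    rw [hδ]
    ring
  have eR : b ^ (-(t/3)) * D * b ^ (-(t/3)) = a ^ (-δ) := by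
    rw [hD]
    calc b ^ (-(t/3)) * (b ^ (t/3) * a ^ (-δ) * b ^ (t/3)) * b ^ (-(t/3))
        = (b ^ (-(t/3)) * b ^ (t/3)) * a ^ (-δ) * (b ^ (t/3) * b ^ (-(t/3))) := by
          simp only [mul_assoc]
      _ = a ^ (-δ) := by
          rw [CFC.rpow_neg_mul_rpow (t/3) (spp hb hbu),
            CFC.rpow_mul_rpow_neg (t/3) (spp hb hbu), one_mul, mul_one]
  rw [eL, eR] at conj
  have fin := CStarAlgebra.rpow_neg_one_le_rpow_neg_one conj
    (spp CFC.rpow_nonneg (rpow_isUnit hb hbu _))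
  rw [CFC.rpow_rpow a _ _ (neg_ne_zero.mpr hδ0.ne') (spp ha hau),
    CFC.rpow_rpow b _ _ (neg_ne_zero.mpr hδ0.ne') (spp hb hbu),
    show -δ * (-1:ℝ) = δ by ring] at fin
  rw [← hδ]
  exact fin

end FurutaAux

variable {H : Type*} [NormedAddCommGroup H] [InnerProductSpace ℂ H] [CompleteSpace H]

theorem stmt11 (A B : H →L[ℂ] H) (hA : 0 ≤ A) (hAu : IsUnit A) (hB : 0 ≤ B) (hBu : IsUnit B) (s t : ℝ)
    (hs : 0 < s) (hst : s < t) (h1 : 3 < 5*s + t) (h2 : 3*s - t ≤ 3)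
    (h : (B ^ (s/3) * A ^ ((s-t)/3) * B ^ (2*t/3) * A ^ ((s-t)/3) * B ^ (2*t/3) * A ^ ((s-t)/3) * B ^ (s/3)) ^ (3/(5*s+t)) ≥ B) :
    CFC.log B ≥ CFC.log A ∧ (3 ≤ t - s → B ≥ A) := by
  have hδ0 : (0:ℝ) < (t-s)/3 := by linarith
  have core := FurutaAux.main_core hA hAu hB hBu hs hst h1 h2 h
  constructor
  · have hlog := FurutaAux.log_le_log CFC.rpow_nonneg CFC.rpow_nonneg
      (FurutaAux.rpow_isUnit hA hAu _) (FurutaAux.rpow_isUnit hB hBu _) core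
    rw [FurutaAux.log_rpow_smul hA hAu, FurutaAux.log_rpow_smul hB hBu] at hlog
    exact FurutaAux.le_of_smul_le_smul hδ0 hlog
  · intro hts
    have hts0 : (0:ℝ) < t - s := by linarith
    have h3 : (0:ℝ) ≤ 3/(t-s) := by positivity
    have h4 : 3/(t-s) ≤ 1 := by
      rw [div_le_one hts0]
      linarith
    have LH := FurutaAux.rpow_le_rpow_of_le CFC.rpow_nonneg CFC.rpow_nonneg
      (FurutaAux.rpow_isUnit hA hAu _) (FurutaAux.rpow_isUnit hB hBu _) core h3 h4
    rw [CFC.rpow_rpow A _ _ hδ0.ne' (FurutaAux.spp hA hAu),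
      CFC.rpow_rpow B _ _ hδ0.ne' (FurutaAux.spp hB hBu),
      show (t-s)/3 * (3/(t-s)) = 1 by field_simp, CFC.rpow_one A hA,
      CFC.rpow_one B hB] at LH
    exact LH
end
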